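/- arXiv:1706.04024 — 15 statements merged into one kernel-verified Lean document; each statement's English description precedes it below -/
import Mathlib

section
/- If a topological space X with topology τ is connected and τ* is a connected expansion of τ, then for any set A that is τ*-open but not τ-open, the simple expansion τ ∨ {A} is also connected. Hence τ is maximal connected if and only if it has no connected strict simple expansion. -/
/-- The simple expansion `τ ∨ {A}`: the topology generated by the open sets of `τ`
together with the set `A`. -/
def simpleExpansion {X : Type*} (t : TopologicalSpace X) (A : Set X) : TopologicalSpace X :=
  TopologicalSpace.generateFrom (insert A {U | t.IsOpen U})

/-- A topology is maximal connected if it is connected and no strictly finer topology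
is connected.  (In Mathlib's order on topologies, `s < t` means `s` is strictly finer.) -/
def MaximalConnected {X : Type*} (t : TopologicalSpace X) : Prop :=
  @ConnectedSpace X t ∧ ∀ s : TopologicalSpace X, s < t → ¬ @ConnectedSpace X s

/-! A connected expansion `τ*` containing `A` is finer than `τ ∨ {A}`, and connectedness
passes to coarser topologies; this gives the first claim. Any strict expansion contains a set
`A` that is not `τ`-open, so if it is connected then so is the strict simple expansion
`τ ∨ {A}`; this gives the characterisation of maximal connectedness. -/

section SimpleExpansion

variable {X : Type*}

lemma ConnectedSpace.of_le {t s : TopologicalSpace X} (h : t ≤ s) (hc : @ConnectedSpace X t) :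
    @ConnectedSpace X s :=
  @Function.Surjective.connectedSpace X X t hc s id Function.surjective_id (continuous_id_of_le h)

lemma le_simpleExpansion_iff {s t : TopologicalSpace X} {A : Set X} :
    s ≤ simpleExpansion t A ↔ s.IsOpen A ∧ s ≤ t := by
  rw [simpleExpansion, TopologicalSpace.le_generateFrom_iff_subset_isOpen, Set.insert_subset_iff]
  rfl

lemma simpleExpansion_le (t : TopologicalSpace X) (A : Set X) : simpleExpansion t A ≤ t :=
  (le_simpleExpansion_iff.mp le_rfl).2

lemma isOpen_simpleExpansion (t : TopologicalSpace X) (A : Set X) :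
    (simpleExpansion t A).IsOpen A :=
  (le_simpleExpansion_iff.mp le_rfl).1

lemma simpleExpansion_lt {t : TopologicalSpace X} {A : Set X} (hA : ¬ t.IsOpen A) :
    simpleExpansion t A < t :=
  lt_of_le_not_ge (simpleExpansion_le t A) fun h => hA (h A (isOpen_simpleExpansion t A))

lemma exists_isOpen_not_isOpen_of_lt {s t : TopologicalSpace X} (h : s < t) :
    ∃ A : Set X, s.IsOpen A ∧ ¬ t.IsOpen A := by
  by_contra! hst
  exact h.not_ge hst

lemma connectedSpace_simpleExpansion {t s : TopologicalSpace X} (hst : s ≤ t)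
    (hs : @ConnectedSpace X s) {A : Set X} (hA : s.IsOpen A) :
    @ConnectedSpace X (simpleExpansion t A) :=
  ConnectedSpace.of_le (le_simpleExpansion_iff.mpr ⟨hA, hst⟩) hs

lemma maximalConnected_iff {t : TopologicalSpace X} (ht : @ConnectedSpace X t) :
    MaximalConnected t ↔ ∀ A : Set X, ¬ t.IsOpen A → ¬ @ConnectedSpace X (simpleExpansion t A) := by
  refine ⟨fun ⟨_, hmax⟩ A hA => hmax _ (simpleExpansion_lt hA), fun h => ⟨ht, fun s hst hs => ?_⟩⟩
  obtain ⟨A, hAs, hAt⟩ := exists_isOpen_not_isOpen_of_lt hst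
  exact h A hAt (connectedSpace_simpleExpansion hst.le hs hAs)

end SimpleExpansion

theorem stmt_0 {X : Type*} (t : TopologicalSpace X) (ht : @ConnectedSpace X t) :
    (∀ ts : TopologicalSpace X, ts ≤ t → @ConnectedSpace X ts →
      ∀ A : Set X, ts.IsOpen A → ¬ t.IsOpen A →
        @ConnectedSpace X (simpleExpansion t A)) ∧
    (MaximalConnected t ↔
      ∀ A : Set X, ¬ t.IsOpen A → ¬ @ConnectedSpace X (simpleExpansion t A)) :=
  ⟨fun _ hst hs _ hA _ => connectedSpace_simpleExpansion hst hs hA, maximalConnected_iff ht⟩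
end

section
/- Let (X, τ) be a topological space and τ* = τ ∨ A an expansion of τ by a family A ⊆ P(X). A τ*-open set U is τ-open if and only if for every A ∈ A there is a τ-open set V_A with U ∩ A ⊆ V_A ⊆ U ∪ A. -/
open Set TopologicalSpace

/-
A τ*-open U is a union of basic sets W ∩ A₁ ∩ … ∩ Aₙ. Replacing each Aᵢ by its
τ-open V_{Aᵢ} keeps the point (since U ∩ Aᵢ ⊆ V_{Aᵢ}) and stays inside U, because
⋂ᵢ V_{Aᵢ} ⊆ ⋂ᵢ (U ∪ Aᵢ) = U ∪ ⋂ᵢ Aᵢ. So every point of U has a τ-open neighbourhood in U.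
-/

theorem Set.biInter_subset_of_subset_union {X : Type*} {F : Set (Set X)} {U : Set X}
    {V : Set X → Set X} (hF : ⋂₀ F ⊆ U) (hV : ∀ s ∈ F, V s ⊆ U ∪ s) :
    ⋂ s ∈ F, V s ⊆ U := by
  intro y hy
  by_contra hyU
  exact hyU <| hF fun s hs => (hV s hs (mem_iInter₂.1 hy s hs)).resolve_left hyU

theorem TopologicalSpace.isOpen_of_isOpen_generateFrom_of_sandwich {X : Type*}
    [TopologicalSpace X] {S : Set (Set X)} {U : Set X} (hU : (generateFrom S).IsOpen U)
    (h : ∀ s ∈ S, ∃ V, IsOpen V ∧ U ∩ s ⊆ V ∧ V ⊆ U ∪ s) : IsOpen U := by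
  choose! V hV_open hV_sub hV_sup using h
  refine isOpen_iff_forall_mem_open.2 fun x hx => ?_
  obtain ⟨_, ⟨F, ⟨hF_fin, hFS⟩, rfl⟩, hxF, hFU⟩ :=
    letI := generateFrom S
    (isTopologicalBasis_of_subbasis rfl).exists_subset_of_mem_open hx hU
  refine ⟨⋂ s ∈ F, V s, biInter_subset_of_subset_union hFU fun s hs => hV_sup s (hFS hs),
    hF_fin.isOpen_biInter fun s hs => hV_open s (hFS hs),
    mem_iInter₂.2 fun s hs => hV_sub s (hFS hs) ⟨hx, hxF s hs⟩⟩

/-- for `τ* = τ ∨ 𝒜` and `U` τ*-open, `U` is τ-open iff for every `A ∈ 𝒜`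
there is a τ-open `V` with `U ∩ A ⊆ V ⊆ U ∪ A`. -/
theorem stmt_1 {X : Type*} (t : TopologicalSpace X) (𝒜 : Set (Set X)) (U : Set X)
    (hU : (TopologicalSpace.generateFrom (𝒜 ∪ {V | t.IsOpen V})).IsOpen U) :
    t.IsOpen U ↔ ∀ A ∈ 𝒜, ∃ V : Set X, t.IsOpen V ∧ U ∩ A ⊆ V ∧ V ⊆ U ∪ A := by
  refine ⟨fun hU_open A _ => ⟨U, hU_open, inter_subset_left, subset_union_left⟩, fun h => ?_⟩
  refine isOpen_of_isOpen_generateFrom_of_sandwich hU ?_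
  rintro s (hs | hs)
  · exact h s hs
  · exact ⟨s, hs, inter_subset_right, subset_union_right⟩
end

section
/- Every maximal connected topological space is submaximal, i.e., every dense subset is open. -/
/-- The simple extension of a topology by a set `D`. -/
def simpleExt {X : Type*} [TopologicalSpace X] (D : Set X) : TopologicalSpace X where
  IsOpen s := ∃ U V, IsOpen U ∧ IsOpen V ∧ s = U ∪ V ∩ D
  isOpen_univ := ⟨Set.univ, ∅, isOpen_univ, isOpen_empty, by simp⟩
  isOpen_inter := by
    rintro s₁ s₂ ⟨U₁, V₁, hU₁, hV₁, rfl⟩ ⟨U₂, V₂, hU₂, hV₂, rfl⟩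
    refine ⟨U₁ ∩ U₂, (U₁ ∩ V₂) ∪ (V₁ ∩ U₂) ∪ (V₁ ∩ V₂), hU₁.inter hU₂,
      (((hU₁.inter hV₂).union (hV₁.inter hU₂)).union (hV₁.inter hV₂)), ?_⟩
    ext x; simp only [Set.mem_inter_iff, Set.mem_union]; tauto
  isOpen_sUnion := by
    intro S hS
    choose U V hU hV hE using hS
    refine ⟨⋃ s : S, U s s.2, ⋃ s : S, V s s.2,
      isOpen_iUnion (fun s => hU s s.2), isOpen_iUnion (fun s => hV s s.2), ?_⟩
    ext x
    simp only [Set.mem_sUnion, Set.iUnion_coe_set, Set.mem_union, Set.mem_inter_iff,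
      Set.mem_iUnion]
    constructor
    · rintro ⟨s, hs, hx⟩
      rw [hE s hs] at hx
      rcases hx with hx | ⟨hx, hxD⟩
      · exact Or.inl ⟨s, hs, hx⟩
      · exact Or.inr ⟨⟨s, hs, hx⟩, hxD⟩
    · rintro (⟨s, hs, hx⟩ | ⟨⟨s, hs, hx⟩, hxD⟩)
      · exact ⟨s, hs, by rw [hE s hs]; exact Or.inl hx⟩
      · exact ⟨s, hs, by rw [hE s hs]; exact Or.inr ⟨hx, hxD⟩⟩

/-- every maximal connected space is submaximal, i.e. every dense subset
is open. -/
theorem stmt_3 {X : Type*} [t : TopologicalSpace X] (h : MaximalConnected t) :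
    ∀ D : Set X, Dense D → IsOpen D := by
  intro D hD
  by_contra hDo
  haveI hc : ConnectedSpace X := h.1
  have hle : simpleExt D ≤ t := fun s hs => ⟨s, ∅, hs, isOpen_empty, by simp⟩
  have hDopen : @IsOpen X (simpleExt D) D :=
    ⟨∅, Set.univ, isOpen_empty, isOpen_univ, by simp⟩
  have hlt : simpleExt D < t :=
    lt_of_le_of_ne hle (fun hEq => hDo (hEq ▸ hDopen))
  have hpre : @IsPreconnected X (simpleExt D) Set.univ := by
    rintro u v ⟨U₁, V₁, hU₁, hV₁, rfl⟩ ⟨U₂, V₂, hU₂, hV₂, rfl⟩ hcov hne₁ hne₂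
    have hcov' : Set.univ ⊆ (U₁ ∪ V₁) ∪ (U₂ ∪ V₂) := by
      intro x hx
      rcases hcov hx with (hx | hx) | (hx | hx)
      exacts [Or.inl (Or.inl hx), Or.inl (Or.inr hx.1),
        Or.inr (Or.inl hx), Or.inr (Or.inr hx.1)]
    have hne₁' : (Set.univ ∩ (U₁ ∪ V₁)).Nonempty := by
      obtain ⟨x, -, hx⟩ := hne₁
      exact ⟨x, trivial, hx.imp id fun h => h.1⟩
    have hne₂' : (Set.univ ∩ (U₂ ∪ V₂)).Nonempty := by
      obtain ⟨x, -, hx⟩ := hne₂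
      exact ⟨x, trivial, hx.imp id fun h => h.1⟩
    obtain ⟨x, -, hx₁, hx₂⟩ := isPreconnected_univ (U₁ ∪ V₁) (U₂ ∪ V₂)
      (hU₁.union hV₁) (hU₂.union hV₂) hcov' hne₁' hne₂'
    obtain ⟨y, ⟨hy₁, hy₂⟩, hyD⟩ := hD.inter_open_nonempty _
      ((hU₁.union hV₁).inter (hU₂.union hV₂)) ⟨x, hx₁, hx₂⟩
    refine ⟨y, trivial, ?_, ?_⟩
    · rcases hy₁ with hy | hy
      exacts [Or.inl hy, Or.inr ⟨hy, hyD⟩]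
    · rcases hy₂ with hy | hy
      exacts [Or.inl hy, Or.inr ⟨hy, hyD⟩]
  exact h.2 (simpleExt D) hlt
    (@ConnectedSpace.mk X (simpleExt D) (@PreconnectedSpace.mk X (simpleExt D) hpre) hc.toNonempty)
end

section
/- The properties of being submaximal, nodec, and T_{1/2} are each hereditary: every subspace of a submaximal (resp. nodec, T_{1/2}) space is submaximal (resp. nodec, T_{1/2}). -/
open Set Topology


/-- A space is submaximal if every dense subset is open. -/
def Submaximal (Y : Type*) [TopologicalSpace Y] : Prop :=
  ∀ D : Set Y, Dense D → IsOpen D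

/-- A space is nodec if every nowhere dense subset is closed. -/
def Nodec (Y : Type*) [TopologicalSpace Y] : Prop :=
  ∀ A : Set Y, IsNowhereDense A → IsClosed A

/-- A space is `T_{1/2}` if every singleton is open or closed. -/
def THalf (Y : Type*) [TopologicalSpace Y] : Prop :=
  ∀ y : Y, IsOpen ({y} : Set Y) ∨ IsClosed ({y} : Set Y)

/-- submaximality, nodec-ness and `T_{1/2}` are hereditary. -/
theorem stmt_5 {X : Type*} [TopologicalSpace X] (Y : Set X) :
    (Submaximal X → Submaximal Y) ∧ (Nodec X → Nodec Y) ∧ (THalf X → THalf Y) := by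
  refine ⟨?_, ?_, ?_⟩
  · intro hX D hD
    set D' : Set X := Subtype.val '' D with hD'def
    have hYcl : Y ⊆ closure D' := Subtype.dense_iff.mp hD
    have hE : Dense (D' ∪ (closure D')ᶜ) := by
      intro x
      rcases Classical.em (x ∈ closure D') with h | h
      · exact closure_mono subset_union_left h
      · exact subset_closure (Or.inr h)
    have hEopen : IsOpen (D' ∪ (closure D')ᶜ) := hX _ hE
    have : Subtype.val ⁻¹' (D' ∪ (closure D')ᶜ) = D := by
      ext ⟨x, hx⟩
      simp only [mem_preimage, mem_union, mem_compl_iff]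
      constructor
      · rintro (h | h)
        · rcases h with ⟨z, hz, hzx⟩
          obtain rfl : z = ⟨x, hx⟩ := Subtype.ext hzx; exact hz
        · exact absurd (hYcl hx) h
      · intro h; exact Or.inl ⟨⟨x, hx⟩, h, rfl⟩
    rw [← this]
    exact hEopen.preimage continuous_subtype_val
  · intro hX A hA
    set A' : Set X := Subtype.val '' A with hA'def
    have hclA : closure A = Subtype.val ⁻¹' closure A' :=
      IsEmbedding.subtypeVal.closure_eq_preimage_closure_image A
    have hND : IsNowhereDense A' := by
      rw [IsNowhereDense, eq_empty_iff_forall_notMem]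
      intro x hx
      have hxY : x ∈ closure Y := by
        have : closure A' ⊆ closure Y :=
          closure_mono (by rintro z ⟨w, _, rfl⟩; exact w.2)
        exact this (interior_subset hx)
      have hmem : (interior (closure A') ∩ Y).Nonempty := by
        have := mem_closure_iff.mp hxY _ isOpen_interior hx
        exact this
      rcases hmem with ⟨z, hzU, hzY⟩
      have hopen : IsOpen (Subtype.val ⁻¹' interior (closure A') : Set Y) :=
        isOpen_interior.preimage continuous_subtype_val
      have hsub : (Subtype.val ⁻¹' interior (closure A') : Set Y) ⊆ closure A := by
        rw [hclA]; exact fun y hy => Set.mem_preimage.mpr (interior_subset (Set.mem_preimage.mp hy))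
      have : (⟨z, hzY⟩ : Y) ∈ interior (closure A) :=
        mem_interior.mpr ⟨_, hsub, hopen, hzU⟩
      rw [show interior (closure A) = ∅ from hA] at this
      exact this
    have hclosed : IsClosed A' := hX _ hND
    have : A = Subtype.val ⁻¹' A' := by
      ext ⟨x, hx⟩
      simp only [mem_preimage]
      constructor
      · intro h; exact ⟨_, h, rfl⟩
      · rintro ⟨z, hz, hzx⟩; obtain rfl : z = ⟨x, hx⟩ := Subtype.ext hzx; exact hz
    rw [this]
    exact hclosed.preimage continuous_subtype_val
  · intro hX y
    have : Subtype.val ⁻¹' ({(y : X)} : Set X) = {y} := by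
      ext z; simp [Subtype.ext_iff]
    rcases hX (y : X) with h | h
    · left; rw [← this]; exact h.preimage continuous_subtype_val
    · right; rw [← this]; exact h.preimage continuous_subtype_val
end

section
/- Let (Y, σ) be a subspace of a connected space (X, τ). For every connected expansion σ* ≥ σ there exists a connected expansion τ* ≥ τ such that τ*|Y = σ*. One such expansion is τ* = τ ∨ {S ∪ (X \ cl(Y)) : S ∈ σ*}. -/
/-!
Let `τ*` be generated by `τ` and the sets `S ∪ (X \ cl Y)` with `S ∈ σ*`. Every `τ*`-open set `U`
satisfies `U \ Y ⊆ int U` and `U ⊆ int (U ∪ cl Y)` (interiors in `τ`): both hold for the generators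
and survive finite intersections and arbitrary unions. The first property makes every `τ*`-open set
missing `Y` already `τ`-open, so `Y` has the same closure in both topologies. A generator meets `Y`
in `S` and `σ*` refines `τ|Y`, so `τ*|Y = σ*`.

For connectedness take a `τ*`-clopen set; as `Y` is connected we may assume it misses `Y`. Then it
is `τ`-open, hence misses `cl Y`, so its complement is a `τ*`-open set containing `cl Y`, which is
`τ`-open by the second property. The set is therefore `τ`-clopen, and `τ` is connected.
-/

open Set Topology

section

variable {X : Type*} [t : TopologicalSpace X] {Y : Set X}

abbrev extendFromSubspace (Y : Set X) (σs : TopologicalSpace Y) : TopologicalSpace X :=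
  TopologicalSpace.generateFrom
    ({B : Set X | ∃ S : Set Y, σs.IsOpen S ∧
        B = (fun y : Y => (y : X)) '' S ∪ (closure Y)ᶜ} ∪ {U | t.IsOpen U})

variable {σs : TopologicalSpace Y}

theorem extendFromSubspace_le : extendFromSubspace Y σs ≤ t :=
  fun U hU => .basic U (Or.inr hU)

theorem preimage_coe_image_union_compl_closure (S : Set Y) :
    ((↑) : Y → X) ⁻¹' ((↑) '' S ∪ (closure Y)ᶜ) = S := by
  ext y
  simp [subset_closure y.2]

theorem induced_extendFromSubspace
    (hexp : σs ≤ TopologicalSpace.induced ((↑) : Y → X) t) :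
    TopologicalSpace.induced ((↑) : Y → X) (extendFromSubspace Y σs) = σs := by
  rw [extendFromSubspace, induced_generateFrom_eq]
  refine le_antisymm (fun S hS => .basic _
    ⟨_, Or.inl ⟨S, hS, rfl⟩, preimage_coe_image_union_compl_closure S⟩) ?_
  rw [TopologicalSpace.le_generateFrom_iff_subset_isOpen]
  rintro _ ⟨B, ⟨S, hS, rfl⟩ | hB, rfl⟩
  · rwa [preimage_coe_image_union_compl_closure]
  · exact hexp _ ⟨B, hB, rfl⟩

theorem diff_subset_interior_of_isOpen_extendFromSubspace {U : Set X}
    (hU : IsOpen[extendFromSubspace Y σs] U) : U \ Y ⊆ interior U := by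
  induction hU with
  | basic B hB =>
    rcases hB with ⟨S, -, rfl⟩ | hB
    · calc _ ⊆ (closure Y)ᶜ := by
            rintro x ⟨⟨y, -, rfl⟩ | hx, hxY⟩
            exacts [absurd y.2 hxY, hx]
        _ ⊆ _ := interior_maximal subset_union_right isClosed_closure.isOpen_compl
    · exact sdiff_subset.trans (IsOpen.interior_eq hB).ge
  | univ => simp
  | inter U V _ _ hU hV =>
    rw [interior_inter]
    exact fun x hx => ⟨hU ⟨hx.1.1, hx.2⟩, hV ⟨hx.1.2, hx.2⟩⟩
  | sUnion 𝒮 _ ih =>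
    rintro x ⟨⟨U, hU𝒮, hxU⟩, hxY⟩
    exact interior_mono (subset_sUnion_of_mem hU𝒮) (ih U hU𝒮 ⟨hxU, hxY⟩)

theorem subset_interior_union_closure_of_isOpen_extendFromSubspace {U : Set X}
    (hU : IsOpen[extendFromSubspace Y σs] U) : U ⊆ interior (U ∪ closure Y) := by
  induction hU with
  | basic B hB =>
    rcases hB with ⟨S, -, rfl⟩ | hB
    · simp [union_assoc]
    · exact (IsOpen.subset_interior_iff hB).mpr subset_union_left
  | univ => simp
  | inter U V _ _ hU hV =>
    rw [inter_union_distrib_right, interior_inter]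
    exact inter_subset_inter hU hV
  | sUnion 𝒮 _ ih =>
    rintro x ⟨U, hU𝒮, hxU⟩
    exact interior_mono (union_subset_union_left _ (subset_sUnion_of_mem hU𝒮)) (ih U hU𝒮 hxU)

theorem isOpen_of_isOpen_extendFromSubspace_of_disjoint {U : Set X}
    (hU : IsOpen[extendFromSubspace Y σs] U) (hUY : Disjoint U Y) : IsOpen U := by
  rw [← interior_eq_iff_isOpen]
  refine interior_subset.antisymm ?_
  simpa [hUY.sdiff_eq_left] using diff_subset_interior_of_isOpen_extendFromSubspace hU

theorem isOpen_of_isOpen_extendFromSubspace_of_closure_subset {U : Set X}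
    (hU : IsOpen[extendFromSubspace Y σs] U) (hYU : closure Y ⊆ U) : IsOpen U := by
  rw [← interior_eq_iff_isOpen]
  refine interior_subset.antisymm ?_
  simpa [union_eq_left.mpr hYU] using subset_interior_union_closure_of_isOpen_extendFromSubspace hU

theorem closure_extendFromSubspace : closure[extendFromSubspace Y σs] Y = closure Y := by
  refine (@closure_minimal X (extendFromSubspace Y σs) _ _ subset_closure
    ((@isClosed_closure X t Y).mono extendFromSubspace_le)).antisymm ?_
  have hYc : Disjoint (closure[extendFromSubspace Y σs] Y)ᶜ Y :=
    disjoint_compl_left.mono_right (@subset_closure X (extendFromSubspace Y σs) Y)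
  have hopen := isOpen_of_isOpen_extendFromSubspace_of_disjoint
    (@isClosed_closure X (extendFromSubspace Y σs) Y).isOpen_compl hYc
  simpa using subset_compl_iff_disjoint_left.mpr (hYc.closure_right hopen)

theorem isClopen_of_isClopen_extendFromSubspace_of_disjoint {U : Set X}
    (hU : @IsClopen X (extendFromSubspace Y σs) U) (hUY : Disjoint U Y) : IsClopen U := by
  have hopen : IsOpen U := isOpen_of_isOpen_extendFromSubspace_of_disjoint hU.2 hUY
  refine ⟨isOpen_compl_iff.mp ?_, hopen⟩
  exact isOpen_of_isOpen_extendFromSubspace_of_closure_subset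
    (@IsClosed.isOpen_compl X (extendFromSubspace Y σs) U hU.1)
    (subset_compl_iff_disjoint_left.mpr (hUY.closure_right hopen))

theorem connectedSpace_extendFromSubspace [ConnectedSpace X]
    (hexp : σs ≤ TopologicalSpace.induced ((↑) : Y → X) t) [@ConnectedSpace Y σs] :
    @ConnectedSpace X (extendFromSubspace Y σs) := by
  have hY : @IsPreconnected X (extendFromSubspace Y σs) Y := by
    rw [@isPreconnected_iff_preconnectedSpace X (extendFromSubspace Y σs)]
    change @PreconnectedSpace Y (.induced (↑) (extendFromSubspace Y σs))
    rw [induced_extendFromSubspace hexp]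
    infer_instance
  refine (@connectedSpace_iff_clopen X (extendFromSubspace Y σs)).mpr
    ⟨inferInstance, fun U hU => ?_⟩
  by_cases hYU : Disjoint Y U
  · exact isClopen_iff.mp (isClopen_of_isClopen_extendFromSubspace_of_disjoint hU hYU.symm)
  · have hUc := isClopen_of_isClopen_extendFromSubspace_of_disjoint
      (@IsClopen.compl X (extendFromSubspace Y σs) U hU)
      (disjoint_compl_left.mono_right (@IsPreconnected.subset_isClopen X
        (extendFromSubspace Y σs) _ _ hY hU (not_disjoint_iff_nonempty_inter.mp hYU)))
    simpa [or_comm] using isClopen_iff.mp hUc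

end

/-- for a connected space `(X, τ)`, a subspace `Y`, and a connected
expansion `σ*` of the subspace topology `σ = τ|Y`, the topology
`τ* = τ ∨ {S ∪ (X \ cl Y) : S ∈ σ*}` is a connected expansion of `τ` with `τ*|Y = σ*`. -/
theorem stmt_6 {X : Type*} [t : TopologicalSpace X] (hX : ConnectedSpace X) (Y : Set X)
    (σs : TopologicalSpace Y)
    (hexp : σs ≤ TopologicalSpace.induced (fun y : Y => (y : X)) t)
    (hconn : @ConnectedSpace Y σs) :
    ∃ ts : TopologicalSpace X, ts ≤ t ∧ @ConnectedSpace X ts ∧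
      TopologicalSpace.induced (fun y : Y => (y : X)) ts = σs ∧
      ts = TopologicalSpace.generateFrom
        ({B : Set X | ∃ S : Set Y, σs.IsOpen S ∧
            B = (fun y : Y => (y : X)) '' S ∪ (closure Y)ᶜ} ∪ {U | t.IsOpen U}) := by
  refine ⟨extendFromSubspace Y σs, extendFromSubspace_le, connectedSpace_extendFromSubspace hexp,
    induced_extendFromSubspace hexp, ?_⟩
  -- the bound topology `ts` is the innermost instance, so this `closure Y` is taken in `ts`
  rw [closure_extendFromSubspace]
end

section
/- Every connected subspace of a maximal connected space is maximal connected. -/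
open Set Filter Topology

namespace TopologicalSpace

variable {X : Type*} [t : TopologicalSpace X] {Y : Set X}

abbrev extendByClosureCompl (s : TopologicalSpace Y) : TopologicalSpace X :=
  generateFrom ((fun A => (↑) '' A ∪ (closure Y)ᶜ) '' {A | IsOpen[s] A})

/-- Adding `(closure Y)ᶜ` rather than `Yᶜ` leaves the neighbourhoods of the points of
`closure Y \ Y` unchanged (`nhds_expandAlong_of_notMem`); this keeps the expansion connected. -/
abbrev expandAlong (s : TopologicalSpace Y) : TopologicalSpace X :=
  t ⊓ extendByClosureCompl s

theorem preimage_coe_image_union_closure_compl (A : Set Y) :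
    ((↑) : Y → X) ⁻¹' ((↑) '' A ∪ (closure Y)ᶜ) = A := by
  rw [preimage_union, preimage_image_eq _ Subtype.val_injective, union_eq_left]
  exact fun y hy => absurd (subset_closure y.2) hy

theorem induced_extendByClosureCompl (s : TopologicalSpace Y) :
    induced (↑) (extendByClosureCompl s) = s := by
  rw [extendByClosureCompl, induced_generateFrom_eq, image_image]
  simp only [preimage_coe_image_union_closure_compl, image_id']
  exact generateFrom_setOfPred_isOpen s

theorem induced_expandAlong {s : TopologicalSpace Y} (hs : s ≤ induced (↑) t) :
    induced (↑) (expandAlong s) = s := by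
  rw [expandAlong, induced_inf, induced_extendByClosureCompl, inf_eq_right.2 hs]

theorem principal_le_nhds_extendByClosureCompl (s : TopologicalSpace Y) (x : X) :
    𝓟 (closure Y)ᶜ ≤ @nhds X (extendByClosureCompl s) x := by
  rw [extendByClosureCompl, nhds_generateFrom]
  refine le_iInf₂ ?_
  rintro - ⟨-, ⟨A, -, rfl⟩⟩
  exact le_principal_iff.2 subset_union_right

theorem nhds_le_nhds_extendByClosureCompl (s : TopologicalSpace Y) {x : X} (hx : x ∉ Y) :
    𝓝 x ≤ @nhds X (extendByClosureCompl s) x := by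
  rw [extendByClosureCompl, nhds_generateFrom]
  refine le_iInf₂ ?_
  rintro - ⟨hxG, ⟨A, -, rfl⟩⟩
  have hxD : x ∈ (closure Y)ᶜ := hxG.resolve_left fun ⟨y, _, hyx⟩ => hx (hyx ▸ y.2)
  exact le_principal_iff.2 (mem_of_superset (isClosed_closure.isOpen_compl.mem_nhds hxD)
    subset_union_right)

theorem nhds_expandAlong_of_notMem (s : TopologicalSpace Y) {x : X} (hx : x ∉ Y) :
    @nhds X (expandAlong s) x = 𝓝 x := by
  rw [expandAlong, nhds_inf, inf_eq_left.2 (nhds_le_nhds_extendByClosureCompl s hx)]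

theorem closure_subset_closure_expandAlong (s : TopologicalSpace Y) {U : Set X}
    (hU : U ⊆ (closure Y)ᶜ) : closure U ⊆ closure[expandAlong s] U := by
  intro x hx
  rw [mem_closure_iff_clusterPt] at hx
  rw [@mem_closure_iff_clusterPt X (expandAlong s)]
  refine NeBot.mono (show NeBot (𝓝 x ⊓ 𝓟 U) from hx) ?_
  calc 𝓝 x ⊓ 𝓟 U ≤ 𝓝 x ⊓ 𝓟 (closure Y)ᶜ ⊓ 𝓟 U := by
        rw [inf_assoc, inf_principal, inter_eq_right.2 hU]
    _ ≤ @nhds X (expandAlong s) x ⊓ 𝓟 U := by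
        rw [expandAlong, nhds_inf]
        exact inf_le_inf_right _ (inf_le_inf_left _ (principal_le_nhds_extendByClosureCompl s x))

theorem isClopen_of_isClopen_expandAlong {s : TopologicalSpace Y} {U : Set X}
    (hU : @IsClopen X (expandAlong s) U) (hUY : Disjoint Y U) : IsClopen U := by
  have hUo : IsOpen U := isOpen_iff_mem_nhds.2 fun x hx =>
    nhds_expandAlong_of_notMem s (hUY.notMem_of_mem_right hx) ▸
      @IsOpen.mem_nhds X (expandAlong s) _ _ hU.2 hx
  have hUD : U ⊆ (closure Y)ᶜ := (hUY.symm.closure_right hUo).subset_compl_right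
  exact ⟨closure_subset_iff_isClosed.1 ((closure_subset_closure_expandAlong s hUD).trans
    (@IsClosed.closure_subset X (expandAlong s) _ hU.1)), hUo⟩

theorem connectedSpace_expandAlong [ConnectedSpace X] {s : TopologicalSpace Y}
    (hs : s ≤ induced (↑) t) [hc : @ConnectedSpace Y s] :
    @ConnectedSpace X (expandAlong s) := by
  have hYpre : @IsPreconnected X (expandAlong s) Y := by
    have := @isPreconnected_range _ _ s (expandAlong s) hc.toPreconnectedSpace _
      (continuous_iff_le_induced.2 (induced_expandAlong hs).ge)
    rwa [Subtype.range_coe] at this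
  have hYne : Y.Nonempty := nonempty_subtype.1 (@ConnectedSpace.toNonempty _ s hc)
  have hempty : ∀ U, @IsClopen X (expandAlong s) U → Disjoint Y U → U = ∅ := fun U hU hUY =>
    compl_univ_iff.1 <| (isClopen_of_isClopen_expandAlong hU hUY).compl.eq_univ
      (hYne.mono hUY.subset_compl_right)
  refine @ConnectedSpace.mk X (expandAlong s)
    ((@preconnectedSpace_iff_clopen X (expandAlong s)).2 fun U hU => ?_) inferInstance
  refine (@disjoint_or_subset_of_isClopen X (expandAlong s) _ _ hYpre hU).imp (hempty U hU)
    fun hYU => ?_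
  exact compl_empty_iff.1 (hempty Uᶜ (@IsClopen.compl X (expandAlong s) _ hU)
    (disjoint_compl_right_iff_subset.2 hYU))

end TopologicalSpace

/-- every connected subspace of a maximal connected space is maximal
connected. -/
theorem stmt_7 {X : Type*} [t : TopologicalSpace X] (h : MaximalConnected t)
    (Y : Set X) (hY : ConnectedSpace Y) :
    MaximalConnected (TopologicalSpace.induced (fun y : Y => (y : X)) t) := by
  refine ⟨hY, fun s hs hconn => ?_⟩
  have : ConnectedSpace X := h.1
  refine h.2 (TopologicalSpace.expandAlong s) (lt_of_le_of_ne inf_le_left fun heq => hs.ne ?_)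
    (TopologicalSpace.connectedSpace_expandAlong hs.le)
  rw [← TopologicalSpace.induced_expandAlong hs.le, heq]
end

section
/- Every connected subspace of an essentially connected space is essentially connected. -/
/-!
A connected expansion `s` of the subspace topology of `Y` extends to a topology on `X` that is
finer than `t` and induces `s` on `Y`: declare `U` open when it traces an `s`-open set on `Y`, is
a `t`-neighbourhood of its points outside `Y`, and becomes one of each of its points after adding
`closure Y`. In this topology `Y` is preconnected, so a clopen `U` contains `Y` or misses it, say
`Y ⊆ U`. Then `Uᶜ` avoids `Y`, hence is `t`-open, so `closure Y ⊆ U` and `U` is `t`-open as well.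
Thus the expansion of `X` is connected, and essential connectedness of `X` transfers connected
sets back to `Y` along the embedding.
-/

open Set TopologicalSpace Topology Filter

/-- A topology is essentially connected if it is connected and every connected expansion
(finer topology) has the same connected subsets. -/
def EssentiallyConnected {X : Type*} (t : TopologicalSpace X) : Prop :=
  @ConnectedSpace X t ∧ ∀ s : TopologicalSpace X, s ≤ t → @ConnectedSpace X s →
    ∀ C : Set X, @IsConnected X s C ↔ @IsConnected X t C

theorem isConnected_image_iff_of_induced_eq {α β : Type*} {tα : TopologicalSpace α}
    {tβ : TopologicalSpace β} {f : α → β} (hf : induced f tβ = tα) {s : Set α} :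
    @IsConnected β tβ (f '' s) ↔ @IsConnected α tα s :=
  and_congr image_nonempty <|
    @IsInducing.isPreconnected_image α β tα tβ s f (@IsInducing.mk α β tα tβ f hf.symm)

section SubspaceExpansion

variable {X : Type*} [t : TopologicalSpace X] (Y : Set X) (s : TopologicalSpace Y)

abbrev subspaceExpansion : TopologicalSpace X where
  IsOpen U := IsOpen[s] ((↑) ⁻¹' U : Set Y) ∧ (∀ x ∈ U, x ∉ Y → U ∈ 𝓝 x) ∧
    ∀ x ∈ U, U ∪ closure Y ∈ 𝓝 x
  isOpen_univ := ⟨isOpen_univ, fun _ _ _ ↦ univ_mem, fun _ _ ↦ mem_of_superset univ_mem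
    subset_union_left⟩
  isOpen_inter U V hU hV := by
    refine ⟨hU.1.inter hV.1, fun x hx hxY ↦ inter_mem (hU.2.1 x hx.1 hxY) (hV.2.1 x hx.2 hxY),
      fun x hx ↦ ?_⟩
    rw [inter_union_distrib_right]
    exact inter_mem (hU.2.2 x hx.1) (hV.2.2 x hx.2)
  isOpen_sUnion S hS := by
    refine ⟨?_, ?_, ?_⟩
    · rw [preimage_sUnion]
      exact isOpen_biUnion fun U hU ↦ (hS U hU).1
    · rintro x ⟨U, hUS, hxU⟩ hxY
      exact mem_of_superset ((hS U hUS).2.1 x hxU hxY) (subset_sUnion_of_mem hUS)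
    · rintro x ⟨U, hUS, hxU⟩
      exact mem_of_superset ((hS U hUS).2.2 x hxU)
        (union_subset_union_left _ (subset_sUnion_of_mem hUS))

theorem induced_subspaceExpansion : induced (↑) (subspaceExpansion Y s) = s := by
  refine le_antisymm (fun V hV ↦ ?_) fun V ⟨U, hU, hUV⟩ ↦ hUV ▸ hU.1
  have hWopen : IsOpen (closure Y)ᶜ := isClosed_closure.isOpen_compl
  have hpre : ((↑) : Y → X) ⁻¹' ((↑) '' V ∪ (closure Y)ᶜ) = V := by
    ext y
    simp [subset_closure y.2]
  refine ⟨(↑) '' V ∪ (closure Y)ᶜ, ⟨by rwa [hpre], fun x hx hxY ↦ ?_, fun x _ ↦ ?_⟩, hpre⟩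
  · have hxW : x ∈ (closure Y)ᶜ := hx.resolve_left fun ⟨y, _, hy⟩ ↦ hxY (hy ▸ y.2)
    exact mem_of_superset (hWopen.mem_nhds hxW) subset_union_right
  · rw [union_assoc, compl_union_self, union_univ]
    exact univ_mem

theorem subspaceExpansion_le (hs : s ≤ induced (↑) t) :
    subspaceExpansion Y s ≤ t := fun U hU ↦
  ⟨hs _ ⟨U, hU, rfl⟩, fun _ hx _ ↦ hU.mem_nhds hx,
    fun _ hx ↦ mem_of_superset (hU.mem_nhds hx) subset_union_left⟩

theorem isClopen_of_subspaceExpansion {U : Set X}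
    (hU : IsOpen[subspaceExpansion Y s] U) (hUc : IsOpen[subspaceExpansion Y s] Uᶜ)
    (hYU : Y ⊆ U) : IsClopen U := by
  have hU_closed : IsClosed U := isOpen_compl_iff.1 <|
    isOpen_iff_mem_nhds.2 fun x hx ↦ hUc.2.1 x hx fun hxY ↦ hx (hYU hxY)
  have hclY : closure Y ⊆ U := closure_minimal hYU hU_closed
  refine ⟨hU_closed, isOpen_iff_mem_nhds.2 fun x hx ↦ ?_⟩
  simpa [union_eq_self_of_subset_right hclY] using hU.2.2 x hx

theorem preconnectedSpace_subspaceExpansion [PreconnectedSpace X] (hs : @PreconnectedSpace Y s) :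
    @PreconnectedSpace X (subspaceExpansion Y s) := by
  have hclopen (U : Set X) (hU : IsOpen[subspaceExpansion Y s] U)
      (hUc : IsOpen[subspaceExpansion Y s] Uᶜ) (hYU : Y ⊆ U) : U = ∅ ∨ U = univ :=
    isClopen_iff.1 <| isClopen_of_subspaceExpansion Y s hU hUc hYU
  have hcont : Continuous[s, subspaceExpansion Y s] ((↑) : Y → X) :=
    continuous_iff_le_induced.2 (induced_subspaceExpansion Y s).ge
  let := subspaceExpansion Y s
  have hY : IsPreconnected Y := Subtype.range_val (s := Y) ▸ isPreconnected_range hcont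
  refine preconnectedSpace_iff_clopen.2 fun U hU ↦ ?_
  rcases (Y ∩ U).eq_empty_or_nonempty with hYU | hYU
  · have := hclopen Uᶜ hU.compl.isOpen ((compl_compl U).symm ▸ hU.isOpen)
      fun y hy hyU ↦ hYU.subset ⟨hy, hyU⟩
    rwa [compl_empty_iff, compl_univ_iff, or_comm] at this
  · exact hclopen U hU.isOpen hU.compl.isOpen (hY.subset_isClopen hU hYU)

end SubspaceExpansion

/-- every connected subspace of an essentially connected space is
essentially connected. -/
theorem stmt_8 {X : Type*} [t : TopologicalSpace X] (h : EssentiallyConnected t)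
    (Y : Set X) (hY : ConnectedSpace Y) :
    EssentiallyConnected (TopologicalSpace.induced (fun y : Y => (y : X)) t) := by
  have := h.1
  refine ⟨hY, fun s hs hs_conn C ↦ ?_⟩
  have h_conn : @ConnectedSpace X (subspaceExpansion Y s) :=
    @ConnectedSpace.mk X (subspaceExpansion Y s)
      (preconnectedSpace_subspaceExpansion Y s hs_conn.toPreconnectedSpace) inferInstance
  have hC := h.2 _ (subspaceExpansion_le Y s hs) h_conn ((↑) '' C)
  rwa [isConnected_image_iff_of_induced_eq (induced_subspaceExpansion Y s),
    isConnected_image_iff_of_induced_eq rfl] at hC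
end

section
/- Every connected subspace of a space that is both strongly connected and essentially connected is itself both strongly connected and essentially connected. -/
/-- A topology is strongly connected if it admits a maximal connected expansion. -/
def StronglyConnected {X : Type*} (t : TopologicalSpace X) : Prop :=
  ∃ s : TopologicalSpace X, s ≤ t ∧ MaximalConnected s

open Filter Set Topology TopologicalSpace

theorem Topology.IsInducing.isConnected_image {α β : Type*} [TopologicalSpace α]
    [TopologicalSpace β] {f : α → β} (hf : IsInducing f) {s : Set α} :
    IsConnected (f '' s) ↔ IsConnected s := by
  simp only [IsConnected, image_nonempty, hf.isPreconnected_image]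

theorem isConnected_image_val_iff {X : Type*} (r : TopologicalSpace X) {Y : Set X} (C : Set Y) :
    @IsConnected X r ((↑) '' C) ↔ @IsConnected Y (r.induced (↑)) C := by
  let := r
  exact IsInducing.subtypeVal.isConnected_image

section Extension

variable {X : Type*} (τ : TopologicalSpace X) {Y : Set X} (u : TopologicalSpace Y)

abbrev extendTopology : TopologicalSpace X :=
  τ ⊓ generateFrom ((fun U : Set Y => (↑) '' U ∪ (closure[τ] Y)ᶜ) '' {U | IsOpen[u] U})

theorem extendTopology_le : extendTopology τ u ≤ τ := inf_le_left

theorem induced_extendTopology (hu : u ≤ τ.induced (↑)) :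
    (extendTopology τ u).induced (↑) = u := by
  have hpre (U : Set Y) : ((↑) ⁻¹' ((↑) '' U ∪ (closure[τ] Y)ᶜ) : Set Y) = U := by
    rw [preimage_union, Subtype.val_injective.preimage_image, union_eq_left]
    exact fun y hy => absurd (subset_closure y.2) hy
  rw [extendTopology, induced_inf, induced_generateFrom_eq, image_image]
  simp only [hpre, image_id', generateFrom_setOfPred_isOpen]
  exact inf_eq_right.2 hu

variable {τ u}

theorem nhds_inf_principal_le_nhds_extendTopology (x : X) :
    @nhds X τ x ⊓ 𝓟 (closure[τ] Y)ᶜ ≤ @nhds X (extendTopology τ u) x := by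
  rw [extendTopology, nhds_inf, nhds_generateFrom]
  refine inf_le_inf_left _ (le_iInf₂ ?_)
  rintro _ ⟨-, U, -, rfl⟩
  exact principal_mono.2 subset_union_right

theorem nhds_extendTopology_of_notMem {x : X} (hx : x ∉ Y) :
    @nhds X (extendTopology τ u) x = @nhds X τ x := by
  refine le_antisymm (nhds_mono (extendTopology_le τ u)) ?_
  rw [extendTopology, nhds_inf, nhds_generateFrom]
  refine le_inf le_rfl (le_iInf₂ ?_)
  rintro _ ⟨hxs, U, -, rfl⟩
  have hxK : x ∈ (closure[τ] Y)ᶜ := hxs.resolve_left fun ⟨y, _, hy⟩ => hx (hy ▸ y.2)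
  exact le_principal_iff.2 <|
    mem_of_superset ((@isClosed_closure X τ Y).isOpen_compl.mem_nhds hxK) subset_union_right

theorem isOpen_of_isOpen_extendTopology_of_closure_subset {S : Set X}
    (hS : IsOpen[extendTopology τ u] S) (hYS : closure[τ] Y ⊆ S) : IsOpen[τ] S := by
  refine @isOpen_iff_mem_nhds X τ S |>.2 fun x hx => ?_
  have hSx := mem_inf_principal.1 <|
    nhds_inf_principal_le_nhds_extendTopology x (@hS.mem_nhds X (extendTopology τ u) _ _ hx)
  refine mem_of_superset hSx fun z hz => ?_
  by_cases hzY : z ∈ closure[τ] Y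
  · exact hYS hzY
  · exact hz hzY

theorem isOpen_of_isOpen_extendTopology_of_subset_compl {S : Set X}
    (hS : IsOpen[extendTopology τ u] S) (hSY : S ⊆ Yᶜ) : IsOpen[τ] S := by
  refine @isOpen_iff_mem_nhds X τ S |>.2 fun x hx => ?_
  rw [← nhds_extendTopology_of_notMem (u := u) (hSY hx)]
  exact @hS.mem_nhds X (extendTopology τ u) _ _ hx

theorem isClopen_of_isClopen_extendTopology_of_subset {S : Set X}
    (hS : @IsClopen X (extendTopology τ u) S) (hYS : Y ⊆ S) : @IsClopen X τ S := by
  have hSc : IsOpen[τ] Sᶜ :=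
    isOpen_of_isOpen_extendTopology_of_subset_compl hS.1.isOpen_compl (compl_subset_compl.2 hYS)
  have hclS : IsClosed[τ] S := ⟨hSc⟩
  exact ⟨hclS, isOpen_of_isOpen_extendTopology_of_closure_subset hS.2
    (@closure_minimal X τ _ _ hYS hclS)⟩

theorem connectedSpace_extendTopology (hτ : @ConnectedSpace X τ) (hu : u ≤ τ.induced (↑))
    (huc : @ConnectedSpace Y u) : @ConnectedSpace X (extendTopology τ u) := by
  let := extendTopology τ u
  have hY : IsConnected Y := isConnected_iff_connectedSpace.2 <|
    show @ConnectedSpace Y ((extendTopology τ u).induced (↑)) from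
      (induced_extendTopology τ u hu).symm ▸ huc
  refine connectedSpace_iff_clopen.2 ⟨hτ.toNonempty, fun S hS => ?_⟩
  obtain ⟨y, hy⟩ := hY.nonempty
  by_cases hyS : y ∈ S
  · exact @isClopen_iff X τ _ S |>.1 <| isClopen_of_isClopen_extendTopology_of_subset hS <|
      hY.isPreconnected.subset_isClopen hS ⟨y, hy, hyS⟩
  · have := @isClopen_iff X τ _ Sᶜ |>.1 <| isClopen_of_isClopen_extendTopology_of_subset hS.compl <|
      hY.isPreconnected.subset_isClopen hS.compl ⟨y, hy, hyS⟩
    rwa [compl_empty_iff, compl_univ_iff, or_comm] at this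

end Extension

theorem MaximalConnected.induced_subtype {X : Type*} {s : TopologicalSpace X}
    (hs : MaximalConnected s) {Y : Set X} (hY : @ConnectedSpace Y (s.induced (↑))) :
    MaximalConnected (s.induced ((↑) : Y → X)) := by
  refine ⟨hY, fun u hu huc => hs.2 _ ?_ (connectedSpace_extendTopology hs.1 hu.le huc)⟩
  refine lt_of_le_of_ne (extendTopology_le s u) fun h => hu.ne ?_
  rw [← h, induced_extendTopology s u hu.le]

theorem EssentiallyConnected.induced_subtype {X : Type*} {t : TopologicalSpace X}
    (ht : EssentiallyConnected t) {Y : Set X} (hY : @ConnectedSpace Y (t.induced (↑))) :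
    EssentiallyConnected (t.induced ((↑) : Y → X)) := by
  refine ⟨hY, fun u hu huc C => ?_⟩
  have hT := ht.2 _ (extendTopology_le t u) (connectedSpace_extendTopology ht.1 hu huc) ((↑) '' C)
  rwa [isConnected_image_val_iff, isConnected_image_val_iff, induced_extendTopology t u hu] at hT

/-- every connected subspace of a strongly connected and essentially
connected space is both strongly connected and essentially connected. -/
theorem stmt_9 {X : Type*} [t : TopologicalSpace X]
    (h1 : StronglyConnected t) (h2 : EssentiallyConnected t)
    (Y : Set X) (hY : ConnectedSpace Y) :
    StronglyConnected (TopologicalSpace.induced (fun y : Y => (y : X)) t) ∧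
    EssentiallyConnected (TopologicalSpace.induced (fun y : Y => (y : X)) t) := by
  obtain ⟨s, hst, hs⟩ := h1
  have hYs : @ConnectedSpace Y (s.induced (↑)) := (@isConnected_iff_connectedSpace X s Y).1 <|
    (h2.2 s hst hs.1 Y).2 ((@isConnected_iff_connectedSpace X t Y).2 hY)
  exact ⟨⟨_, induced_mono hst, hs.induced_subtype hYs⟩, h2.induced_subtype hY⟩
end

section
/- Let X be a tree sum of spaces (X_i)_{i∈I}. Then for each i ∈ I there is a unique continuous map q_i : X → X_i such that q_i ∘ e_i = id and q_i ∘ e_j is constant for j ≠ i. Consequently each canonical map e_i : X_i → X is an embedding and each X_i is a retract of X. -/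
/-- The set of gluing points of a family of subspaces: points lying in at least two
of the subspaces. -/
def gluingPoints {X I : Type*} (F : I → Set X) : Set X :=
  {x | ∃ i j : I, i ≠ j ∧ x ∈ F i ∧ x ∈ F j}

/-- The (bipartite) gluing graph of a family of subspaces: vertices are the indices
together with the gluing points, with an edge between `i` and a gluing point `s`
iff `s ∈ F i`. -/
def gluingGraph {X I : Type*} (F : I → Set X) :
    SimpleGraph (I ⊕ ↥(gluingPoints F)) :=
  SimpleGraph.fromRel (fun a b =>
    ∃ (i : I) (s : ↥(gluingPoints F)), a = Sum.inl i ∧ b = Sum.inr s ∧ (s : X) ∈ F i)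

/-- `X` is an (inner) tree sum of the family `F` of its subspaces: the subspaces
cover `X`, `X` carries the final topology with respect to the inclusions, and the
gluing graph is a tree. -/
def IsTreeSumOf {X I : Type*} [TopologicalSpace X] (F : I → Set X) : Prop :=
  (∀ x : X, ∃ i, x ∈ F i) ∧
  (∀ U : Set X, IsOpen U ↔ ∀ i, IsOpen ((fun y : F i => (y : X)) ⁻¹' U)) ∧
  (gluingGraph F).IsTree

namespace TreeSumAux

open SimpleGraph

lemma getVert_one_append {V : Type*} {G : SimpleGraph V} {a b c : V}
    (p : G.Walk a b) (q : G.Walk b c) (hp : p.length ≠ 0) :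
    (p.append q).getVert 1 = p.getVert 1 := by
  rw [SimpleGraph.Walk.getVert_append]
  by_cases h : 1 < p.length
  · rw [if_pos h]
  · have h1 : p.length = 1 := by omega
    have hb : p.getVert 1 = b := by rw [← h1]; exact p.getVert_length
    rw [if_neg h, h1, Nat.sub_self, q.getVert_zero, hb]

variable {X I : Type*} {F : I → Set X}

lemma gluing_adj {j : I} {s : ↥(gluingPoints F)} (hs : (s : X) ∈ F j) :
    (gluingGraph F).Adj (Sum.inl j) (Sum.inr s) := by
  rw [gluingGraph, SimpleGraph.fromRel_adj]
  exact ⟨by simp, Or.inl ⟨j, s, rfl, rfl, hs⟩⟩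

lemma adj_cases {a b : I ⊕ ↥(gluingPoints F)} (h : (gluingGraph F).Adj a b) :
    (∃ (j : I) (s : ↥(gluingPoints F)), a = Sum.inl j ∧ b = Sum.inr s ∧ (s : X) ∈ F j) ∨
    (∃ (j : I) (s : ↥(gluingPoints F)), b = Sum.inl j ∧ a = Sum.inr s ∧ (s : X) ∈ F j) := by
  rw [gluingGraph, SimpleGraph.fromRel_adj] at h
  exact h.2

variable (hT : (gluingGraph F).IsTree) (i : I)

/-- The canonical path from `v` to `inl i` in the gluing tree. -/
noncomputable def cpath (v : I ⊕ ↥(gluingPoints F)) : (gluingGraph F).Walk v (Sum.inl i) :=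
  (hT.existsUnique_path v (Sum.inl i)).exists.choose

lemma cpath_isPath (v : I ⊕ ↥(gluingPoints F)) : (cpath hT i v).IsPath :=
  (hT.existsUnique_path v (Sum.inl i)).exists.choose_spec

lemma cpath_eq {v : I ⊕ ↥(gluingPoints F)} (p : (gluingGraph F).Walk v (Sum.inl i))
    (hp : p.IsPath) : p = cpath hT i v :=
  (hT.existsUnique_path v (Sum.inl i)).unique hp (cpath_isPath hT i v)

lemma cpath_length_ne {v : I ⊕ ↥(gluingPoints F)} (hv : v ≠ Sum.inl i) :
    (cpath hT i v).length ≠ 0 :=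
  fun h0 => hv (SimpleGraph.Walk.eq_of_length_eq_zero h0)

/-- The vertex adjacent to `inl i` on the canonical path from `v` to `inl i`. -/
noncomputable def pv (v : I ⊕ ↥(gluingPoints F)) : I ⊕ ↥(gluingPoints F) :=
  (cpath hT i v).reverse.getVert 1

lemma pv_spec {v : I ⊕ ↥(gluingPoints F)} (hv : v ≠ Sum.inl i) :
    ∃ s : ↥(gluingPoints F), pv hT i v = Sum.inr s ∧ (s : X) ∈ F i := by
  have hlen : 0 < (cpath hT i v).reverse.length := by
    rw [SimpleGraph.Walk.length_reverse]
    exact Nat.pos_of_ne_zero (cpath_length_ne hT i hv)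
  have hadj := (cpath hT i v).reverse.adj_getVert_succ hlen
  rw [SimpleGraph.Walk.getVert_zero] at hadj
  rcases adj_cases hadj with ⟨j, s, h1, h2, h3⟩ | ⟨j, s, h1, h2, h3⟩
  · obtain rfl : i = j := Sum.inl_injective h1
    exact ⟨s, h2, h3⟩
  · exact absurd h2 (by simp)

/-- The retraction value assigned to all points matching vertex `v`. -/
noncomputable def projv {v : I ⊕ ↥(gluingPoints F)} (hv : v ≠ Sum.inl i) : ↥(F i) :=
  ⟨((pv_spec hT i hv).choose : X), (pv_spec hT i hv).choose_spec.2⟩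

lemma projv_eq {u w : I ⊕ ↥(gluingPoints F)} (hu : u ≠ Sum.inl i) (hw : w ≠ Sum.inl i)
    (hpv : pv hT i u = pv hT i w) : projv hT i hu = projv hT i hw := by
  have h1 := (pv_spec hT i hu).choose_spec.1
  have h2 := (pv_spec hT i hw).choose_spec.1
  have h3 : (Sum.inr (pv_spec hT i hu).choose : I ⊕ ↥(gluingPoints F))
      = Sum.inr (pv_spec hT i hw).choose := h1.symm.trans (hpv.trans h2)
  exact Subtype.ext (congrArg (fun t : ↥(gluingPoints F) => (t : X)) (Sum.inr_injective h3))

lemma projv_inr {s : ↥(gluingPoints F)} (hs : (s : X) ∈ F i)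
    (hv : (Sum.inr s : I ⊕ ↥(gluingPoints F)) ≠ Sum.inl i) :
    projv hT i hv = ⟨(s : X), hs⟩ := by
  have hadj : (gluingGraph F).Adj (Sum.inr s) (Sum.inl i) := (gluing_adj hs).symm
  have hW : (SimpleGraph.Walk.cons hadj SimpleGraph.Walk.nil).IsPath :=
    SimpleGraph.Walk.IsPath.nil.cons (by simp)
  have hpv : pv hT i (Sum.inr s) = Sum.inr s := by
    rw [pv, ← cpath_eq hT i _ hW]
    rfl
  have h1 := (pv_spec hT i hv).choose_spec.1
  have h3 : (Sum.inr (pv_spec hT i hv).choose : I ⊕ ↥(gluingPoints F)) = Sum.inr s :=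
    h1.symm.trans hpv
  exact Subtype.ext (congrArg (fun t : ↥(gluingPoints F) => (t : X)) (Sum.inr_injective h3))

/-- Adjacent vertices distinct from `inl i` project to the same point. -/
lemma pv_adj_eq {u w : I ⊕ ↥(gluingPoints F)} (hadj : (gluingGraph F).Adj u w)
    (hu : u ≠ Sum.inl i) (hw : w ≠ Sum.inl i) : pv hT i u = pv hT i w := by
  classical
  rcases Classical.em (w ∈ (cpath hT i u).support) with hws | hws
  · have hdrop : ((cpath hT i u).dropUntil w hws).IsPath :=
      (cpath_isPath hT i u).dropUntil hws
    have hcw : cpath hT i w = (cpath hT i u).dropUntil w hws := (cpath_eq hT i _ hdrop).symm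
    have hlen : ((cpath hT i u).dropUntil w hws).reverse.length ≠ 0 := by
      rw [SimpleGraph.Walk.length_reverse]
      exact fun h0 => hw (SimpleGraph.Walk.eq_of_length_eq_zero h0)
    calc pv hT i u
        = (((cpath hT i u).takeUntil w hws).append
            ((cpath hT i u).dropUntil w hws)).reverse.getVert 1 := by
          rw [pv, SimpleGraph.Walk.take_spec]
      _ = (((cpath hT i u).dropUntil w hws).reverse.append
            ((cpath hT i u).takeUntil w hws).reverse).getVert 1 := by
          rw [SimpleGraph.Walk.reverse_append]
      _ = ((cpath hT i u).dropUntil w hws).reverse.getVert 1 :=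
          getVert_one_append _ _ hlen
      _ = pv hT i w := by rw [pv, hcw]
  · have hcons : (SimpleGraph.Walk.cons hadj.symm (cpath hT i u)).IsPath :=
      (cpath_isPath hT i u).cons hws
    have hcw : cpath hT i w = SimpleGraph.Walk.cons hadj.symm (cpath hT i u) :=
      (cpath_eq hT i _ hcons).symm
    have hlen : (cpath hT i u).reverse.length ≠ 0 := by
      rw [SimpleGraph.Walk.length_reverse]
      exact cpath_length_ne hT i hu
    rw [pv, pv, hcw, SimpleGraph.Walk.reverse_cons, getVert_one_append _ _ hlen]

variable (hcov : ∀ x : X, ∃ j, x ∈ F j)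

open Classical in
/-- The vertex of the gluing graph associated with a point of `X`. -/
noncomputable def vtx (x : X) : I ⊕ ↥(gluingPoints F) :=
  if hg : x ∈ gluingPoints F then Sum.inr ⟨x, hg⟩ else Sum.inl (hcov x).choose

lemma vtx_cases {x : X} {j : I} (hx : x ∈ F j) :
    (∃ s : ↥(gluingPoints F), (s : X) = x ∧ vtx hcov x = Sum.inr s) ∨
      vtx hcov x = Sum.inl j := by
  unfold vtx
  split
  · exact Or.inl ⟨⟨x, by assumption⟩, rfl, rfl⟩
  · rename_i hg
    right
    have hc := (hcov x).choose_spec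
    have : (hcov x).choose = j := by
      by_contra hne
      exact hg ⟨(hcov x).choose, j, hne, hc, hx⟩
    rw [this]

lemma vtx_ne {x : X} (hx : x ∉ F i) : vtx hcov x ≠ Sum.inl i := by
  unfold vtx
  split
  · simp
  · intro hcon
    have := (hcov x).choose_spec
    rw [Sum.inl_injective hcon] at this
    exact hx this

open Classical in
/-- The retraction `X → F i`. -/
noncomputable def qmap (x : X) : ↥(F i) :=
  if hx : x ∈ F i then ⟨x, hx⟩ else projv hT i (vtx_ne i hcov hx)

lemma qmap_id (y : ↥(F i)) : qmap hT i hcov (y : X) = y := by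
  unfold qmap
  rw [dif_pos y.2]

lemma qmap_const {j : I} (hj : j ≠ i)
    (hji : (Sum.inl j : I ⊕ ↥(gluingPoints F)) ≠ Sum.inl i) {y : X} (hy : y ∈ F j) :
    qmap hT i hcov y = projv hT i hji := by
  by_cases hyi : y ∈ F i
  · have hg : y ∈ gluingPoints F := ⟨j, i, hj, hy, hyi⟩
    have hadj : (gluingGraph F).Adj (Sum.inl j) (Sum.inr (⟨y, hg⟩ : ↥(gluingPoints F))) :=
      gluing_adj hy
    have hsne : (Sum.inr (⟨y, hg⟩ : ↥(gluingPoints F)) : I ⊕ ↥(gluingPoints F)) ≠ Sum.inl i :=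
      by simp
    have h1 : projv hT i hji = projv hT i hsne :=
      projv_eq hT i hji hsne (pv_adj_eq hT i hadj hji hsne)
    rw [h1, projv_inr hT i hyi hsne]
    unfold qmap
    rw [dif_pos hyi]
  · unfold qmap
    rw [dif_neg hyi]
    rcases vtx_cases hcov hy with ⟨s, hsx, hvtx⟩ | hvtx
    · have hsj : (s : X) ∈ F j := by rw [hsx]; exact hy
      have hadj : (gluingGraph F).Adj (Sum.inl j) (Sum.inr s) := gluing_adj hsj
      have hsne : (Sum.inr s : I ⊕ ↥(gluingPoints F)) ≠ Sum.inl i := by simp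
      refine projv_eq hT i _ hji ?_
      rw [hvtx]
      exact (pv_adj_eq hT i hadj hji hsne).symm
    · refine projv_eq hT i _ hji ?_
      rw [hvtx]

/-- Any two maps with the retraction properties agree on every summand. -/
lemma key_ind (q1 q2 : X → ↥(F i))
    (h1a : ∀ y : ↥(F i), q1 (y : X) = y)
    (h1b : ∀ j : I, j ≠ i → ∃ c : ↥(F i), ∀ y : ↥(F j), q1 (y : X) = c)
    (h2a : ∀ y : ↥(F i), q2 (y : X) = y)
    (h2b : ∀ j : I, j ≠ i → ∃ c : ↥(F i), ∀ y : ↥(F j), q2 (y : X) = c) :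
    ∀ n : ℕ, ∀ j : I, j ≠ i →
      ∀ P : (gluingGraph F).Walk (Sum.inl j) (Sum.inl i), P.IsPath → P.length ≤ n →
      ∀ x : X, x ∈ F j → q1 x = q2 x := by
  intro n
  induction n using Nat.strong_induction_on with
  | _ n IH =>
    intro j hj P hP hlen x hx
    have hjne : (Sum.inl j : I ⊕ ↥(gluingPoints F)) ≠ Sum.inl i :=
      fun hcon => hj (Sum.inl_injective hcon)
    obtain ⟨b, hadj, Q, rfl⟩ := P.exists_eq_cons_of_ne hjne
    rcases adj_cases hadj with ⟨j', s1, hja, hb, hmem⟩ | ⟨j', s1, hb, hja, hmem⟩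
    swap
    · exact absurd hja (by simp)
    obtain rfl : j = j' := Sum.inl_injective hja
    subst hb
    have e1 : q1 x = q1 (s1 : X) := by
      obtain ⟨c, hc⟩ := h1b j hj
      exact (hc ⟨x, hx⟩).trans (hc ⟨(s1 : X), hmem⟩).symm
    have e2 : q2 x = q2 (s1 : X) := by
      obtain ⟨c, hc⟩ := h2b j hj
      exact (hc ⟨x, hx⟩).trans (hc ⟨(s1 : X), hmem⟩).symm
    by_cases hs1i : (s1 : X) ∈ F i
    · exact e1.trans (((h1a ⟨(s1 : X), hs1i⟩).trans (h2a ⟨(s1 : X), hs1i⟩).symm).trans e2.symm)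
    · obtain ⟨b2, hadj2, Q2, rfl⟩ := Q.exists_eq_cons_of_ne (by simp)
      rcases adj_cases hadj2 with ⟨j1, s', h1', h2', hmem'⟩ | ⟨j1, s', h1', h2', hmem'⟩
      · exact absurd h1' (by simp)
      obtain rfl : s1 = s' := Sum.inr_injective h2'
      subst h1'
      have hj1 : j1 ≠ i := fun hcon => hs1i (hcon ▸ hmem')
      have hQ2 : Q2.IsPath := hP.of_cons.of_cons
      have hlen2 : Q2.length < n := by
        simp only [SimpleGraph.Walk.length_cons] at hlen
        omega
      have hmid : q1 (s1 : X) = q2 (s1 : X) :=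
        IH Q2.length hlen2 j1 hj1 Q2 hQ2 le_rfl (s1 : X) hmem'
      exact e1.trans (hmid.trans e2.symm)

include hT hcov in
lemma agree (q1 q2 : X → ↥(F i))
    (h1a : ∀ y : ↥(F i), q1 (y : X) = y)
    (h1b : ∀ j : I, j ≠ i → ∃ c : ↥(F i), ∀ y : ↥(F j), q1 (y : X) = c)
    (h2a : ∀ y : ↥(F i), q2 (y : X) = y)
    (h2b : ∀ j : I, j ≠ i → ∃ c : ↥(F i), ∀ y : ↥(F j), q2 (y : X) = c) :
    ∀ x : X, q1 x = q2 x := by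
  intro x
  obtain ⟨j, hj⟩ := hcov x
  by_cases hxi : x ∈ F i
  · exact (h1a ⟨x, hxi⟩).trans (h2a ⟨x, hxi⟩).symm
  · have hji : j ≠ i := fun hcon => hxi (hcon ▸ hj)
    obtain ⟨P, hP⟩ := (hT.existsUnique_path (Sum.inl j) (Sum.inl i)).exists
    exact key_ind i q1 q2 h1a h1b h2a h2b P.length j hji P hP le_rfl x hj

end TreeSumAux

/-- in a tree sum there are unique retractions `q_i : X → X_i` that are
the identity on `X_i` and constant on every other summand; they are continuous, the
inclusions are embeddings, and each summand is a retract of `X`. -/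
theorem stmt_10 {X I : Type*} [TopologicalSpace X] (F : I → Set X)
    (h : IsTreeSumOf F) :
    ∀ i : I,
      (∃! q : X → F i,
        (∀ y : F i, q (y : X) = y) ∧
        ∀ j : I, j ≠ i → ∃ c : F i, ∀ y : F j, q (y : X) = c) ∧
      (∀ q : X → F i,
        ((∀ y : F i, q (y : X) = y) ∧
          ∀ j : I, j ≠ i → ∃ c : F i, ∀ y : F j, q (y : X) = c) →
        Continuous q) ∧
      Topology.IsEmbedding (fun y : F i => (y : X)) := by
  obtain ⟨hcov, htop, hT⟩ := h
  intro i
  refine ⟨?_, ?_, Topology.IsEmbedding.subtypeVal⟩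
  · -- existence and uniqueness
    refine ⟨TreeSumAux.qmap hT i hcov, ⟨TreeSumAux.qmap_id hT i hcov, ?_⟩, ?_⟩
    · intro j hj
      have hji : (Sum.inl j : I ⊕ ↥(gluingPoints F)) ≠ Sum.inl i :=
        fun hcon => hj (Sum.inl_injective hcon)
      exact ⟨TreeSumAux.projv hT i hji, fun y => TreeSumAux.qmap_const hT i hcov hj hji y.2⟩
    · intro q' ⟨hq'a, hq'b⟩
      funext x
      refine TreeSumAux.agree hT i hcov q' (TreeSumAux.qmap hT i hcov) hq'a hq'b
        (TreeSumAux.qmap_id hT i hcov) ?_ x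
      intro j hj
      have hji : (Sum.inl j : I ⊕ ↥(gluingPoints F)) ≠ Sum.inl i :=
        fun hcon => hj (Sum.inl_injective hcon)
      exact ⟨TreeSumAux.projv hT i hji, fun y => TreeSumAux.qmap_const hT i hcov hj hji y.2⟩
  · -- continuity
    rintro q ⟨hqa, hqb⟩
    rw [continuous_def]
    intro U hU
    rw [htop]
    intro j
    have hcomp : Continuous fun y : F j => q (y : X) := by
      by_cases hji : j = i
      · subst hji
        have hid : (fun y : F j => q (y : X)) = id := funext hqa
        rw [hid]
        exact continuous_id
      · obtain ⟨c, hc⟩ := hqb j hji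
        have hconst : (fun y : F j => q (y : X)) = fun _ => c := funext hc
        rw [hconst]
        exact continuous_const
    exact hcomp.isOpen_preimage U hU
end

section
/- Let X be a topological space and F = (X_i)_{i∈I} a family of subspaces. Then X is an inner tree sum of F if and only if: (i) ∪_i X_i = X, (ii) X carries the final topology with respect to the inclusions X_i → X, and (iii) the bipartite graph G_F on I ⊔ S_F (where S_F is the set of points lying in at least two X_i, with an edge (s,i) iff s ∈ X_i) is a tree. -/
/-- The codiagonal of the inclusions: the canonical map from the topological sum of the
subspaces to `X`. -/
def sumMap {X I : Type*} (F : I → Set X) : (Σ i : I, ↥(F i)) → X :=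
  fun p => (p.2 : X)

/-- The glued sum induced by a family of subspaces of `X`: the quotient of the
topological sum of the subspaces by the kernel of the codiagonal map. -/
abbrev GluedSum {X I : Type*} (F : I → Set X) : Type _ :=
  Quotient (Setoid.ker (sumMap F))

/-- The canonical (injective) map from the glued sum to `X`. -/
def canonicalMap {X I : Type*} (F : I → Set X) : GluedSum F → X :=
  Quotient.lift (sumMap F) (fun _ _ h => h)

/-- `X` is an inner tree sum of `F` (the induced gluing structure
induces a tree sum and the canonical map `GluedSum F → X` is a homeomorphism) iff
(i) the `X_i` cover `X`, (ii) `X` carries the final topology with respect to the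
inclusions, and (iii) the gluing graph `G_F` is a tree. -/
theorem stmt_11 {X I : Type*} [TopologicalSpace X] (F : I → Set X) :
    ((gluingGraph F).IsTree ∧ IsHomeomorph (canonicalMap F)) ↔
      ((∀ x : X, ∃ i, x ∈ F i) ∧
       (∀ U : Set X, IsOpen U ↔ ∀ i, IsOpen ((fun y : F i => (y : X)) ⁻¹' U)) ∧
       (gluingGraph F).IsTree) := by
  have hinj : Function.Injective (canonicalMap F) := by
    intro a b
    induction a using Quotient.ind
    induction b using Quotient.ind
    intro h
    exact Quotient.sound h
  constructor
  · rintro ⟨ht, hh⟩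
    refine ⟨?_, ?_, ht⟩
    · intro x
      obtain ⟨q, hq⟩ := hh.surjective x
      induction q using Quotient.ind with
      | _ p => exact ⟨p.1, hq ▸ p.2.2⟩
    · intro U
      constructor
      · intro hU i
        exact continuous_subtype_val.isOpen_preimage U hU
      · intro h
        have h1 : IsOpen (canonicalMap F ⁻¹' U) := by
          rw [isOpen_coinduced, isOpen_sigma_iff]
          exact h
        have h2 := hh.isOpenMap _ h1
        rwa [Set.image_preimage_eq _ hh.surjective] at h2
  · rintro ⟨hcov, hfin, ht⟩
    have hsurj : Function.Surjective (canonicalMap F) := by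
      intro x
      obtain ⟨i, hi⟩ := hcov x
      exact ⟨Quotient.mk _ ⟨i, ⟨x, hi⟩⟩, rfl⟩
    have hcont : Continuous (canonicalMap F) := by
      apply Continuous.quotient_lift
      exact continuous_sigma fun i => continuous_subtype_val
    have hopen : IsOpenMap (canonicalMap F) := by
      intro V hV
      rw [hfin]
      intro i
      have h1 : IsOpen ((Quotient.mk (Setoid.ker (sumMap F))) ⁻¹' V) :=
        hV.preimage continuous_quotient_mk'
      rw [isOpen_sigma_iff] at h1
      have h2 := h1 i
      have heq : (fun y : F i => (y : X)) ⁻¹' (canonicalMap F '' V) =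
          Sigma.mk i ⁻¹' ((Quotient.mk (Setoid.ker (sumMap F))) ⁻¹' V) := by
        ext y
        constructor
        · rintro ⟨q, hq, hq2⟩
          have : q = Quotient.mk _ ⟨i, y⟩ := hinj (by exact hq2)
          simpa [this] using hq
        · intro hy
          exact ⟨Quotient.mk _ ⟨i, y⟩, hy, rfl⟩
      rw [heq]
      exact h2
    exact ⟨ht, hcont, hopen, hinj, hsurj⟩
end

section
/- Let X be a tree sum of spaces (X_i)_{i∈I}, with retractions q_i : X → X_i, and Y ⊆ X. The following are equivalent: (i) Y is a tree subsum of X (i.e., Y is an inner tree sum of the family (Y ∩ X_i)); (ii) the induced subgraph G_Y of the gluing graph is connected; (iii) q_i[Y] = Y ∩ X_i for every i with Y ∩ X_i ≠ ∅. -/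
/-!
`G_Y` is isomorphic to the gluing graph of the family `(Y ∩ X_i)`, and as an induced subgraph of a
tree it is acyclic; so (i) ⇔ (ii) comes down to the topology of `Y`.

The retraction `q_k` collapses every branch of the tree at `k` onto the gluing point at which it is
attached to `X_k`. Hence `q_k[Y] ⊆ Y` says that every branch at `k` that meets `Y` is attached at a
point of `Y`, and this is what connectedness of `G_Y` amounts to: (ii) ⇔ (iii).

For the topology in (ii) ⇒ (i), let `U ⊆ Y` be open in every `Y ∩ X_i` and choose open `O_i ⊆ X`
with `O_i ∩ Y ∩ X_i = U ∩ X_i`. The union of the sets `O_i ∩ X_i` and of all branches outside `G_Y`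
that hang off `G_Y` at a point of some `O_i` cuts out `U` and has open trace on every `X_k`: by
acyclicity, two pieces meeting `Y` intersect only inside `Y`, and a branch outside `G_Y` hangs off
`G_Y` at a single point.
-/

open SimpleGraph Set Sum

namespace SimpleGraph

variable {V : Type*} {G : SimpleGraph V}

lemma Reachable.exists_walk_support_subset_of_induce {S : Set V} {u v : S}
    (h : (G.induce S).Reachable u v) : ∃ p : G.Walk u v, ∀ w ∈ p.support, w ∈ S := by
  obtain ⟨p⟩ := h
  have hp : ∀ w ∈ (p.map (Embedding.induce S).toHom).support, w ∈ S := by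
    simp only [Walk.support_map, List.mem_map]
    rintro _ ⟨w, -, rfl⟩
    exact w.2
  exact ⟨_, hp⟩

lemma Walk.forall_mem_support_concat {P : V → Prop} {u v w : V} {p : G.Walk u v}
    (h : G.Adj v w) (hp : ∀ x ∈ p.support, P x) (hw : P w) : ∀ x ∈ (p.concat h).support, P x := by
  intro x hx
  rw [Walk.support_concat, List.mem_append, List.mem_singleton] at hx
  exact hx.elim (hp x) fun hxw => hxw ▸ hw

/-- Otherwise the walk `a ⇝ a' — b' ⇝ b` would avoid the bridge `ab`. -/
lemma IsAcyclic.eq_and_eq_of_walks {S : Set V} (hG : G.IsAcyclic) {a b a' b' : V}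
    (hab : G.Adj a b) (hab' : G.Adj a' b') (p : G.Walk a a') (hp : ∀ w ∈ p.support, w ∈ S)
    (q : G.Walk b b') (hq : ∀ w ∈ q.support, w ∉ S) : a = a' ∧ b = b' := by
  have hmem := isBridge_iff_forall_walk_mem_edges.mp (isAcyclic_iff_forall_adj_isBridge.mp hG hab)
    (p.append (Walk.cons hab' q.reverse))
  simp only [Walk.edges_append, Walk.edges_cons, Walk.edges_reverse, List.mem_append,
    List.mem_cons, List.mem_reverse] at hmem
  rcases hmem with he | he | he
  · exact absurd (hp b (p.snd_mem_support_of_mem_edges he)) (hq b q.start_mem_support)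
  · rcases Sym2.eq_iff.mp he with h | ⟨rfl, -⟩
    · exact h
    · exact absurd (hp a p.start_mem_support) (hq a q.end_mem_support)
  · exact absurd (hp a p.start_mem_support) (hq a (q.fst_mem_support_of_mem_edges he))

end SimpleGraph

namespace TreeSum

variable {X I : Type*} {F : I → Set X}

@[simp] lemma gluingGraph_adj_inl_inr {i : I} {s : gluingPoints F} :
    (gluingGraph F).Adj (inl i) (inr s) ↔ (s : X) ∈ F i := by
  simp [gluingGraph]

@[simp] lemma gluingGraph_adj_inr_inl {i : I} {s : gluingPoints F} :
    (gluingGraph F).Adj (inr s) (inl i) ↔ (s : X) ∈ F i := by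
  simp [gluingGraph]

@[simp] lemma not_gluingGraph_adj_inl_inl {i j : I} : ¬(gluingGraph F).Adj (inl i) (inl j) := by
  simp [gluingGraph]

@[simp] lemma not_gluingGraph_adj_inr_inr {s t : gluingPoints F} :
    ¬(gluingGraph F).Adj (inr s) (inr t) := by
  simp [gluingGraph]

variable (F) in
def carrier : I ⊕ gluingPoints F → Set X :=
  Sum.elim F fun s => {(s : X)}

lemma nonempty_carrier_inter_of_adj {u v : I ⊕ gluingPoints F} (h : (gluingGraph F).Adj u v) :
    (carrier F u ∩ carrier F v).Nonempty := by
  rcases u with i | s <;> rcases v with j | t <;> simp at h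
  · exact ⟨t, h, rfl⟩
  · exact ⟨s, rfl, h⟩

lemma apply_eq_of_walk {Z : Type*} {f : X → Z} {u v : I ⊕ gluingPoints F}
    (p : (gluingGraph F).Walk u v)
    (hf : ∀ w ∈ p.support, ∀ x ∈ carrier F w, ∀ y ∈ carrier F w, f x = f y)
    {x y : X} (hx : x ∈ carrier F u) (hy : y ∈ carrier F v) : f x = f y := by
  induction p generalizing x with
  | nil => exact hf _ (by simp) x hx y hy
  | cons h p ih =>
    obtain ⟨z, hzu, hzv⟩ := nonempty_carrier_inter_of_adj h
    rw [hf _ (by simp) x hx z hzu]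
    exact ih (fun w hw => hf w (by simp [hw])) hzv hy

variable (F) in
def subsumVerts (Y : Set X) : Set (I ⊕ gluingPoints F) :=
  {v | Sum.elim (fun i => (Y ∩ F i).Nonempty) (fun s => (s : X) ∈ Y) v}

variable {Y : Set X}

@[simp] lemma inl_mem_subsumVerts {i : I} : inl i ∈ subsumVerts F Y ↔ (Y ∩ F i).Nonempty :=
  Iff.rfl

@[simp] lemma inr_mem_subsumVerts {s : gluingPoints F} : inr s ∈ subsumVerts F Y ↔ (s : X) ∈ Y :=
  Iff.rfl

lemma mem_subsumVerts_iff {v : I ⊕ gluingPoints F} :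
    v ∈ subsumVerts F Y ↔ (Y ∩ carrier F v).Nonempty := by
  rcases v with i | s <;> simp [carrier]

variable (F) in
def IsRetractionFamily (q : ∀ i, X → F i) : Prop :=
  ∀ i, (∀ y : F i, q i y = y) ∧ ∀ j, j ≠ i → ∃ c : F i, ∀ y : F j, q i y = c

namespace IsRetractionFamily

variable {q : ∀ i, X → F i} (hq : IsRetractionFamily F q)
include hq

lemma coe_apply_of_mem {i : I} {x : X} (hx : x ∈ F i) : (q i x : X) = x :=
  congrArg Subtype.val ((hq i).1 ⟨x, hx⟩)

lemma apply_eq_apply_of_mem_carrier {i : I} {w : I ⊕ gluingPoints F} (hw : w ≠ inl i)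
    {x y : X} (hx : x ∈ carrier F w) (hy : y ∈ carrier F w) : q i x = q i y := by
  rcases w with j | s
  · obtain ⟨c, hc⟩ := (hq i).2 j (fun hji => hw (congrArg inl hji))
    exact (hc ⟨x, hx⟩).trans (hc ⟨y, hy⟩).symm
  · rw [show x = s from hx, show y = s from hy]

lemma coe_apply_eq_of_walk {k : I} {s : gluingPoints F} (hs : (s : X) ∈ F k)
    {v : I ⊕ gluingPoints F} (p : (gluingGraph F).Walk (inr s) v) (hp : inl k ∉ p.support)
    {y : X} (hy : y ∈ carrier F v) : (q k y : X) = s := by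
  rw [← apply_eq_of_walk p
    (fun w hw _ hx _ hy => hq.apply_eq_apply_of_mem_carrier (ne_of_mem_of_not_mem hw hp) hx hy)
    (rfl : (s : X) ∈ carrier F (inr s)) hy, hq.coe_apply_of_mem hs]

lemma image_eq_iff_forall_coe_apply_mem {i : I} :
    q i '' Y = {y : F i | (y : X) ∈ Y} ↔ ∀ y ∈ Y, (q i y : X) ∈ Y := by
  refine ⟨fun h y hy => (h.subset ⟨y, hy, rfl⟩ :), fun h => ?_⟩
  refine Subset.antisymm ?_ fun (z : F i) (hz : (z : X) ∈ Y) => ⟨z, hz, (hq i).1 z⟩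
  rintro _ ⟨y, hy, rfl⟩
  exact h y hy

lemma coe_apply_mem_of_preconnected (hcover : ∀ x, ∃ i, x ∈ F i)
    (hconn : ((gluingGraph F).induce (subsumVerts F Y)).Preconnected) {i : I}
    (hi : (Y ∩ F i).Nonempty) {y : X} (hy : y ∈ Y) : (q i y : X) ∈ Y := by
  classical
  obtain ⟨j, hyj⟩ := hcover y
  obtain rfl | hij := eq_or_ne i j
  · rwa [hq.coe_apply_of_mem hyj]
  obtain ⟨p, hpS⟩ :=
    (hconn ⟨inl i, hi⟩ ⟨inl j, ⟨y, hy, hyj⟩⟩).exists_walk_support_subset_of_induce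
  -- `q i y` is the first gluing point on the path from `i` to `j` inside `G_Y`
  obtain ⟨v, hadj, p', hp'⟩ := p.bypass.exists_eq_cons_of_ne (by simpa using hij)
  rcases v with _ | s
  · simp at hadj
  have hpath := hp' ▸ p.bypass_isPath
  rw [hq.coe_apply_eq_of_walk (gluingGraph_adj_inl_inr.mp hadj) p'
    ((Walk.cons_isPath_iff _ _).mp hpath).2 hyj]
  exact hpS (inr s) (p.support_bypass_subset_support (by rw [hp']; simp))

lemma mem_subsumVerts_of_isPath (hmaps : ∀ i, (Y ∩ F i).Nonempty → ∀ y ∈ Y, (q i y : X) ∈ Y)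
    {u v : I ⊕ gluingPoints F} (p : (gluingGraph F).Walk u v) (hp : p.IsPath)
    (hu : u ∈ subsumVerts F Y) (hv : v ∈ subsumVerts F Y) :
    ∀ w ∈ p.support, w ∈ subsumVerts F Y := by
  induction p with
  | nil => simpa using hu
  | @cons u u' v hadj p ih =>
    obtain ⟨hp, hup⟩ := (Walk.cons_isPath_iff _ _).mp hp
    by_cases hu' : u' ∈ subsumVerts F Y
    · simpa [hu] using ih hp hu' hv
    rcases u with k | s <;> rcases u' with j | t <;> simp at hadj
    · -- the path leaves `G_Y` along `k — t` with `t ∉ Y`, and `q k` sends the points of `Y` at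
      -- its end to `t`
      exfalso
      obtain ⟨y, hyY, hyv⟩ := mem_subsumVerts_iff.mp hv
      have hqy := hmaps k hu y hyY
      rw [hq.coe_apply_eq_of_walk hadj p hup hyv] at hqy
      exact hu' hqy
    · exact absurd ⟨s, hu, hadj⟩ hu'

lemma connected_of_forall_coe_apply_mem (hcover : ∀ x, ∃ i, x ∈ F i)
    (htree : (gluingGraph F).Connected)
    (hY : Y.Nonempty) (hmaps : ∀ i, (Y ∩ F i).Nonempty → ∀ y ∈ Y, (q i y : X) ∈ Y) :
    ((gluingGraph F).induce (subsumVerts F Y)).Connected := by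
  obtain ⟨y, hy⟩ := hY
  obtain ⟨i, hyi⟩ := hcover y
  have hi : inl i ∈ subsumVerts F Y := ⟨y, hy, hyi⟩
  refine (connected_iff_exists_forall_reachable _).mpr ⟨⟨inl i, hi⟩, fun ⟨v, hv⟩ => ?_⟩
  obtain ⟨p, hp⟩ := (htree.preconnected (inl i) v).exists_isPath
  exact ⟨p.induce _ (hq.mem_subsumVerts_of_isPath hmaps p hp hi hv)⟩

end IsRetractionFamily

variable (F Y) in
def restrict : {i : I // (Y ∩ F i).Nonempty} → Set Y :=
  fun p => (fun y : Y => (y : X)) ⁻¹' F p.1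

lemma mem_gluingPoints_restrict {y : Y} :
    y ∈ gluingPoints (restrict F Y) ↔ (y : X) ∈ gluingPoints F := by
  constructor
  · rintro ⟨i, j, hij, hi, hj⟩
    exact ⟨i, j, fun h => hij (Subtype.ext h), hi, hj⟩
  · rintro ⟨i, j, hij, hi, hj⟩
    exact ⟨⟨i, y, y.2, hi⟩, ⟨j, y, y.2, hj⟩, fun h => hij (congrArg Subtype.val h), hi, hj⟩

variable (F Y) in
def gluingPointsRestrictEquiv :
    gluingPoints (restrict F Y) ≃ {s : gluingPoints F // (s : X) ∈ Y} where
  toFun t := ⟨⟨t.1, mem_gluingPoints_restrict.mp t.2⟩, t.1.2⟩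
  invFun s := ⟨⟨s.1, s.2⟩, mem_gluingPoints_restrict.mpr s.1.2⟩
  left_inv _ := rfl
  right_inv _ := rfl

variable (F Y) in
def restrictIso :
    gluingGraph (restrict F Y) ≃g (gluingGraph F).induce (subsumVerts F Y) where
  toEquiv := ((Equiv.refl _).sumCongr (gluingPointsRestrictEquiv F Y)).trans
    (Equiv.subtypeSum (p := (· ∈ subsumVerts F Y))).symm
  map_rel_iff' {a b} := by
    rcases a with i | s <;> rcases b with j | t
    · exact iff_of_false not_gluingGraph_adj_inl_inl not_gluingGraph_adj_inl_inl
    · exact gluingGraph_adj_inl_inr.trans (gluingGraph_adj_inl_inr (F := restrict F Y)).symm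
    · exact gluingGraph_adj_inr_inl.trans (gluingGraph_adj_inr_inl (F := restrict F Y)).symm
    · exact iff_of_false not_gluingGraph_adj_inr_inr not_gluingGraph_adj_inr_inr

lemma mem_of_mem_inter_of_ne (hacyc : (gluingGraph F).IsAcyclic)
    (hconn : ((gluingGraph F).induce (subsumVerts F Y)).Preconnected) {i k : I} (hik : i ≠ k)
    (hi : (Y ∩ F i).Nonempty) (hk : (Y ∩ F k).Nonempty) {z : X} (hzi : z ∈ F i)
    (hzk : z ∈ F k) : z ∈ Y := by
  by_contra hzY
  let s : gluingPoints F := ⟨z, i, k, hik, hzi, hzk⟩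
  obtain ⟨p, hp⟩ := (hconn ⟨inl i, hi⟩ ⟨inl k, hk⟩).exists_walk_support_subset_of_induce
  have hadj_i : (gluingGraph F).Adj (inl i) (inr s) := gluingGraph_adj_inl_inr.mpr hzi
  have hadj_k : (gluingGraph F).Adj (inl k) (inr s) := gluingGraph_adj_inl_inr.mpr hzk
  exact hik (inl_injective
    (hacyc.eq_and_eq_of_walks hadj_i hadj_k p hp Walk.nil (by simpa using hzY)).1)

variable (F Y) in
def IsHanging (O : I → Set X) (j : I) : Prop :=
  ∃ i, (Y ∩ F i).Nonempty ∧ ∃ s : gluingPoints F, (s : X) ∈ F i ∩ O i ∧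
    ∃ p : (gluingGraph F).Walk (inr s) (inl j), ∀ w ∈ p.support, w ∉ subsumVerts F Y

variable (F Y) in
/-- The pieces `O i ∩ X_i` of the subsum, together with every branch of the tree that hangs off
`G_Y` at one of their points. -/
def extension (O : I → Set X) : Set X :=
  {x | ∃ i, (Y ∩ F i).Nonempty ∧ x ∈ F i ∩ O i} ∪ {x | ∃ j, IsHanging F Y O j ∧ x ∈ F j}

variable {O : I → Set X}

lemma isHanging_of_mem_extension {k : I} (hk : ¬(Y ∩ F k).Nonempty) {z : X} (hzk : z ∈ F k)
    (hz : z ∈ extension F Y O) : IsHanging F Y O k := by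
  have hzY : z ∉ Y := fun hzY => hk ⟨z, hzY, hzk⟩
  rcases hz with ⟨i, hi, hzi, hzO⟩ | ⟨j, ⟨i, hi, s, hs, r, hr⟩, hzj⟩
  · have hik : i ≠ k := by rintro rfl; exact hk hi
    let t : gluingPoints F := ⟨z, i, k, hik, hzi, hzk⟩
    have htk : (gluingGraph F).Adj (inr t) (inl k) := gluingGraph_adj_inr_inl.mpr hzk
    exact ⟨i, hi, t, ⟨hzi, hzO⟩, Walk.cons htk Walk.nil, by simp [t, hzY, hk]⟩
  · obtain rfl | hjk := eq_or_ne j k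
    · exact ⟨i, hi, s, hs, r, hr⟩
    let t : gluingPoints F := ⟨z, j, k, hjk, hzj, hzk⟩
    have hjt : (gluingGraph F).Adj (inl j) (inr t) := gluingGraph_adj_inl_inr.mpr hzj
    have htk : (gluingGraph F).Adj (inr t) (inl k) := gluingGraph_adj_inr_inl.mpr hzk
    exact ⟨i, hi, s, hs, (r.concat hjt).concat htk,
      Walk.forall_mem_support_concat htk (Walk.forall_mem_support_concat hjt hr hzY) hk⟩

section Extension

variable {U : Set Y} (hO : ∀ i, ∀ y : Y, (y : X) ∈ F i → (y ∈ U ↔ (y : X) ∈ O i))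
include hO

lemma preimage_extension (hcover : ∀ x, ∃ i, x ∈ F i) :
    Subtype.val ⁻¹' extension F Y O = U := by
  ext y
  constructor
  · rintro (⟨i, -, hyi, hyO⟩ | ⟨j, ⟨i, -, s, -, p, hp⟩, hyj⟩)
    · exact (hO i y hyi).mpr hyO
    · exact absurd ⟨y, y.2, hyj⟩ (hp _ p.end_mem_support)
  · intro hy
    obtain ⟨i, hyi⟩ := hcover y
    exact Or.inl ⟨i, ⟨y, y.2, hyi⟩, hyi, (hO i y hyi).mp hy⟩

lemma mem_extension_iff (hacyc : (gluingGraph F).IsAcyclic)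
    (hconn : ((gluingGraph F).induce (subsumVerts F Y)).Preconnected) {k : I}
    (hk : (Y ∩ F k).Nonempty) {z : X} (hzk : z ∈ F k) : z ∈ extension F Y O ↔ z ∈ O k := by
  refine ⟨?_, fun hz => Or.inl ⟨k, hk, hzk, hz⟩⟩
  rintro (⟨i, hi, hzi, hzO⟩ | ⟨j, ⟨i, hi, s, ⟨hsi, hsO⟩, r, hr⟩, hzj⟩)
  · obtain rfl | hik := eq_or_ne i k
    · exact hzO
    have hzY := mem_of_mem_inter_of_ne hacyc hconn hik hi hk hzi hzk
    exact (hO k ⟨z, hzY⟩ hzk).mp ((hO i ⟨z, hzY⟩ hzi).mpr hzO)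
  · -- the branch through `j` hangs off `G_Y` both at `s ∈ X_i` and at `z ∈ X_k`
    have hj : ¬(Y ∩ F j).Nonempty := hr _ r.end_mem_support
    have hzY : z ∉ Y := fun hzY => hj ⟨z, hzY, hzj⟩
    have hjk : j ≠ k := by rintro rfl; exact hj hk
    let t : gluingPoints F := ⟨z, j, k, hjk, hzj, hzk⟩
    have hjt : (gluingGraph F).Adj (inl j) (inr t) := gluingGraph_adj_inl_inr.mpr hzj
    have hkt : (gluingGraph F).Adj (inl k) (inr t) := gluingGraph_adj_inl_inr.mpr hzk
    obtain ⟨p, hp⟩ := (hconn ⟨inl i, hi⟩ ⟨inl k, hk⟩).exists_walk_support_subset_of_induce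
    obtain ⟨hik, hst⟩ := hacyc.eq_and_eq_of_walks (gluingGraph_adj_inl_inr.mpr hsi) hkt p hp
      (r.concat hjt) (Walk.forall_mem_support_concat hjt hr hzY)
    obtain rfl := inl_injective hik
    rwa [← show (s : X) = z from congrArg Subtype.val (inr_injective hst)]

variable [TopologicalSpace X]

lemma isOpen_extension
    (hfinal : ∀ V : Set X, (∀ i, IsOpen ((fun y : F i => (y : X)) ⁻¹' V)) → IsOpen V)
    (hacyc : (gluingGraph F).IsAcyclic)
    (hconn : ((gluingGraph F).induce (subsumVerts F Y)).Preconnected)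
    (hOopen : ∀ i, IsOpen (O i)) : IsOpen (extension F Y O) := by
  refine hfinal _ fun k => ?_
  by_cases hk : (Y ∩ F k).Nonempty
  · have htrace :
        (fun y : F k => (y : X)) ⁻¹' extension F Y O = (fun y : F k => (y : X)) ⁻¹' O k :=
      ext fun z => mem_extension_iff hO hacyc hconn hk z.2
    rw [htrace]
    exact (hOopen k).preimage continuous_subtype_val
  · obtain he | ⟨z, hz⟩ := ((fun y : F k => (y : X)) ⁻¹' extension F Y O).eq_empty_or_nonempty
    · rw [he]
      exact isOpen_empty
    · have htrace : (fun y : F k => (y : X)) ⁻¹' extension F Y O = univ :=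
        eq_univ_of_forall fun x => Or.inr ⟨k, isHanging_of_mem_extension hk z.2 hz, x.2⟩
      rw [htrace]
      exact isOpen_univ

end Extension

variable [TopologicalSpace X] {U : Set Y}

lemma exists_isOpen_trace
    (hU : ∀ p, IsOpen ((fun y : restrict F Y p => (y : Y)) ⁻¹' U)) (i : I) :
    ∃ O : Set X, IsOpen O ∧ ∀ y : Y, (y : X) ∈ F i → (y ∈ U ↔ (y : X) ∈ O) := by
  by_cases hi : (Y ∩ F i).Nonempty
  · obtain ⟨O, hO, hOU⟩ := (Topology.IsInducing.subtypeVal.comp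
      Topology.IsInducing.subtypeVal).isOpen_iff.mp (hU ⟨i, hi⟩)
    exact ⟨O, hO, fun y hy => (Set.ext_iff.mp hOU ⟨y, hy⟩).symm⟩
  · exact ⟨∅, isOpen_empty, fun y hy => absurd ⟨y, y.2, hy⟩ hi⟩

lemma isOpen_of_isOpen_restrict (hcover : ∀ x, ∃ i, x ∈ F i)
    (hfinal : ∀ V : Set X, (∀ i, IsOpen ((fun y : F i => (y : X)) ⁻¹' V)) → IsOpen V)
    (hacyc : (gluingGraph F).IsAcyclic)
    (hconn : ((gluingGraph F).induce (subsumVerts F Y)).Preconnected) {U : Set Y}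
    (hU : ∀ p, IsOpen ((fun y : restrict F Y p => (y : Y)) ⁻¹' U)) : IsOpen U := by
  choose O hOopen hO using exists_isOpen_trace hU
  rw [← preimage_extension hO hcover]
  exact (isOpen_extension hO hfinal hacyc hconn hOopen).preimage continuous_subtype_val

end TreeSum

/-- for a tree sum `X` of `(X_i)` with retractions `q_i`, and a nonempty
`Y ⊆ X`, the following are equivalent: (i) `Y` is a tree subsum of `X`, i.e. `Y` is an
inner tree sum of the family `(Y ∩ X_i)` (indexed by those `i` with `Y ∩ X_i ≠ ∅`);
(ii) the induced subgraph `G_Y` of the gluing graph is connected; (iii) `q_i[Y] = Y ∩ X_i`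
for every `i` with `Y ∩ X_i ≠ ∅`. -/
theorem stmt_12 {X I : Type*} [TopologicalSpace X] (F : I → Set X)
    (h : IsTreeSumOf F)
    (q : ∀ i : I, X → F i)
    (hq : ∀ i : I, (∀ y : F i, q i (y : X) = y) ∧
      ∀ j : I, j ≠ i → ∃ c : F i, ∀ y : F j, q i (y : X) = c)
    (Y : Set X) (hY : Y.Nonempty) :
    (IsTreeSumOf (fun p : {i : I // (Y ∩ F i).Nonempty} =>
        ((fun y : Y => (y : X)) ⁻¹' F p.1)) ↔
      ((gluingGraph F).induce
        {v : I ⊕ ↥(gluingPoints F) |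
          Sum.elim (fun i => (Y ∩ F i).Nonempty) (fun s => (s : X) ∈ Y) v}).Connected) ∧
    (((gluingGraph F).induce
        {v : I ⊕ ↥(gluingPoints F) |
          Sum.elim (fun i => (Y ∩ F i).Nonempty) (fun s => (s : X) ∈ Y) v}).Connected ↔
      ∀ i : I, (Y ∩ F i).Nonempty → q i '' Y = {y : F i | (y : X) ∈ Y}) := by
  obtain ⟨hcover, hfinal, htree⟩ := h
  have hq' : TreeSum.IsRetractionFamily F q := hq
  refine ⟨⟨fun hsub => ((TreeSum.restrictIso F Y).isTree_iff.mp hsub.2.2).connected,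
    fun hconn => ?_⟩, fun hconn i hi => ?_, fun himage => ?_⟩
  · refine ⟨fun y => ?_, fun U => ⟨fun hU _ => hU.preimage continuous_subtype_val,
      TreeSum.isOpen_of_isOpen_restrict hcover (fun V => (hfinal V).mpr) htree.isAcyclic
        hconn.preconnected⟩,
      (TreeSum.restrictIso F Y).isTree_iff.mpr ⟨hconn, htree.isAcyclic.induce _⟩⟩
    obtain ⟨i, hi⟩ := hcover y
    exact ⟨⟨i, y, y.2, hi⟩, hi⟩
  · exact hq'.image_eq_iff_forall_coe_apply_mem.mpr fun y hy =>
      hq'.coe_apply_mem_of_preconnected hcover hconn.preconnected hi hy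
  · exact hq'.connected_of_forall_coe_apply_mem hcover htree.connected hY fun i hi =>
      hq'.image_eq_iff_forall_coe_apply_mem.mp (himage i hi)
end

section
/- Let X be a tree sum of spaces (X_i)_{i∈I}. X is T1 (resp. T2, regular, completely regular, zero-dimensional, T0, Urysohn, functionally Hausdorff, totally separated) if and only if every X_i is. -/
/-- A space is zero-dimensional: every point can be separated from every closed set not
containing it by a clopen set. -/
def ZeroDimensional (Y : Type*) [TopologicalSpace Y] : Prop :=
  ∀ x : Y, ∀ C : Set Y, IsClosed C → x ∉ C → ∃ U : Set Y, IsClopen U ∧ x ∈ U ∧ C ⊆ Uᶜ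

/-- A space is functionally Hausdorff if distinct points are separated by a continuous
real-valued function. -/
def FunctionallyHausdorff (Y : Type*) [TopologicalSpace Y] : Prop :=
  ∀ x y : Y, x ≠ y → ∃ f : Y → ℝ, Continuous f ∧ f x ≠ f y

namespace TreeSumAux

open SimpleGraph Set

variable {X I : Type*} {F : I → Set X}

lemma gg_adj_inl_inr {i : I} {s : ↥(gluingPoints F)} :
    (gluingGraph F).Adj (Sum.inl i) (Sum.inr s) ↔ (s : X) ∈ F i := by
  rw [gluingGraph, SimpleGraph.fromRel_adj]
  constructor
  · rintro ⟨-, ⟨i', s', h1, h2, h3⟩ | ⟨i', s', h1, h2, h3⟩⟩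
    · rw [Sum.inl.injEq] at h1; rw [Sum.inr.injEq] at h2; subst h1; subst h2; exact h3
    · exact absurd h2 (by simp)
  · intro hs
    exact ⟨by simp, Or.inl ⟨i, s, rfl, rfl, hs⟩⟩

lemma gg_adj_cases {a b : I ⊕ ↥(gluingPoints F)} (h : (gluingGraph F).Adj a b) :
    (∃ (i : I) (s : ↥(gluingPoints F)), a = Sum.inl i ∧ b = Sum.inr s ∧ (s : X) ∈ F i) ∨
    (∃ (i : I) (s : ↥(gluingPoints F)), a = Sum.inr s ∧ b = Sum.inl i ∧ (s : X) ∈ F i) := by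
  rw [gluingGraph, SimpleGraph.fromRel_adj] at h
  rcases h.2 with ⟨i, s, h1, h2, h3⟩ | ⟨i, s, h1, h2, h3⟩
  · exact Or.inl ⟨i, s, h1, h2, h3⟩
  · exact Or.inr ⟨i, s, h2, h1, h3⟩

lemma adj_of_inl {i : I} {b : I ⊕ ↥(gluingPoints F)} (h : (gluingGraph F).Adj (Sum.inl i) b) :
    ∃ s : ↥(gluingPoints F), b = Sum.inr s ∧ (s : X) ∈ F i := by
  rcases gg_adj_cases h with ⟨i', s, h1, h2, h3⟩ | ⟨i', s, h1, h2, h3⟩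
  · rw [Sum.inl.injEq] at h1; subst h1; exact ⟨s, h2, h3⟩
  · exact absurd h1 (by simp)

lemma adj_of_inr {s : ↥(gluingPoints F)} {b : I ⊕ ↥(gluingPoints F)}
    (h : (gluingGraph F).Adj (Sum.inr s) b) :
    ∃ i : I, b = Sum.inl i ∧ (s : X) ∈ F i := by
  rcases gg_adj_cases h with ⟨i', s', h1, h2, h3⟩ | ⟨i', s', h1, h2, h3⟩
  · exact absurd h1 (by simp)
  · rw [Sum.inr.injEq] at h1; subst h1; exact ⟨i', h2, h3⟩

variable (hT : (gluingGraph F).IsTree)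

/-- the unique path between two vertices of the gluing graph -/
noncomputable def pth (u v : I ⊕ ↥(gluingPoints F)) : (gluingGraph F).Walk u v :=
  (hT.existsUnique_path u v).choose

lemma pth_isPath (u v : I ⊕ ↥(gluingPoints F)) : (pth hT u v).IsPath :=
  (hT.existsUnique_path u v).choose_spec.1

lemma pth_unique {u v : I ⊕ ↥(gluingPoints F)} {p : (gluingGraph F).Walk u v}
    (hp : p.IsPath) : p = pth hT u v :=
  (hT.existsUnique_path u v).choose_spec.2 p hp

lemma pth_self (u : I ⊕ ↥(gluingPoints F)) : pth hT u u = SimpleGraph.Walk.nil :=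
  (pth_unique hT SimpleGraph.Walk.IsPath.nil).symm

lemma pth_reverse (u v : I ⊕ ↥(gluingPoints F)) :
    (pth hT u v).reverse = pth hT v u :=
  pth_unique hT (pth_isPath hT u v).reverse

/-- penultimate vertex of a walk -/
def pen {V : Type*} {G : SimpleGraph V} {u v : V} (p : G.Walk u v) : V :=
  p.getVert (p.length - 1)

lemma pen_cons {V : Type*} {G : SimpleGraph V} {u v w : V} (h : G.Adj u v)
    (p : G.Walk v w) (hvw : v ≠ w) : pen (SimpleGraph.Walk.cons h p) = pen p := by
  have hl : p.length ≠ 0 := by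
    intro h0
    exact hvw (p.eq_of_length_eq_zero h0)
  obtain ⟨k, hk⟩ : ∃ k, p.length = k + 1 := ⟨p.length - 1, by omega⟩
  unfold pen
  rw [SimpleGraph.Walk.length_cons, hk]
  simp only [Nat.add_sub_cancel]
  rw [SimpleGraph.Walk.getVert_cons_succ]

lemma pen_adj {V : Type*} {G : SimpleGraph V} {u v : V} (p : G.Walk u v) (h : u ≠ v) :
    G.Adj (pen p) v := by
  have hl : p.length ≠ 0 := fun h0 => h (p.eq_of_length_eq_zero h0)
  have := p.adj_getVert_succ (i := p.length - 1) (by omega)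
  rw [show p.length - 1 + 1 = p.length by omega, SimpleGraph.Walk.getVert_length] at this
  exact this

lemma pen_reverse {V : Type*} {G : SimpleGraph V} {u v : V} (p : G.Walk u v) (h : u ≠ v) :
    pen p.reverse = p.getVert 1 := by
  have hl : p.length ≠ 0 := fun h0 => h (p.eq_of_length_eq_zero h0)
  unfold pen
  rw [SimpleGraph.Walk.length_reverse, SimpleGraph.Walk.getVert_reverse]
  congr 1
  omega

/-- dichotomy for paths from two adjacent vertices to a common target in a tree -/
lemma path_dichotomy {u v t : I ⊕ ↥(gluingPoints F)} (h : (gluingGraph F).Adj u v) :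
    pth hT u t = SimpleGraph.Walk.cons h (pth hT v t) ∨
    pth hT v t = SimpleGraph.Walk.cons h.symm (pth hT u t) := by
  letI : DecidableEq (I ⊕ ↥(gluingPoints F)) := Classical.decEq _
  rcases Classical.em (u ∈ (pth hT v t).support) with hu | hu
  · right
    have h1 : ((pth hT v t).takeUntil u hu).IsPath := (pth_isPath hT v t).takeUntil hu
    have h2 : (SimpleGraph.Walk.cons h.symm SimpleGraph.Walk.nil :
        (gluingGraph F).Walk v u).IsPath := by
      rw [SimpleGraph.Walk.cons_isPath_iff]
      refine ⟨SimpleGraph.Walk.IsPath.nil, ?_⟩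
      simp [h.ne']
    have e1 : (pth hT v t).takeUntil u hu =
        SimpleGraph.Walk.cons h.symm SimpleGraph.Walk.nil := by
      rw [pth_unique hT h1]; exact (pth_unique hT h2).symm
    have h3 : (pth hT v t).dropUntil u hu = pth hT u t :=
      pth_unique hT ((pth_isPath hT v t).dropUntil hu)
    have e2 := (pth hT v t).take_spec hu
    rw [e1, h3] at e2
    rw [← e2]
    simp [SimpleGraph.Walk.cons_append]
  · left
    refine (pth_unique hT ?_).symm
    rw [SimpleGraph.Walk.cons_isPath_iff]
    exact ⟨pth_isPath hT v t, hu⟩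

lemma pen_eq_of_adj {u v t : I ⊕ ↥(gluingPoints F)} (h : (gluingGraph F).Adj u v)
    (hu : u ≠ t) (hv : v ≠ t) :
    pen (pth hT u t) = pen (pth hT v t) := by
  rcases path_dichotomy hT h with e | e
  · rw [e, pen_cons _ _ hv]
  · rw [e, pen_cons _ _ hu]


section Ret

variable (hcov : ∀ x : X, ∃ i, x ∈ F i)

open Classical in
/-- A vertex of the gluing graph naturally associated to a point of `X`. -/
noncomputable def wv (z : X) : I ⊕ ↥(gluingPoints F) :=
  if hg : z ∈ gluingPoints F then Sum.inr ⟨z, hg⟩ else Sum.inl (hcov z).choose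

lemma pen_wv {i k : I} (hik : k ≠ i) {z : X} (hzk : z ∈ F k) (hzi : z ∉ F i) :
    pen (pth hT (wv hcov z) (Sum.inl i)) = pen (pth hT (Sum.inl k) (Sum.inl i)) := by
  rcases Classical.em (z ∈ gluingPoints F) with hg | hg
  · have hadj : (gluingGraph F).Adj (Sum.inl k) (Sum.inr ⟨z, hg⟩) := gg_adj_inl_inr.mpr hzk
    have hwv : wv hcov z = Sum.inr ⟨z, hg⟩ := by unfold wv; rw [dif_pos hg]
    rw [hwv]
    exact pen_eq_of_adj hT hadj.symm (by simp) (by simpa using hik)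
  · have hc : (hcov z).choose = k := by
      by_contra hne
      exact hg ⟨_, k, hne, (hcov z).choose_spec, hzk⟩
    have hwv : wv hcov z = Sum.inl k := by unfold wv; rw [dif_neg hg, hc]
    rw [hwv]

lemma pen_inl_inl {i k : I} (hik : k ≠ i) :
    ∃ s : ↥(gluingPoints F), pen (pth hT (Sum.inl k) (Sum.inl i)) = Sum.inr s ∧ (s : X) ∈ F i := by
  have hne : (Sum.inl k : I ⊕ ↥(gluingPoints F)) ≠ Sum.inl i := by simpa using hik
  have hadj := pen_adj (pth hT (Sum.inl k) (Sum.inl i)) hne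
  rcases gg_adj_cases hadj with ⟨i', s, h1, h2, h3⟩ | ⟨i', s, h1, h2, h3⟩
  · exact absurd h2 (by simp)
  · rw [Sum.inl.injEq] at h2; subst h2; exact ⟨s, h1, h3⟩

lemma pen_of_mem_both {i k : I} (hik : k ≠ i) {z : X} (hzk : z ∈ F k) (hzi : z ∈ F i) :
    pen (pth hT (Sum.inl k) (Sum.inl i)) =
      Sum.inr ⟨z, ⟨i, k, Ne.symm hik, hzi, hzk⟩⟩ := by
  set s : ↥(gluingPoints F) := ⟨z, ⟨i, k, Ne.symm hik, hzi, hzk⟩⟩ with hs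
  have ha1 : (gluingGraph F).Adj (Sum.inl k) (Sum.inr s) := gg_adj_inl_inr.mpr hzk
  have ha2 : (gluingGraph F).Adj (Sum.inr s) (Sum.inl i) := (gg_adj_inl_inr.mpr hzi).symm
  have hp : (SimpleGraph.Walk.cons ha1 (SimpleGraph.Walk.cons ha2 SimpleGraph.Walk.nil)).IsPath := by
    rw [SimpleGraph.Walk.cons_isPath_iff, SimpleGraph.Walk.cons_isPath_iff]
    refine ⟨⟨SimpleGraph.Walk.IsPath.nil, by simp⟩, ?_⟩
    simp [hik]
  rw [← pth_unique hT hp]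
  rfl

open Classical in
/-- retraction of the tree sum onto a summand (as a map to `X`) -/
noncomputable def ret0 (i : I) (z : X) : X :=
  if z ∈ F i then z
  else Sum.elim (fun _ : I => z) (fun s : ↥(gluingPoints F) => (s : X))
    (pen (pth hT (wv hcov z) (Sum.inl i)))

lemma ret0_of_mem {i : I} {z : X} (hz : z ∈ F i) : ret0 hT hcov i z = z := if_pos hz

lemma ret0_const {i k : I} (hik : k ≠ i) :
    ∃ s : ↥(gluingPoints F), (s : X) ∈ F i ∧ ∀ z ∈ F k, ret0 hT hcov i z = (s : X) := by
  obtain ⟨s, hpen, hsF⟩ := pen_inl_inl hT hik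
  refine ⟨s, hsF, fun z hz => ?_⟩
  unfold ret0
  split_ifs with hzi
  · have := pen_of_mem_both hT hik hz hzi
    rw [hpen] at this
    rw [Sum.inr.injEq] at this
    rw [this]
  · rw [pen_wv hT hcov hik hz hzi, hpen]
    rfl

lemma ret0_mem (i : I) (z : X) : ret0 hT hcov i z ∈ F i := by
  by_cases hzi : z ∈ F i
  · rw [ret0_of_mem hT hcov hzi]; exact hzi
  · obtain ⟨k, hk⟩ := hcov z
    have hik : k ≠ i := fun h => hzi (h ▸ hk)
    obtain ⟨s, hsF, hconst⟩ := ret0_const hT hcov hik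
    rw [hconst z hk]; exact hsF

/-- retraction of the tree sum onto a summand -/
noncomputable def ret (i : I) (z : X) : F i := ⟨ret0 hT hcov i z, ret0_mem hT hcov i z⟩

lemma ret_of_mem {i : I} {z : X} (hz : z ∈ F i) : ret hT hcov i z = ⟨z, hz⟩ :=
  Subtype.ext (ret0_of_mem hT hcov hz)

section Topo

variable [TopologicalSpace X]

lemma continuous_of_restrict
    (hopen : ∀ U : Set X, IsOpen U ↔ ∀ i, IsOpen ((fun y : F i => (y : X)) ⁻¹' U))
    {Y : Type*} [TopologicalSpace Y] {g : X → Y}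
    (hg : ∀ k, Continuous fun y : F k => g ↑y) : Continuous g := by
  rw [continuous_def]
  intro U hU
  rw [hopen]
  intro i
  exact (hg i).isOpen_preimage U hU

lemma ret_continuous
    (hopen : ∀ U : Set X, IsOpen U ↔ ∀ i, IsOpen ((fun y : F i => (y : X)) ⁻¹' U))
    (i : I) : Continuous (ret hT hcov i) := by
  apply continuous_of_restrict hopen
  intro k
  by_cases hk : k = i
  · subst hk
    have : (fun y : F k => ret hT hcov k ↑y) = id := funext fun y => ret_of_mem hT hcov y.2
    rw [this]; exact continuous_id
  · obtain ⟨s, hsF, hconst⟩ := ret0_const hT hcov hk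
    have : (fun y : F k => ret hT hcov i ↑y) = fun _ => (⟨(s : X), hsF⟩ : F i) :=
      funext fun y => Subtype.ext (hconst ↑y y.2)
    rw [this]; exact continuous_const

include hT hcov in
lemma master_sep
    (hopen : ∀ U : Set X, IsOpen U ↔ ∀ i, IsOpen ((fun y : F i => (y : X)) ⁻¹' U))
    {x y : X} (hxy : x ≠ y) :
    ∃ (i : I) (r : X → F i), Continuous r ∧ r x ≠ r y := by
  by_cases hcom : ∃ m, x ∈ F m ∧ y ∈ F m
  · obtain ⟨m, hxm, hym⟩ := hcom
    refine ⟨m, ret hT hcov m, ret_continuous hT hcov hopen m, ?_⟩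
    rw [ret_of_mem hT hcov hxm, ret_of_mem hT hcov hym]
    exact fun he => hxy (congrArg Subtype.val he)
  push_neg at hcom
  obtain ⟨i, hxi⟩ := hcov x
  obtain ⟨j, hyj⟩ := hcov y
  have hyi : y ∉ F i := fun hy => hcom i hxi hy
  have hxj : x ∉ F j := fun hx => hcom j hx hyj
  have hji : j ≠ i := fun h => hyi (h ▸ hyj)
  have hij : i ≠ j := fun h => hxj (h ▸ hxi)
  by_cases h1 : ret hT hcov i x ≠ ret hT hcov i y
  · exact ⟨i, ret hT hcov i, ret_continuous hT hcov hopen i, h1⟩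
  push_neg at h1
  obtain ⟨sx, hpenx, hsxFi⟩ := pen_inl_inl hT hji
  have hrx : (ret hT hcov i x : X) = x := by rw [ret_of_mem hT hcov hxi]
  have hry : (ret hT hcov i y : X) = (sx : X) := by
    show ret0 hT hcov i y = _
    unfold ret0
    rw [if_neg hyi, pen_wv hT hcov hji hyj hyi, hpenx]
    rfl
  have hsx : (sx : X) = x := by rw [← hry, ← h1, hrx]
  set p := pth hT (Sum.inl i : I ⊕ ↥(gluingPoints F)) (Sum.inl j) with hpdef
  have hne_ij : (Sum.inl i : I ⊕ ↥(gluingPoints F)) ≠ Sum.inl j := fun h => hij (Sum.inl.inj h)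
  have hv1 : p.getVert 1 = Sum.inr sx := by
    rw [← pen_reverse p hne_ij, hpdef, pth_reverse hT _ _, hpenx]
  obtain ⟨w1, ha1, p1, hp1⟩ := SimpleGraph.Walk.exists_eq_cons_of_ne hne_ij p
  have hw1 : w1 = Sum.inr sx := by
    rw [hp1] at hv1
    rwa [show (1 : ℕ) = 0 + 1 from rfl, SimpleGraph.Walk.getVert_cons_succ,
      SimpleGraph.Walk.getVert_zero] at hv1
  subst hw1
  have hne2 : (Sum.inr sx : I ⊕ ↥(gluingPoints F)) ≠ Sum.inl j := by simp
  obtain ⟨w2, ha2, p2, hp2⟩ := SimpleGraph.Walk.exists_eq_cons_of_ne hne2 p1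
  obtain ⟨k, hw2, hsxFk⟩ := adj_of_inr ha2
  subst hw2
  have hxFk : x ∈ F k := hsx ▸ hsxFk
  have hyFk : y ∉ F k := fun hyk => hcom k hxFk hyk
  have hkj : k ≠ j := fun h => hxj (h ▸ hxFk)
  have hjk : j ≠ k := fun h => hkj h.symm
  have hpp : p.IsPath := pth_isPath hT _ _
  rw [hp1, hp2, SimpleGraph.Walk.cons_isPath_iff, SimpleGraph.Walk.cons_isPath_iff] at hpp
  obtain ⟨⟨hp2path, hsxnot⟩, hinot⟩ := hpp
  have hp2eq : p2 = pth hT (Sum.inl k) (Sum.inl j) := pth_unique hT hp2path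
  obtain ⟨s', hpen', hs'Fk⟩ := pen_inl_inl hT hjk
  have hne_kj : (Sum.inl k : I ⊕ ↥(gluingPoints F)) ≠ Sum.inl j := fun h => hkj (Sum.inl.inj h)
  have hv1' : p2.getVert 1 = Sum.inr s' := by
    rw [← pen_reverse p2 hne_kj, hp2eq, pth_reverse hT _ _, hpen']
  have hlp2 : p2.length ≠ 0 := fun h0 => hne_kj (p2.eq_of_length_eq_zero h0)
  have hs'ne : s' ≠ sx := by
    intro he
    apply hsxnot
    rw [← he, ← hv1']
    exact SimpleGraph.Walk.mem_support_iff_exists_getVert.mpr ⟨1, rfl, by omega⟩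
  refine ⟨k, ret hT hcov k, ret_continuous hT hcov hopen k, ?_⟩
  intro he
  have hvy : (ret hT hcov k y : X) = (s' : X) := by
    show ret0 hT hcov k y = _
    unfold ret0
    rw [if_neg hyFk, pen_wv hT hcov hjk hyj hyFk, hpen']
    rfl
  have hvx : (ret hT hcov k x : X) = x := by rw [ret_of_mem hT hcov hxFk]
  have hfin : (s' : X) = x := by rw [← hvy, ← he, hvx]
  exact hs'ne (Subtype.ext (hfin.trans hsx.symm))

end Topo

end Ret


section Rec

variable (k0 : I)

include hT in
lemma step2 (i : I) (h : i ≠ k0) :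
    ∃ (k : I) (s : ↥(gluingPoints F)),
      (s : X) ∈ F i ∧ (s : X) ∈ F k ∧
      (pth hT (Sum.inl i) (Sum.inl k0)).getVert 1 = Sum.inr s ∧
      (pth hT (Sum.inl i) (Sum.inl k0)).getVert 2 = Sum.inl k ∧
      (pth hT (Sum.inl k) (Sum.inl k0)).length < (pth hT (Sum.inl i) (Sum.inl k0)).length := by
  have hne : (Sum.inl i : I ⊕ ↥(gluingPoints F)) ≠ Sum.inl k0 := fun he => h (Sum.inl.inj he)
  obtain ⟨w1, ha1, p1, hp1⟩ :=
    SimpleGraph.Walk.exists_eq_cons_of_ne hne (pth hT (Sum.inl i) (Sum.inl k0))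
  obtain ⟨s, hw1, hsFi⟩ := adj_of_inl ha1
  subst hw1
  have hne1 : (Sum.inr s : I ⊕ ↥(gluingPoints F)) ≠ Sum.inl k0 := by simp
  obtain ⟨w2, ha2, p2, hp2⟩ := SimpleGraph.Walk.exists_eq_cons_of_ne hne1 p1
  obtain ⟨k, hw2, hsFk⟩ := adj_of_inr ha2
  subst hw2
  have hpp := pth_isPath hT (Sum.inl i : I ⊕ ↥(gluingPoints F)) (Sum.inl k0)
  rw [hp1, hp2, SimpleGraph.Walk.cons_isPath_iff, SimpleGraph.Walk.cons_isPath_iff] at hpp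
  have hp2eq : p2 = pth hT (Sum.inl k) (Sum.inl k0) := pth_unique hT hpp.1.1
  refine ⟨k, s, hsFi, hsFk, ?_, ?_, ?_⟩
  · rw [hp1, show (1 : ℕ) = 0 + 1 from rfl, SimpleGraph.Walk.getVert_cons_succ,
      SimpleGraph.Walk.getVert_zero]
  · rw [hp1, hp2, show (2 : ℕ) = 1 + 1 from rfl, SimpleGraph.Walk.getVert_cons_succ,
      show (1 : ℕ) = 0 + 1 from rfl, SimpleGraph.Walk.getVert_cons_succ,
      SimpleGraph.Walk.getVert_zero]
  · rw [hp1, hp2, ← hp2eq]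
    simp only [SimpleGraph.Walk.length_cons]
    omega

/-- parent summand -/
noncomputable def par (i : I) (h : i ≠ k0) : I := (step2 hT k0 i h).choose

/-- gluing point towards the root -/
noncomputable def glu (i : I) (h : i ≠ k0) : ↥(gluingPoints F) :=
  (step2 hT k0 i h).choose_spec.choose

lemma parGlu_spec (i : I) (h : i ≠ k0) :
    ((glu hT k0 i h : X) ∈ F i) ∧ ((glu hT k0 i h : X) ∈ F (par hT k0 i h)) ∧
    (pth hT (Sum.inl i) (Sum.inl k0)).getVert 1 = Sum.inr (glu hT k0 i h) ∧
    (pth hT (Sum.inl i) (Sum.inl k0)).getVert 2 = Sum.inl (par hT k0 i h) ∧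
    (pth hT (Sum.inl (par hT k0 i h)) (Sum.inl k0)).length <
      (pth hT (Sum.inl i) (Sum.inl k0)).length :=
  (step2 hT k0 i h).choose_spec.choose_spec

open Classical in
/-- recursive construction of data along the tree -/
noncomputable def build {D : I → Type*} (d0 : D k0)
    (ext : ∀ (i j : I) (s : X), s ∈ F i → s ∈ F j → D j → D i) (i : I) : D i :=
  if h : i = k0 then cast (by rw [h]) d0
  else
    ext i (par hT k0 i h) ((glu hT k0 i h : X))
      (parGlu_spec hT k0 i h).1 (parGlu_spec hT k0 i h).2.1
      (build d0 ext (par hT k0 i h))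
termination_by (pth hT (Sum.inl i) (Sum.inl k0)).length
decreasing_by exact (parGlu_spec hT k0 i h).2.2.2.2

lemma build_root {D : I → Type*} (d0 : D k0)
    (ext : ∀ (i j : I) (s : X), s ∈ F i → s ∈ F j → D j → D i) :
    build hT k0 d0 ext k0 = d0 := by
  rw [build]
  simp

lemma build_spec {D : I → Type*} (d0 : D k0)
    (ext : ∀ (i j : I) (s : X), s ∈ F i → s ∈ F j → D j → D i) (i : I) (h : i ≠ k0) :
    build hT k0 d0 ext i =
      ext i (par hT k0 i h) ((glu hT k0 i h : X))
        (parGlu_spec hT k0 i h).1 (parGlu_spec hT k0 i h).2.1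
        (build hT k0 d0 ext (par hT k0 i h)) := by
  rw [build, dif_neg h]

include hT in
lemma step1 (s : ↥(gluingPoints F)) :
    ∃ k : I, (s : X) ∈ F k ∧
      (pth hT (Sum.inr s) (Sum.inl k0)).getVert 1 = Sum.inl k := by
  have hne : (Sum.inr s : I ⊕ ↥(gluingPoints F)) ≠ Sum.inl k0 := by simp
  obtain ⟨w1, ha1, p1, hp1⟩ :=
    SimpleGraph.Walk.exists_eq_cons_of_ne hne (pth hT (Sum.inr s) (Sum.inl k0))
  obtain ⟨k, hw1, hsFk⟩ := adj_of_inr ha1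
  subst hw1
  refine ⟨k, hsFk, ?_⟩
  rw [hp1, show (1 : ℕ) = 0 + 1 from rfl, SimpleGraph.Walk.getVert_cons_succ,
    SimpleGraph.Walk.getVert_zero]

/-- the summand owning a gluing point (towards the root) -/
noncomputable def own (s : ↥(gluingPoints F)) : I := (step1 hT k0 s).choose

lemma own_spec (s : ↥(gluingPoints F)) :
    (s : X) ∈ F (own hT k0 s) ∧
      (pth hT (Sum.inr s) (Sum.inl k0)).getVert 1 = Sum.inl (own hT k0 s) :=
  (step1 hT k0 s).choose_spec

include hT in
lemma exists_compat {B : Type*} {D : I → Type*} (val : ∀ i, D i → X → B) (d0 : D k0)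
    (hext : ∀ i j (s : X), s ∈ F i → s ∈ F j → ∀ dj : D j, ∃ di : D i, val i di s = val j dj s) :
    ∃ d : ∀ i, D i, d k0 = d0 ∧
      ∀ i j (z : X), z ∈ F i → z ∈ F j → val i (d i) z = val j (d j) z := by
  have hextc : ∀ i j (s : X) (hi : s ∈ F i) (hj : s ∈ F j) (dj : D j),
      val i ((hext i j s hi hj dj).choose) s = val j dj s :=
    fun i j s hi hj dj => (hext i j s hi hj dj).choose_spec
  set ext : ∀ (i j : I) (s : X), s ∈ F i → s ∈ F j → D j → D i :=
    fun i j s hi hj dj => (hext i j s hi hj dj).choose with hext_def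
  have key : ∀ (s : ↥(gluingPoints F)) (k : I), (s : X) ∈ F k →
      val k (build hT k0 d0 ext k) (s : X) =
        val (own hT k0 s) (build hT k0 d0 ext (own hT k0 s)) (s : X) := by
    intro s k hk
    by_cases hko : k = own hT k0 s
    · rw [hko]
    have hadj : (gluingGraph F).Adj (Sum.inl k) (Sum.inr s) := gg_adj_inl_inr.mpr hk
    rcases path_dichotomy hT (t := Sum.inl k0) hadj with e | e
    · have hk0 : k ≠ k0 := by
        intro hkk0; subst hkk0
        rw [pth_self hT _] at e
        simpa using congrArg SimpleGraph.Walk.length e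
      have h1 : (pth hT (Sum.inl k) (Sum.inl k0)).getVert 1 = Sum.inr s := by
        rw [e, show (1 : ℕ) = 0 + 1 from rfl, SimpleGraph.Walk.getVert_cons_succ,
          SimpleGraph.Walk.getVert_zero]
      have h2 : (pth hT (Sum.inl k) (Sum.inl k0)).getVert 2 = Sum.inl (own hT k0 s) := by
        rw [e, show (2 : ℕ) = 1 + 1 from rfl, SimpleGraph.Walk.getVert_cons_succ]
        exact (own_spec hT k0 s).2
      have hglu : glu hT k0 k hk0 = s := by
        have hg := (parGlu_spec hT k0 k hk0).2.2.1
        rw [h1] at hg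
        exact (Sum.inr.inj hg).symm
      have hglu' : (glu hT k0 k hk0 : X) = (s : X) := congrArg Subtype.val hglu
      have hpar : par hT k0 k hk0 = own hT k0 s := by
        have hg := (parGlu_spec hT k0 k hk0).2.2.2.1
        rw [h2] at hg
        exact (Sum.inl.inj hg).symm
      have hb := build_spec hT k0 d0 ext k hk0
      calc val k (build hT k0 d0 ext k) (s : X)
          = val k (build hT k0 d0 ext k) ((glu hT k0 k hk0 : X)) := by rw [hglu']
        _ = val (par hT k0 k hk0) (build hT k0 d0 ext (par hT k0 k hk0))
              ((glu hT k0 k hk0 : X)) := by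
            rw [hb]
            exact hextc k (par hT k0 k hk0) _ (parGlu_spec hT k0 k hk0).1
              (parGlu_spec hT k0 k hk0).2.1 _
        _ = val (own hT k0 s) (build hT k0 d0 ext (own hT k0 s))
              ((glu hT k0 k hk0 : X)) := by rw [hpar]
        _ = val (own hT k0 s) (build hT k0 d0 ext (own hT k0 s)) (s : X) := by rw [hglu']
    · exfalso
      apply hko
      have h1 : (pth hT (Sum.inr s) (Sum.inl k0)).getVert 1 = Sum.inl k := by
        rw [e, show (1 : ℕ) = 0 + 1 from rfl, SimpleGraph.Walk.getVert_cons_succ,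
          SimpleGraph.Walk.getVert_zero]
      have h2 := (own_spec hT k0 s).2
      rw [h1] at h2
      exact (Sum.inl.inj h2)
  refine ⟨build hT k0 d0 ext, build_root hT k0 d0 ext, ?_⟩
  intro i j z hi hj
  by_cases hij : i = j
  · subst hij; rfl
  · have hz : z ∈ gluingPoints F := ⟨i, j, hij, hi, hj⟩
    exact (key ⟨z, hz⟩ i hi).trans (key ⟨z, hz⟩ j hj).symm

end Rec


section Assemble

variable [TopologicalSpace X]

lemma trace_preimage {V : I → Set X} (hVF : ∀ i, V i ⊆ F i)
    (compat : ∀ i j z, z ∈ F i → z ∈ F j → (z ∈ V i ↔ z ∈ V j)) (i : I) :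
    ((fun y : F i => (y : X)) ⁻¹' (⋃ j, V j)) = ((fun y : F i => (y : X)) ⁻¹' (V i)) := by
  ext y
  simp only [Set.mem_preimage, Set.mem_iUnion]
  constructor
  · rintro ⟨j, hj⟩
    exact (compat i j ↑y y.2 (hVF j hj)).mpr hj
  · intro hv
    exact ⟨i, hv⟩

lemma isOpen_glued
    (hopen : ∀ U : Set X, IsOpen U ↔ ∀ i, IsOpen ((fun y : F i => (y : X)) ⁻¹' U))
    {V : I → Set X} (hVF : ∀ i, V i ⊆ F i)
    (compat : ∀ i j z, z ∈ F i → z ∈ F j → (z ∈ V i ↔ z ∈ V j))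
    (hV : ∀ i, IsOpen ((fun y : F i => (y : X)) ⁻¹' (V i))) : IsOpen (⋃ j, V j) := by
  rw [hopen]
  intro i
  rw [trace_preimage hVF compat i]
  exact hV i

lemma isClosed_glued
    (hopen : ∀ U : Set X, IsOpen U ↔ ∀ i, IsOpen ((fun y : F i => (y : X)) ⁻¹' U))
    {V : I → Set X} (hVF : ∀ i, V i ⊆ F i)
    (compat : ∀ i j z, z ∈ F i → z ∈ F j → (z ∈ V i ↔ z ∈ V j))
    (hV : ∀ i, IsClosed ((fun y : F i => (y : X)) ⁻¹' (V i))) : IsClosed (⋃ j, V j) := by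
  rw [← isOpen_compl_iff, hopen]
  intro i
  have he : (fun y : F i => (y : X)) ⁻¹' (⋃ j, V j)ᶜ =
      ((fun y : F i => (y : X)) ⁻¹' (⋃ j, V j))ᶜ := rfl
  rw [he, trace_preimage hVF compat i]
  exact (hV i).isOpen_compl

end Assemble

end TreeSumAux



open TreeSumAux

/-- a tree sum is T1 (resp. T2, regular, completely regular,
zero-dimensional, T0, Urysohn, functionally Hausdorff, totally separated) iff every
summand is. -/
theorem stmt_13 {X I : Type*} [TopologicalSpace X] (F : I → Set X)
    (h : IsTreeSumOf F) :
    (T1Space X ↔ ∀ i, T1Space (F i)) ∧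
    (T2Space X ↔ ∀ i, T2Space (F i)) ∧
    (RegularSpace X ↔ ∀ i, RegularSpace (F i)) ∧
    (CompletelyRegularSpace X ↔ ∀ i, CompletelyRegularSpace (F i)) ∧
    (ZeroDimensional X ↔ ∀ i, ZeroDimensional (F i)) ∧
    (T0Space X ↔ ∀ i, T0Space (F i)) ∧
    (T25Space X ↔ ∀ i, T25Space (F i)) ∧
    (FunctionallyHausdorff X ↔ ∀ i, FunctionallyHausdorff (F i)) ∧
    (TotallySeparatedSpace X ↔ ∀ i, TotallySeparatedSpace (F i)) := by
  classical
  obtain ⟨hcov, hopen, hT⟩ := h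
  have pT1 : T1Space X ↔ ∀ i, T1Space (F i) := by
    constructor
    · intro _ i
      exact inferInstance
    · intro hi
      refine ⟨fun z => ?_⟩
      rw [← isOpen_compl_iff, hopen]
      intro i
      haveI := hi i
      have hss : Set.Subsingleton ((fun y : F i => (y : X)) ⁻¹' {z}) := by
        intro a ha b hb
        exact Subtype.ext ((Set.mem_singleton_iff.mp ha).trans
          (Set.mem_singleton_iff.mp hb).symm)
      have he : (fun y : F i => (y : X)) ⁻¹' ({z}ᶜ) =
          ((fun y : F i => (y : X)) ⁻¹' {z})ᶜ := rfl
      rw [he]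
      exact hss.isClosed.isOpen_compl
  have pT2 : T2Space X ↔ ∀ i, T2Space (F i) := by
    constructor
    · intro _ i
      exact inferInstance
    · intro hi
      refine ⟨fun x y hxy => ?_⟩
      obtain ⟨i, r, hr, hne⟩ := master_sep hT hcov hopen hxy
      haveI := hi i
      obtain ⟨u, v, hu, hv, hxu, hyv, huv⟩ := t2_separation hne
      exact ⟨r ⁻¹' u, r ⁻¹' v, hu.preimage hr, hv.preimage hr, hxu, hyv, huv.preimage r⟩
  have pT0 : T0Space X ↔ ∀ i, T0Space (F i) := by
    constructor
    · intro _ i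
      exact inferInstance
    · intro hi
      refine ⟨fun x y hins => ?_⟩
      by_contra hxy
      obtain ⟨i, r, hr, hne⟩ := master_sep hT hcov hopen hxy
      haveI := hi i
      exact hne ((hins.map hr).eq)
  have pT25 : T25Space X ↔ ∀ i, T25Space (F i) := by
    constructor
    · intro _ i
      exact inferInstance
    · intro hi
      refine ⟨fun x y hxy => ?_⟩
      obtain ⟨i, r, hr, hne⟩ := master_sep hT hcov hopen hxy
      haveI := hi i
      have hd := T25Space.t2_5 hne
      rw [Filter.disjoint_iff] at hd
      obtain ⟨A, hA, B, hB, hAB⟩ := hd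
      obtain ⟨tA, htA, htAs⟩ := (Filter.mem_lift'_sets (monotone_closure _)).mp hA
      obtain ⟨tB, htB, htBs⟩ := (Filter.mem_lift'_sets (monotone_closure _)).mp hB
      rw [Filter.disjoint_iff]
      refine ⟨closure (r ⁻¹' tA),
        Filter.mem_lift' (hr.continuousAt.preimage_mem_nhds htA),
        closure (r ⁻¹' tB),
        Filter.mem_lift' (hr.continuousAt.preimage_mem_nhds htB), ?_⟩
      have h1 : closure (r ⁻¹' tA) ⊆ r ⁻¹' A :=
        (hr.closure_preimage_subset tA).trans (Set.preimage_mono htAs)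
      have h2 : closure (r ⁻¹' tB) ⊆ r ⁻¹' B :=
        (hr.closure_preimage_subset tB).trans (Set.preimage_mono htBs)
      exact (hAB.preimage r).mono h1 h2
  have pFH : FunctionallyHausdorff X ↔ ∀ i, FunctionallyHausdorff (F i) := by
    constructor
    · intro hFH i x y hxy
      obtain ⟨f, hf, hne⟩ := hFH ↑x ↑y (fun he => hxy (Subtype.ext he))
      exact ⟨f ∘ Subtype.val, hf.comp continuous_subtype_val, hne⟩
    · intro hi x y hxy
      obtain ⟨i, r, hr, hne⟩ := master_sep hT hcov hopen hxy
      obtain ⟨f, hf, hfne⟩ := hi i (r x) (r y) hne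
      exact ⟨f ∘ r, hf.comp hr, hfne⟩
  have pTS : TotallySeparatedSpace X ↔ ∀ i, TotallySeparatedSpace (F i) := by
    constructor
    · intro hts i
      refine ⟨fun x _ y _ hxy => ?_⟩
      have hvne : (x : X) ≠ (y : X) := fun he => hxy (Subtype.ext he)
      obtain ⟨u, v, hu, hv, hxu, hyv, hcover, huv⟩ :=
        hts.isTotallySeparated_univ (Set.mem_univ (x : X)) (Set.mem_univ (y : X)) hvne
      refine ⟨(fun y : F i => (y : X)) ⁻¹' u, (fun y : F i => (y : X)) ⁻¹' v,
        hu.preimage continuous_subtype_val, hv.preimage continuous_subtype_val,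
        hxu, hyv, ?_, huv.preimage _⟩
      intro w _
      exact hcover (Set.mem_univ (w : X))
    · intro hi
      refine ⟨fun x _ y _ hxy => ?_⟩
      obtain ⟨i, r, hr, hne⟩ := master_sep hT hcov hopen hxy
      haveI := hi i
      obtain ⟨u, v, hu, hv, hxu, hyv, hcover, huv⟩ :=
        TotallySeparatedSpace.isTotallySeparated_univ (Set.mem_univ (r x))
          (Set.mem_univ (r y)) hne
      refine ⟨r ⁻¹' u, r ⁻¹' v, hu.preimage hr, hv.preimage hr, hxu, hyv, ?_,
        huv.preimage r⟩
      intro w _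
      exact hcover (Set.mem_univ (r w))
  have pReg : RegularSpace X ↔ ∀ i, RegularSpace (F i) := by
    constructor
    · intro _ i
      exact inferInstance
    · intro hi
      refine ⟨fun {C} {a} hC haC => ?_⟩
      obtain ⟨k0, hak0⟩ := hcov a
      set D : I → Type _ := fun i => {q : Set X × Set X // q.1 ⊆ F i ∧ q.2 ⊆ F i ∧
        IsOpen ((fun y : F i => (y : X)) ⁻¹' q.1) ∧
        IsClosed ((fun y : F i => (y : X)) ⁻¹' q.2) ∧
        q.1 ⊆ q.2 ∧ q.2 ∩ C = ∅} with hD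
      have mk1 : ∀ (i : I) (s : X) (hs : s ∈ F i), s ∉ C →
          ∃ q : D i, s ∈ q.1.1 ∧ s ∈ q.1.2 := by
        intro i s hsF hsC
        haveI := hi i
        have hKc : IsClosed ((fun y : F i => (y : X)) ⁻¹' C) :=
          hC.preimage continuous_subtype_val
        have hmem : ((fun y : F i => (y : X)) ⁻¹' C)ᶜ ∈ nhds (⟨s, hsF⟩ : F i) :=
          hKc.isOpen_compl.mem_nhds (by simpa using hsC)
        obtain ⟨t, htm, htc, hts⟩ := exists_mem_nhds_isClosed_subset hmem
        refine ⟨⟨(Subtype.val '' interior t, Subtype.val '' t), ?_, ?_, ?_, ?_, ?_, ?_⟩, ?_, ?_⟩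
        · rintro _ ⟨y, -, rfl⟩; exact y.2
        · rintro _ ⟨y, -, rfl⟩; exact y.2
        · rw [show ((fun y : F i => (y : X)) ⁻¹' (Subtype.val '' interior t)) = interior t from
            Set.preimage_image_eq _ Subtype.val_injective]
          exact isOpen_interior
        · rw [show ((fun y : F i => (y : X)) ⁻¹' (Subtype.val '' t)) = t from
            Set.preimage_image_eq _ Subtype.val_injective]
          exact htc
        · exact Set.image_mono interior_subset
        · rw [Set.eq_empty_iff_forall_notMem]
          rintro z ⟨⟨y, hyt, rfl⟩, hzC⟩
          exact (hts hyt) hzC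
        · exact ⟨⟨s, hsF⟩, mem_interior_iff_mem_nhds.mpr htm, rfl⟩
        · exact ⟨⟨s, hsF⟩, mem_of_mem_nhds htm, rfl⟩
      set valP : ∀ i, D i → X → Prop × Prop :=
        fun i q z => ((z ∈ q.1.1 : Prop), (z ∈ q.1.2 : Prop)) with hvalP
      have hemp : ∀ i : I, ∃ q : D i, q.1.1 = ∅ ∧ q.1.2 = ∅ := by
        intro i
        refine ⟨⟨(∅, ∅), ?_, ?_, ?_, ?_, ?_, ?_⟩, rfl, rfl⟩ <;> simp
      have hext : ∀ (i j : I) (s : X), s ∈ F i → s ∈ F j → ∀ dj : D j,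
          ∃ di : D i, valP i di s = valP j dj s := by
        intro i j s hsi hsj dj
        by_cases h2 : s ∈ dj.1.2
        · have hsC : s ∉ C := by
            intro hc
            have h0 := dj.2.2.2.2.2.2
            rw [Set.eq_empty_iff_forall_notMem] at h0
            exact h0 s ⟨h2, hc⟩
          obtain ⟨q, hq1, hq2⟩ := mk1 i s hsi hsC
          by_cases h1 : s ∈ dj.1.1
          · refine ⟨q, ?_⟩
            simp only [hvalP, Prod.mk.injEq]
            exact ⟨propext (iff_of_true hq1 h1), propext (iff_of_true hq2 h2)⟩
          · refine ⟨⟨(∅, q.1.2), by simp, q.2.2.1, by simp, q.2.2.2.2.1,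
              Set.empty_subset _, q.2.2.2.2.2.2⟩, ?_⟩
            simp only [hvalP, Prod.mk.injEq]
            exact ⟨propext (iff_of_false (Set.notMem_empty s) h1),
              propext (iff_of_true hq2 h2)⟩
        · have h1 : s ∉ dj.1.1 := fun hx => h2 (dj.2.2.2.2.2.1 hx)
          obtain ⟨q0, he1, he2⟩ := hemp i
          refine ⟨q0, ?_⟩
          simp only [hvalP, Prod.mk.injEq]
          rw [he1, he2]
          exact ⟨propext (iff_of_false (Set.notMem_empty s) h1),
            propext (iff_of_false (Set.notMem_empty s) h2)⟩
      obtain ⟨d0, hd01, hd02⟩ := mk1 k0 a hak0 haC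
      obtain ⟨d, hdroot, hdcompat⟩ := exists_compat hT k0 valP d0 hext
      have compat1 : ∀ i j z, z ∈ F i → z ∈ F j →
          ((z ∈ (d i).1.1) ↔ (z ∈ (d j).1.1)) := by
        intro i j z hzi hzj
        exact iff_of_eq (congrArg Prod.fst (hdcompat i j z hzi hzj))
      have compat2 : ∀ i j z, z ∈ F i → z ∈ F j →
          ((z ∈ (d i).1.2) ↔ (z ∈ (d j).1.2)) := by
        intro i j z hzi hzj
        exact iff_of_eq (congrArg Prod.snd (hdcompat i j z hzi hzj))
      have hVopen : IsOpen (⋃ i, (d i).1.1) :=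
        isOpen_glued hopen (fun i => (d i).2.1) compat1 (fun i => (d i).2.2.2.1)
      have hWclosed : IsClosed (⋃ i, (d i).1.2) :=
        isClosed_glued hopen (fun i => (d i).2.2.1) compat2 (fun i => (d i).2.2.2.2.1)
      have haV : a ∈ ⋃ i, (d i).1.1 := Set.mem_iUnion.mpr ⟨k0, by rw [hdroot]; exact hd01⟩
      have hVW : (⋃ i, (d i).1.1) ⊆ ⋃ i, (d i).1.2 := by
        intro z hz
        obtain ⟨i, hi'⟩ := Set.mem_iUnion.mp hz
        exact Set.mem_iUnion.mpr ⟨i, (d i).2.2.2.2.2.1 hi'⟩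
      have hCW : C ⊆ (⋃ i, (d i).1.2)ᶜ := by
        intro z hzC hzW
        obtain ⟨i, hi'⟩ := Set.mem_iUnion.mp hzW
        have h0 := (d i).2.2.2.2.2.2
        rw [Set.eq_empty_iff_forall_notMem] at h0
        exact h0 z ⟨hi', hzC⟩
      rw [Filter.disjoint_iff]
      exact ⟨(⋃ i, (d i).1.2)ᶜ, hWclosed.isOpen_compl.mem_nhdsSet.mpr hCW,
        ⋃ i, (d i).1.1, hVopen.mem_nhds haV,
        Set.disjoint_left.mpr fun z hzc hzV => hzc (hVW hzV)⟩
  have pCR : CompletelyRegularSpace X ↔ ∀ i, CompletelyRegularSpace (F i) := by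
    constructor
    · intro hcr i
      refine ⟨fun x K hK hxK => ?_⟩
      obtain ⟨D', hD'c, hD'e⟩ := isClosed_induced_iff.mp hK
      have hxD : (x : X) ∉ D' := fun hx => hxK (by rw [← hD'e]; exact hx)
      obtain ⟨f, hf, hf0, hf1⟩ := hcr.completely_regular ↑x D' hD'c hxD
      exact ⟨f ∘ Subtype.val, hf.comp continuous_subtype_val, hf0,
        fun y hy => hf1 (by rw [← hD'e] at hy; exact hy)⟩
    · intro hi
      refine ⟨fun x C hC hxC => ?_⟩
      obtain ⟨k0, hxk0⟩ := hcov x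
      set D : I → Type _ := fun i => {f : F i → ℝ // Continuous f ∧
        (∀ y, f y ∈ Set.Icc (0:ℝ) 1) ∧ ∀ y : F i, (y : X) ∈ C → f y = 1} with hD
      have mk1 : ∀ (i : I) (s : X) (hs : s ∈ F i) (c : ℝ), c ∈ Set.Icc (0:ℝ) 1 →
          (s ∈ C → c = 1) → ∃ f : D i, f.1 ⟨s, hs⟩ = c := by
        intro i s hs c hc hsc
        haveI := hi i
        rw [Set.mem_Icc] at hc
        by_cases hCs : s ∈ C
        · exact ⟨⟨fun _ => 1, continuous_const, fun y => by norm_num, fun y _ => rfl⟩,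
            (hsc hCs).symm⟩
        · obtain ⟨g, hgc, hg0, hg1⟩ := CompletelyRegularSpace.completely_regular
            (⟨s, hs⟩ : F i) ((fun y : F i => (y : X)) ⁻¹' C)
            (hC.preimage continuous_subtype_val) (by simpa using hCs)
          refine ⟨⟨fun y => c + (1 - c) * ((g y : ℝ)), ?_, ?_, ?_⟩, ?_⟩
          · exact continuous_const.add (continuous_const.mul
              (continuous_subtype_val.comp hgc))
          · intro y
            have hb := (g y).2
            rw [Set.mem_Icc] at hb
            have hgoal : c + (1 - c) * ((g y : ℝ)) ∈ Set.Icc (0:ℝ) 1 := by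
              rw [Set.mem_Icc]
              constructor
              · nlinarith [hb.1, hb.2, hc.1, hc.2]
              · nlinarith [hb.1, hb.2, hc.1, hc.2]
            exact hgoal
          · intro y hy
            have h1 : g y = 1 := hg1 (show y ∈ _ from hy)
            have hcoe : ((g y : ℝ)) = 1 := by rw [h1]; rfl
            show c + (1 - c) * ((g y : ℝ)) = 1
            rw [hcoe]; ring
          · have hcoe : ((g ⟨s, hs⟩ : ℝ)) = 0 := by rw [hg0]; rfl
            show c + (1 - c) * ((g ⟨s, hs⟩ : ℝ)) = c
            rw [hcoe]; ring
      set valP : ∀ i, D i → X → ℝ :=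
        fun i f z => if h : z ∈ F i then f.1 ⟨z, h⟩ else 0 with hvalP
      have hext : ∀ (i j : I) (s : X), s ∈ F i → s ∈ F j → ∀ fj : D j,
          ∃ fi : D i, valP i fi s = valP j fj s := by
        intro i j s hsi hsj fj
        obtain ⟨fi, hfi⟩ := mk1 i s hsi (fj.1 ⟨s, hsj⟩) (fj.2.2.1 _) (fun hsC => fj.2.2.2 _ hsC)
        refine ⟨fi, ?_⟩
        simp only [hvalP]
        rw [dif_pos hsi, dif_pos hsj, hfi]
      obtain ⟨f0, hf0⟩ := mk1 k0 x hxk0 0 (by norm_num) (fun hc => absurd hc hxC)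
      obtain ⟨d, hdroot, hdcompat⟩ := exists_compat hT k0 valP f0 hext
      set g : X → ℝ := fun z => (d (hcov z).choose).1 ⟨z, (hcov z).choose_spec⟩ with hg
      have hgres : ∀ (i : I) (y : F i), g ↑y = (d i).1 y := by
        intro i y
        have hc := hdcompat i ((hcov (↑y : X)).choose) ↑y y.2 (hcov (↑y : X)).choose_spec
        simp only [hvalP] at hc
        rw [dif_pos y.2, dif_pos (hcov (↑y : X)).choose_spec] at hc
        exact hc.symm
      have hgcont : Continuous g := by
        apply continuous_of_restrict hopen
        intro k
        have he : (fun y : F k => g ↑y) = (d k).1 := funext fun y => hgres k y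
        rw [he]
        exact (d k).2.1
      refine ⟨fun z => ⟨g z, ?_⟩, ?_, ?_, ?_⟩
      · exact (d (hcov z).choose).2.2.1 _
      · exact hgcont.subtype_mk _
      · apply Subtype.ext
        show g x = _
        rw [hgres k0 ⟨x, hxk0⟩, hdroot, hf0]
        rfl
      · intro z hz
        apply Subtype.ext
        show g z = _
        rw [hgres ((hcov z).choose) ⟨z, (hcov z).choose_spec⟩]
        exact (d (hcov z).choose).2.2.2 _ hz
  have pZD : ZeroDimensional X ↔ ∀ i, ZeroDimensional (F i) := by
    constructor
    · intro hzd i x C hC hxC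
      obtain ⟨D', hD'c, hD'e⟩ := isClosed_induced_iff.mp hC
      have hxD : (x : X) ∉ D' := fun hx => hxC (by rw [← hD'e]; exact hx)
      obtain ⟨U, hU, hxU, hCU⟩ := hzd ↑x D' hD'c hxD
      refine ⟨(fun y : F i => (y : X)) ⁻¹' U,
        ⟨hU.1.preimage continuous_subtype_val, hU.2.preimage continuous_subtype_val⟩, hxU, ?_⟩
      intro y hyC hyU
      exact hCU (by rw [← hD'e] at hyC; exact hyC) hyU
    · intro hi x C hC hxC
      obtain ⟨k0, hxk0⟩ := hcov x
      set D : I → Type _ := fun i => {A : Set X // A ⊆ F i ∧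
        IsClopen ((fun y : F i => (y : X)) ⁻¹' A) ∧ A ∩ C = ∅} with hD
      have mk1 : ∀ (i : I) (s : X) (hs : s ∈ F i), s ∉ C → ∃ A : D i, s ∈ A.1 := by
        intro i s hsF hsC
        have hKc : IsClosed ((fun y : F i => (y : X)) ⁻¹' C) :=
          hC.preimage continuous_subtype_val
        obtain ⟨U, hU, hxU, hCU⟩ := hi i ⟨s, hsF⟩ _ hKc (by simpa using hsC)
        refine ⟨⟨Subtype.val '' U, ?_, ?_, ?_⟩, ?_⟩
        · rintro _ ⟨y, -, rfl⟩; exact y.2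
        · rw [show ((fun y : F i => (y : X)) ⁻¹' (Subtype.val '' U)) = U from
            Set.preimage_image_eq _ Subtype.val_injective]
          exact hU
        · rw [Set.eq_empty_iff_forall_notMem]
          rintro z ⟨⟨y, hyU, rfl⟩, hzC⟩
          exact hCU (by simpa using hzC) hyU
        · exact ⟨⟨s, hsF⟩, hxU, rfl⟩
      set valP : ∀ i, D i → X → Prop := fun i A z => (z ∈ A.1 : Prop) with hvalP
      have hext : ∀ (i j : I) (s : X), s ∈ F i → s ∈ F j → ∀ dj : D j,
          ∃ di : D i, valP i di s = valP j dj s := by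
        intro i j s hsi hsj dj
        by_cases h1 : s ∈ dj.1
        · have hsC : s ∉ C := by
            intro hc
            have h0 := dj.2.2.2
            rw [Set.eq_empty_iff_forall_notMem] at h0
            exact h0 s ⟨h1, hc⟩
          obtain ⟨A, hA⟩ := mk1 i s hsi hsC
          exact ⟨A, propext (iff_of_true hA h1)⟩
        · refine ⟨⟨∅, Set.empty_subset _, by
            rw [Set.preimage_empty]; exact isClopen_empty, by simp⟩,
            propext (iff_of_false (Set.notMem_empty s) h1)⟩
      obtain ⟨d0, hd0⟩ := mk1 k0 x hxk0 hxC
      obtain ⟨d, hdroot, hdcompat⟩ := exists_compat hT k0 valP d0 hext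
      have compat : ∀ i j z, z ∈ F i → z ∈ F j → ((z ∈ (d i).1) ↔ (z ∈ (d j).1)) :=
        fun i j z hzi hzj => iff_of_eq (hdcompat i j z hzi hzj)
      refine ⟨⋃ i, (d i).1,
        ⟨isClosed_glued hopen (fun i => (d i).2.1) compat (fun i => ((d i).2.2.1).1),
         isOpen_glued hopen (fun i => (d i).2.1) compat (fun i => ((d i).2.2.1).2)⟩,
        Set.mem_iUnion.mpr ⟨k0, by rw [hdroot]; exact hd0⟩, ?_⟩
      intro z hzC hzU
      obtain ⟨i, hi'⟩ := Set.mem_iUnion.mp hzU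
      have h0 := (d i).2.2.2
      rw [Set.eq_empty_iff_forall_notMem] at h0
      exact h0 z ⟨hi', hzC⟩
  exact ⟨pT1, pT2, pReg, pCR, pZD, pT0, pT25, pFH, pTS⟩
end

section
/- Let X be a tree sum of spaces (X_i)_{i∈I}. Then X is T_{1/2} if and only if all spaces X_i are T_{1/2} and the gluing is T_{1/2}-compatible, i.e., no gluing point s is simultaneously non-isolated and closed in some X_i and non-closed and isolated in some X_j. -/
/-- The gluing is `T_{1/2}`-compatible: no gluing point is simultaneously non-isolated
and closed in some summand, and non-closed and isolated in another summand. -/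
def THalfCompatible {X I : Type*} [TopologicalSpace X] (F : I → Set X) : Prop :=
  ¬ ∃ s ∈ gluingPoints F, ∃ i j : I,
      (s ∈ F i ∧ ¬ IsOpen {y : F i | (y : X) = s} ∧ IsClosed {y : F i | (y : X) = s}) ∧
      (s ∈ F j ∧ IsOpen {y : F j | (y : X) = s} ∧ ¬ IsClosed {y : F j | (y : X) = s})

/-- a tree sum is `T_{1/2}` iff all summands are `T_{1/2}` and the gluing
is `T_{1/2}`-compatible. -/
theorem stmt_14 {X I : Type*} [TopologicalSpace X] (F : I → Set X)
    (h : IsTreeSumOf F) :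
    THalf X ↔ (∀ i, THalf (F i)) ∧ THalfCompatible F := by
  obtain ⟨hcov, hopen, -⟩ := h
  have hpre : ∀ (i : I) (x : X),
      (fun y : F i => (y : X)) ⁻¹' {x} = {y : F i | (y : X) = x} := fun i x => rfl
  have hsing : ∀ (i : I) (x : X) (hx : x ∈ F i),
      ({(⟨x, hx⟩ : F i)} : Set (F i)) = {y : F i | (y : X) = x} := by
    intro i x hx; ext z; simp [Subtype.ext_iff]
  have hclosed : ∀ C : Set X,
      IsClosed C ↔ ∀ i, IsClosed ((fun y : F i => (y : X)) ⁻¹' C) := by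
    intro C
    rw [← isOpen_compl_iff, hopen]
    simp only [Set.preimage_compl, isOpen_compl_iff]
  constructor
  · intro hT
    refine ⟨fun i y => ?_, ?_⟩
    · have hs : ({y} : Set (F i)) = (fun z : F i => (z : X)) ⁻¹' {(y : X)} := by
        rw [hpre]
        have := hsing i (y : X) y.2
        simpa using this
      rcases hT (y : X) with h1 | h1
      · exact Or.inl (by rw [hs]; exact (hopen _).mp h1 i)
      · exact Or.inr (by rw [hs]; exact (hclosed _).mp h1 i)
    · rintro ⟨s, hs, i, j, ⟨hsi, hniopen, hiclosed⟩, ⟨hsj, hjopen, hnjclosed⟩⟩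
      rcases hT s with h1 | h1
      · exact hniopen (by rw [← hpre]; exact (hopen _).mp h1 i)
      · exact hnjclosed (by rw [← hpre]; exact (hclosed _).mp h1 j)
  · rintro ⟨hTi, hcomp⟩ x
    have hTi' : ∀ (i : I) (hx : x ∈ F i),
        IsOpen {y : F i | (y : X) = x} ∨ IsClosed {y : F i | (y : X) = x} := by
      intro i hx
      rcases hTi i ⟨x, hx⟩ with h1 | h1
      · exact Or.inl (by rwa [hsing i x hx] at h1)
      · exact Or.inr (by rwa [hsing i x hx] at h1)
    have hempty : ∀ (i : I), x ∉ F i → (fun y : F i => (y : X)) ⁻¹' {x} = ∅ := by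
      intro i hx; ext y; simp only [Set.mem_preimage, Set.mem_singleton_iff,
        Set.mem_empty_iff_false, iff_false]
      rintro rfl; exact hx y.2
    by_cases hall : ∀ i, x ∈ F i → IsClosed {y : F i | (y : X) = x}
    · right
      rw [hclosed]
      intro i
      by_cases hx : x ∈ F i
      · rw [hpre]; exact hall i hx
      · rw [hempty i hx]; exact isClosed_empty
    · left
      push_neg at hall
      obtain ⟨j, hxj, hjnc⟩ := hall
      have hjopen : IsOpen {y : F j | (y : X) = x} :=
        (hTi' j hxj).resolve_right hjnc
      rw [hopen]
      intro i
      by_cases hx : x ∈ F i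
      · rw [hpre]
        by_cases hio : IsOpen {y : F i | (y : X) = x}
        · exact hio
        · exfalso
          have hic : IsClosed {y : F i | (y : X) = x} :=
            (hTi' i hx).resolve_left hio
          have hij : i ≠ j := by rintro rfl; exact hio hjopen
          exact hcomp ⟨x, ⟨i, j, hij, hx, hxj⟩, i, j,
            ⟨hx, hio, hic⟩, ⟨hxj, hjopen, hjnc⟩⟩
      · rw [hempty i hx]; exact isOpen_empty
end

section
/- Let X be a tree sum of spaces (X_i)_{i∈I} such that every gluing point of X is closed or isolated in X. A subset C ⊆ X is connected if and only if every C ∩ X_i is connected and the induced subgraph G_C of the gluing graph is connected. -/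
namespace TS18
open SimpleGraph Sum

variable {X I : Type*} {F : I → Set X}

lemma adj_inl_inr {i : I} {s : ↥(gluingPoints F)} :
    (gluingGraph F).Adj (inl i) (inr s) ↔ (s : X) ∈ F i := by
  simp [gluingGraph, SimpleGraph.fromRel_adj]

lemma adj_inl {i : I} {b : I ⊕ ↥(gluingPoints F)} (h : (gluingGraph F).Adj (inl i) b) :
    ∃ s : ↥(gluingPoints F), b = inr s ∧ (s : X) ∈ F i := by
  rcases h with ⟨hne, h | h⟩ <;> rcases h with ⟨i', s', h1, h2, h3⟩
  · exact ⟨s', h2, by cases h1; exact h3⟩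
  · cases h2
lemma adj_inr {s : ↥(gluingPoints F)} {b : I ⊕ ↥(gluingPoints F)}
    (h : (gluingGraph F).Adj (inr s) b) :
    ∃ i : I, b = inl i ∧ (s : X) ∈ F i := by
  rcases h with ⟨hne, h | h⟩ <;> rcases h with ⟨i', s', h1, h2, h3⟩
  · cases h1
  · exact ⟨i', h1, by cases h2; exact h3⟩

/-- `Rel s a b` : `b` reachable from `a` avoiding the gluing point `s`. -/
def Rel (s : ↥(gluingPoints F)) (a b : I ⊕ ↥(gluingPoints F)) : Prop :=
  ∃ w : (gluingGraph F).Walk a b, inr s ∉ w.support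

lemma rel_refl {s : ↥(gluingPoints F)} (i : I) : Rel s (inl i) (inl i) :=
  ⟨SimpleGraph.Walk.nil, by simp⟩

lemma Rel.symm {s : ↥(gluingPoints F)} {a b : I ⊕ ↥(gluingPoints F)}
    (h : Rel s a b) : Rel s b a := by
  obtain ⟨w, hw⟩ := h
  exact ⟨w.reverse, by simpa using hw⟩

lemma Rel.trans {s : ↥(gluingPoints F)} {a b c : I ⊕ ↥(gluingPoints F)}
    (h : Rel s a b) (h' : Rel s b c) : Rel s a c := by
  obtain ⟨w, hw⟩ := h; obtain ⟨w', hw'⟩ := h'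
  exact ⟨w.append w', by
    rw [SimpleGraph.Walk.mem_support_append_iff]; tauto⟩

/-- two indices sharing a common point `z ≠ s` are `Rel s`-related. -/
lemma rel_of_mem_mem {s : ↥(gluingPoints F)} {k l : I} {z : X}
    (hk : z ∈ F k) (hl : z ∈ F l) (hz : z ≠ (s : X)) : Rel s (inl k) (inl l) := by
  rcases eq_or_ne k l with rfl | hkl
  · exact rel_refl k
  · have hzg : z ∈ gluingPoints F := ⟨k, l, hkl, hk, hl⟩
    refine ⟨SimpleGraph.Walk.cons (adj_inl_inr.2 hk)
      (SimpleGraph.Walk.cons ((adj_inl_inr (s := ⟨z, hzg⟩)).2 hl).symm SimpleGraph.Walk.nil), ?_⟩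
    simp only [SimpleGraph.Walk.support_cons, SimpleGraph.Walk.support_nil,
      List.mem_cons, List.not_mem_nil]
    push_neg
    refine ⟨by simp, by simp [Subtype.ext_iff, Ne.symm hz], by simp, by simp⟩


open SimpleGraph Walk in
lemma attach (hT : (gluingGraph F).IsTree) {i k : I} (hik : i ≠ k) :
    ∃ t : ↥(gluingPoints F), (t : X) ∈ F i ∧ ¬ Rel t (inl k) (inl i) ∧
      ∀ s : ↥(gluingPoints F), (s : X) ∈ F i → ¬ Rel s (inl k) (inl i) → s = t := by
  classical
  obtain ⟨q, hq, huniq⟩ := hT.existsUnique_path (inl i) (inl k)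
  cases q with
  | nil => exact absurd rfl hik
  | @cons _ b _ hadj q₁ =>
    obtain ⟨t, rfl, htF⟩ := adj_inl hadj
    refine ⟨t, htF, ?_, ?_⟩
    · rintro ⟨w, hw⟩
      have hbp : inr t ∉ w.reverse.bypass.support := fun hmem => by
        have := w.reverse.support_bypass_subset hmem
        rw [Walk.support_reverse, List.mem_reverse] at this
        exact hw this
      have := huniq w.reverse.bypass w.reverse.bypass_isPath
      rw [this] at hbp
      exact hbp (by simp [Walk.support_cons, q₁.start_mem_support])
    · intro s hsF hrel
      by_contra hst
      have hsmem : inr s ∈ q₁.support := by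
        have h1 : inr s ∈ (Walk.cons hadj q₁).support := by
          by_contra hmem
          exact hrel (Rel.symm ⟨Walk.cons hadj q₁, hmem⟩)
        rw [Walk.support_cons, List.mem_cons] at h1
        rcases h1 with h1 | h1
        · cases h1
        · exact h1
      have hq₁ : q₁.IsPath := hq.of_cons
      have hni : inl i ∉ q₁.support := (Walk.cons_isPath_iff hadj q₁).1 hq |>.2
      set q₂ := q₁.dropUntil (inr s) hsmem with hq₂def
      have hq₂ : q₂.IsPath := hq₁.dropUntil hsmem
      have hni₂ : inl i ∉ q₂.support := fun hh => hni (q₁.support_dropUntil_subset hsmem hh)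
      have hadj' : (gluingGraph F).Adj (inl i) (inr s) := adj_inl_inr.2 hsF
      have hwp : (Walk.cons hadj' q₂).IsPath := (Walk.cons_isPath_iff hadj' q₂).2 ⟨hq₂, hni₂⟩
      have heq := huniq (Walk.cons hadj' q₂) hwp
      have hsup := congrArg Walk.support heq
      rw [Walk.support_cons, Walk.support_cons, q₂.support_eq_cons, q₁.support_eq_cons] at hsup
      simp only [List.cons.injEq] at hsup
      exact hst (inr.inj hsup.2.1)

lemma rel_unique (hT : (gluingGraph F).IsTree) {i k : I} {s s' : ↥(gluingPoints F)}
    (hs : (s : X) ∈ F i) (hs' : (s' : X) ∈ F i)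
    (h : ¬ Rel s (inl k) (inl i)) (h' : ¬ Rel s' (inl k) (inl i)) : s = s' := by
  rcases eq_or_ne i k with rfl | hik
  · exact absurd (rel_refl i) h
  · obtain ⟨t, _, _, huniq⟩ := attach hT hik
    rw [huniq s hs h, huniq s' hs' h']

/-- transfer of `Rel` along a shared point. -/
lemma rel_congr {s : ↥(gluingPoints F)} {k l : I} {z : X} {c : I ⊕ ↥(gluingPoints F)}
    (hk : z ∈ F k) (hl : z ∈ F l) (hz : z ≠ (s : X)) :
    Rel s (inl k) c ↔ Rel s (inl l) c :=
  ⟨fun h => (rel_of_mem_mem hl hk hz).trans h, fun h => (rel_of_mem_mem hk hl hz).trans h⟩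


variable [TopologicalSpace X]

/-- Separation lemma: if `x, y` in a preconnected set `C` lie on different sides of the
gluing point `s`, then `s ∈ C`. -/
lemma separation
    (hcov : ∀ x : X, ∃ i, x ∈ F i)
    (hfin : ∀ U : Set X, IsOpen U ↔ ∀ i, IsOpen ((fun y : F i => (y : X)) ⁻¹' U))
    {s : ↥(gluingPoints F)} (hs : IsClosed ({(s : X)} : Set X) ∨ IsOpen ({(s : X)} : Set X))
    {C : Set X} (hC : IsPreconnected C)
    {j j' : I} {x y : X} (hx : x ∈ C) (hxj : x ∈ F j) (hy : y ∈ C) (hyj' : y ∈ F j')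
    (hxs : x ≠ (s : X)) (hys : y ≠ (s : X))
    (hrel : ¬ Rel s (inl j) (inl j')) : (s : X) ∈ C := by
  by_contra hsC
  set P : Set X := {z | z ≠ (s : X) ∧ ∃ l, z ∈ F l ∧ Rel s (inl l) (inl j')} with hP
  set Q : Set X := {z | z ≠ (s : X) ∧ ∃ l, z ∈ F l ∧ ¬ Rel s (inl l) (inl j')} with hQ
  have key : ∀ z k, z ∈ F k → z ≠ (s : X) →
      ((∃ l, z ∈ F l ∧ Rel s (inl l) (inl j')) ↔ Rel s (inl k) (inl j')) :=
    fun z k hk hz => ⟨fun ⟨l, hl, hr⟩ => (rel_congr hk hl hz).2 hr, fun hr => ⟨k, hk, hr⟩⟩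
  have keyQ : ∀ z k, z ∈ F k → z ≠ (s : X) →
      ((∃ l, z ∈ F l ∧ ¬ Rel s (inl l) (inl j')) ↔ ¬ Rel s (inl k) (inl j')) := by
    intro z k hk hz
    constructor
    · rintro ⟨l, hl, hr⟩ hrk
      exact hr ((rel_congr hl hk hz).2 hrk)
    · intro hrk; exact ⟨k, hk, hrk⟩
  have hcover : C ⊆ P ∪ Q := by
    intro z hz
    have hzs : z ≠ (s : X) := fun he => hsC (he ▸ hz)
    obtain ⟨k, hk⟩ := hcov z
    by_cases hr : Rel s (inl k) (inl j')
    · exact Or.inl ⟨hzs, k, hk, hr⟩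
    · exact Or.inr ⟨hzs, k, hk, hr⟩
  have hxQ : x ∈ Q := ⟨hxs, j, hxj, hrel⟩
  have hyP : y ∈ P := ⟨hys, j', hyj', rel_refl j'⟩
  have hPQdisj : ∀ z, z ∈ P → z ∈ Q → False := by
    rintro z ⟨hz1, l, hl, hr⟩ ⟨_, l', hl', hr'⟩
    exact hr' ((rel_congr hl' hl hz1).2 hr)
  rcases hs with hcl | hop
  · -- s closed : P and Q are open
    have hPo : IsOpen P := by
      rw [hfin]
      intro k
      by_cases hr : Rel s (inl k) (inl j')
      · have : (fun y : F k => (y : X)) ⁻¹' P = (fun y : F k => (y : X)) ⁻¹' {(s : X)}ᶜ := by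
          ext z
          simp only [Set.mem_preimage, Set.mem_compl_iff, Set.mem_singleton_iff, hP,
            Set.mem_setOf_eq]
          exact ⟨fun hh => hh.1, fun hh => ⟨hh, k, z.2, hr⟩⟩
        rw [this]
        exact hcl.isOpen_compl.preimage continuous_subtype_val
      · have : (fun y : F k => (y : X)) ⁻¹' P = ∅ := by
          ext z
          simp only [Set.mem_preimage, Set.mem_empty_iff_false, iff_false, hP, Set.mem_setOf_eq]
          rintro ⟨hz1, l, hl, hrl⟩
          exact hr ((rel_congr z.2 hl hz1).2 hrl)
        rw [this]; exact isOpen_empty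
    have hQo : IsOpen Q := by
      rw [hfin]
      intro k
      by_cases hr : Rel s (inl k) (inl j')
      · have : (fun y : F k => (y : X)) ⁻¹' Q = ∅ := by
          ext z
          simp only [Set.mem_preimage, Set.mem_empty_iff_false, iff_false, hQ, Set.mem_setOf_eq]
          rintro ⟨hz1, l, hl, hrl⟩
          exact hrl ((rel_congr hl z.2 hz1).2 hr)
        rw [this]; exact isOpen_empty
      · have : (fun y : F k => (y : X)) ⁻¹' Q = (fun y : F k => (y : X)) ⁻¹' {(s : X)}ᶜ := by
          ext z
          simp only [Set.mem_preimage, Set.mem_compl_iff, Set.mem_singleton_iff, hQ,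
            Set.mem_setOf_eq]
          exact ⟨fun hh => hh.1, fun hh => ⟨hh, k, z.2, hr⟩⟩
        rw [this]
        exact hcl.isOpen_compl.preimage continuous_subtype_val
    obtain ⟨w, hwC, hwP, hwQ⟩ := hC P Q hPo hQo hcover ⟨y, hy, hyP⟩ ⟨x, hx, hxQ⟩
    exact hPQdisj w hwP hwQ
  · -- s open : P ∪ {s} and Q ∪ {s} are open
    have hPo : IsOpen (P ∪ {(s : X)}) := by
      rw [hfin]
      intro k
      by_cases hr : Rel s (inl k) (inl j')
      · have : (fun y : F k => (y : X)) ⁻¹' (P ∪ {(s : X)}) = Set.univ := by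
          ext z
          simp only [Set.mem_preimage, Set.mem_union, Set.mem_singleton_iff, Set.mem_univ,
            iff_true, hP, Set.mem_setOf_eq]
          by_cases hz : (z : X) = (s : X)
          · exact Or.inr hz
          · exact Or.inl ⟨hz, k, z.2, hr⟩
        rw [this]; exact isOpen_univ
      · have : (fun y : F k => (y : X)) ⁻¹' (P ∪ {(s : X)}) =
            (fun y : F k => (y : X)) ⁻¹' {(s : X)} := by
          ext z
          simp only [Set.mem_preimage, Set.mem_union, Set.mem_singleton_iff, hP,
            Set.mem_setOf_eq]
          constructor
          · rintro (⟨hz1, l, hl, hrl⟩ | hz)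
            · exact absurd ((rel_congr z.2 hl hz1).2 hrl) hr
            · exact hz
          · exact Or.inr
        rw [this]
        exact hop.preimage continuous_subtype_val
    have hQo : IsOpen (Q ∪ {(s : X)}) := by
      rw [hfin]
      intro k
      by_cases hr : Rel s (inl k) (inl j')
      · have : (fun y : F k => (y : X)) ⁻¹' (Q ∪ {(s : X)}) =
            (fun y : F k => (y : X)) ⁻¹' {(s : X)} := by
          ext z
          simp only [Set.mem_preimage, Set.mem_union, Set.mem_singleton_iff, hQ,
            Set.mem_setOf_eq]
          constructor
          · rintro (⟨hz1, l, hl, hrl⟩ | hz)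
            · exact absurd ((rel_congr hl z.2 hz1).2 hr) hrl
            · exact hz
          · exact Or.inr
        rw [this]
        exact hop.preimage continuous_subtype_val
      · have : (fun y : F k => (y : X)) ⁻¹' (Q ∪ {(s : X)}) = Set.univ := by
          ext z
          simp only [Set.mem_preimage, Set.mem_union, Set.mem_singleton_iff, Set.mem_univ,
            iff_true, hQ, Set.mem_setOf_eq]
          by_cases hz : (z : X) = (s : X)
          · exact Or.inr hz
          · exact Or.inl ⟨hz, k, z.2, hr⟩
        rw [this]; exact isOpen_univ
    have hcover' : C ⊆ (P ∪ {(s : X)}) ∪ (Q ∪ {(s : X)}) := fun z hz => by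
      rcases hcover hz with h1 | h1
      · exact Or.inl (Or.inl h1)
      · exact Or.inr (Or.inl h1)
    obtain ⟨w, hwC, hwP, hwQ⟩ := hC _ _ hPo hQo hcover'
      ⟨y, hy, Or.inl hyP⟩ ⟨x, hx, Or.inl hxQ⟩
    rcases hwP with hwP | hws
    · rcases hwQ with hwQ | hws
      · exact hPQdisj w hwP hwQ
      · exact hsC (hws ▸ hwC)
    · exact hsC (hws ▸ hwC)


/-- The branch hanging off `F i` at the gluing point `s`. -/
def Bset (F : I → Set X) (i : I) (s : ↥(gluingPoints F)) : Set X :=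
  {z | z ≠ (s : X) ∧ ∃ k, z ∈ F k ∧ ¬ Rel s (inl k) (inl i)}

def Kset (F : I → Set X) (i : I) (C u : Set X) : Set X :=
  (C ∩ F i ∩ u) ∪
    {z ∈ C | ∃ s : ↥(gluingPoints F),
      ((s : X) ∈ F i ∧ (s : X) ∈ C ∧ (s : X) ∈ u) ∧ z ∈ Bset F i s}

lemma bset_disj_Fi {i : I} {s : ↥(gluingPoints F)} {z : X}
    (hz : z ∈ Bset F i s) (hzi : z ∈ F i) : False := by
  obtain ⟨hzs, k, hk, hr⟩ := hz
  exact hr ((rel_congr hk hzi hzs).2 (rel_refl i))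

lemma bset_unique (hT : (gluingGraph F).IsTree) {i : I} {s s' : ↥(gluingPoints F)}
    (hsF : (s : X) ∈ F i) (hs'F : (s' : X) ∈ F i) {z : X}
    (hz : z ∈ Bset F i s) (hz' : z ∈ Bset F i s') : s = s' := by
  obtain ⟨hzs, k, hk, hr⟩ := hz
  obtain ⟨hzs', k', hk', hr'⟩ := hz'
  exact rel_unique hT hsF hs'F hr (fun hrk => hr' ((rel_congr hk' hk hzs').2 hrk))

/-- Every point of `C` outside `F i` lies in a branch attached at a point of `C ∩ F i`. -/
lemma attach_mem (hcov : ∀ x : X, ∃ i, x ∈ F i)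
    (hfin : ∀ U : Set X, IsOpen U ↔ ∀ i, IsOpen ((fun y : F i => (y : X)) ⁻¹' U))
    (hT : (gluingGraph F).IsTree)
    (hglue : ∀ s ∈ gluingPoints F, IsClosed ({s} : Set X) ∨ IsOpen ({s} : Set X))
    {C : Set X} (hC : IsPreconnected C) {i : I} {a : X} (ha : a ∈ C) (hai : a ∈ F i)
    {z : X} (hz : z ∈ C) (hzi : z ∉ F i) :
    ∃ s : ↥(gluingPoints F), (s : X) ∈ F i ∧ (s : X) ∈ C ∧ z ∈ Bset F i s := by
  obtain ⟨j, hj⟩ := hcov z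
  have hij : i ≠ j := fun he => hzi (he ▸ hj)
  obtain ⟨t, htF, htrel, -⟩ := attach hT hij
  have hzt : z ≠ (t : X) := fun he => hzi (he ▸ htF)
  refine ⟨t, htF, ?_, hzt, j, hj, htrel⟩
  rcases eq_or_ne a (t : X) with rfl | hat
  · exact ha
  · exact separation hcov hfin (hglue _ t.2) hC hz hj ha hai hzt hat htrel

lemma branch_nbhd
    (hfin : ∀ U : Set X, IsOpen U ↔ ∀ i, IsOpen ((fun y : F i => (y : X)) ⁻¹' U))
    {i : I} {s : ↥(gluingPoints F)}
    (hs : IsClosed ({(s : X)} : Set X) ∨ IsOpen ({(s : X)} : Set X)) :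
    ∃ O : Set X, IsOpen O ∧ Bset F i s ⊆ O ∧ O ⊆ Bset F i s ∪ {(s : X)} := by
  have hBF : ∀ k, Rel s (inl k) (inl i) → ∀ z : X, z ∈ F k → z ∉ Bset F i s := by
    rintro k hr z hk ⟨hzs, k', hk', hr'⟩
    exact hr' ((rel_congr hk' hk hzs).2 hr)
  have hBF' : ∀ k, ¬ Rel s (inl k) (inl i) → ∀ z : X, z ∈ F k → z ≠ (s : X) →
      z ∈ Bset F i s := fun k hr z hk hzs => ⟨hzs, k, hk, hr⟩
  rcases hs with hcl | hop
  · refine ⟨Bset F i s, ?_, le_refl _, Set.subset_union_left⟩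
    rw [hfin]
    intro k
    by_cases hr : Rel s (inl k) (inl i)
    · have : (fun y : F k => (y : X)) ⁻¹' Bset F i s = ∅ := by
        ext z
        simp only [Set.mem_preimage, Set.mem_empty_iff_false, iff_false]
        exact hBF k hr z z.2
      rw [this]; exact isOpen_empty
    · have : (fun y : F k => (y : X)) ⁻¹' Bset F i s =
          (fun y : F k => (y : X)) ⁻¹' {(s : X)}ᶜ := by
        ext z
        simp only [Set.mem_preimage, Set.mem_compl_iff, Set.mem_singleton_iff]
        exact ⟨fun hh => hh.1, fun hh => hBF' k hr z z.2 hh⟩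
      rw [this]
      exact hcl.isOpen_compl.preimage continuous_subtype_val
  · refine ⟨Bset F i s ∪ {(s : X)}, ?_, Set.subset_union_left, le_refl _⟩
    rw [hfin]
    intro k
    by_cases hr : Rel s (inl k) (inl i)
    · have : (fun y : F k => (y : X)) ⁻¹' (Bset F i s ∪ {(s : X)}) =
          (fun y : F k => (y : X)) ⁻¹' {(s : X)} := by
        ext z
        simp only [Set.mem_preimage, Set.mem_union, Set.mem_singleton_iff]
        constructor
        · rintro (hz | hz)
          · exact absurd hz (hBF k hr z z.2)
          · exact hz
        · exact Or.inr
      rw [this]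
      exact hop.preimage continuous_subtype_val
    · have : (fun y : F k => (y : X)) ⁻¹' (Bset F i s ∪ {(s : X)}) = Set.univ := by
        ext z
        simp only [Set.mem_preimage, Set.mem_union, Set.mem_singleton_iff, Set.mem_univ, iff_true]
        by_cases hz : (z : X) = (s : X)
        · exact Or.inr hz
        · exact Or.inl (hBF' k hr z z.2 hz)
      rw [this]; exact isOpen_univ

lemma kset_disjoint (hT : (gluingGraph F).IsTree) {C u v : Set X} {i : I}
    (hdisj : C ∩ F i ∩ (u ∩ v) = ∅) {z : X}
    (hzu : z ∈ Kset F i C u) (hzv : z ∈ Kset F i C v) : False := by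
  have hmem : ∀ w : X, w ∈ C ∩ F i ∩ u → w ∈ C ∩ F i ∩ v → False := by
    intro w h1 h2
    have : w ∈ C ∩ F i ∩ (u ∩ v) := ⟨h1.1, h1.2, h2.2⟩
    rw [hdisj] at this; exact this
  rcases hzu with h1 | ⟨hzC, s, ⟨hsF, hsC, hsu⟩, hzB⟩
  · rcases hzv with h2 | ⟨_, s', ⟨_, _, _⟩, hzB'⟩
    · exact hmem z h1 h2
    · exact bset_disj_Fi hzB' h1.1.2
  · rcases hzv with h2 | ⟨_, s', ⟨hs'F, hs'C, hs'v⟩, hzB'⟩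
    · exact bset_disj_Fi hzB h2.1.2
    · obtain rfl := bset_unique hT hsF hs'F hzB hzB'
      exact hmem _ ⟨⟨hsC, hsF⟩, hsu⟩ ⟨⟨hsC, hsF⟩, hs'v⟩


set_option linter.unusedSectionVars false

lemma main_open (hcov : ∀ x : X, ∃ i, x ∈ F i)
    (hfin : ∀ U : Set X, IsOpen U ↔ ∀ i, IsOpen ((fun y : F i => (y : X)) ⁻¹' U))
    (hT : (gluingGraph F).IsTree)
    (hglue : ∀ s ∈ gluingPoints F, IsClosed ({s} : Set X) ∨ IsOpen ({s} : Set X))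
    {C : Set X} (hC : IsPreconnected C) {i : I} {u v : Set X}
    (hu : IsOpen u) (hcovuv : C ∩ F i ⊆ u ∪ v)
    (hdisj : C ∩ F i ∩ (u ∩ v) = ∅) {a : X} (ha : a ∈ C ∩ F i ∩ u) :
    ∃ O : Set X, IsOpen O ∧ Kset F i C u ⊆ O ∧ C ∩ O ⊆ Kset F i C u := by
  refine ⟨⋃₀ {O : Set X | IsOpen O ∧ C ∩ O ⊆ Kset F i C u}, isOpen_sUnion (fun _ h => h.1),
    ?_, ?_⟩
  swap
  · rintro w ⟨hwC, O, ⟨hO, hOK⟩, hwO⟩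
    exact hOK ⟨hwC, hwO⟩
  intro z hz
  rcases hz with ⟨⟨hzC, hzF⟩, hzu⟩ | ⟨hzC, s, ⟨hsF, hsC, hsu⟩, hzB⟩
  · -- z ∈ C ∩ F i ∩ u : neighborhood u minus all v-branches
    set O : Set X := u ∩ {w | ∀ s : ↥(gluingPoints F),
      (s : X) ∈ F i → (s : X) ∈ C → (s : X) ∈ v → w ∉ Bset F i s ∪ {(s : X)}} with hO
    have hOopen : IsOpen O := by
      rw [hfin]
      intro k
      by_cases hex : ∃ s : ↥(gluingPoints F),
          (s : X) ∈ F i ∧ (s : X) ∈ C ∧ (s : X) ∈ v ∧ ¬ Rel s (inl k) (inl i)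
      · obtain ⟨s₀, hs₀F, hs₀C, hs₀v, hs₀r⟩ := hex
        have : (fun y : F k => (y : X)) ⁻¹' O = ∅ := by
          ext y
          simp only [Set.mem_preimage, Set.mem_empty_iff_false, iff_false, hO,
            Set.mem_inter_iff, Set.mem_setOf_eq, not_and]
          intro hyu hall
          have h0 := hall s₀ hs₀F hs₀C hs₀v
          rw [Set.mem_union] at h0
          push_neg at h0
          rcases eq_or_ne (y : X) (s₀ : X) with he | he
          · exact h0.2 he
          · exact h0.1 ⟨he, k, y.2, hs₀r⟩
        rw [this]; exact isOpen_empty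
      · push_neg at hex
        have : (fun y : F k => (y : X)) ⁻¹' O = (fun y : F k => (y : X)) ⁻¹' u := by
          ext y
          simp only [Set.mem_preimage, hO, Set.mem_inter_iff, Set.mem_setOf_eq]
          constructor
          · exact fun hh => hh.1
          · intro hyu
            refine ⟨hyu, fun s hsF' hsC' hsv' => ?_⟩
            rw [Set.mem_union]
            push_neg
            constructor
            · rintro ⟨hys, k', hk', hr'⟩
              exact hr' ((rel_congr hk' y.2 hys).2 (hex s hsF' hsC' hsv'))
            · rintro he
              have : (s : X) ∈ C ∩ F i ∩ (u ∩ v) := ⟨⟨hsC', hsF'⟩, he ▸ hyu, hsv'⟩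
              rw [hdisj] at this; exact this
        rw [this]
        exact hu.preimage continuous_subtype_val
    refine Set.mem_sUnion.2 ⟨O, ⟨hOopen, ?_⟩, ?_⟩
    · -- C ∩ O ⊆ Kset
      rintro y ⟨hyC, hyu, hyall⟩
      by_cases hyF : y ∈ F i
      · exact Or.inl ⟨⟨hyC, hyF⟩, hyu⟩
      · obtain ⟨σ, hσF, hσC, hyB⟩ := attach_mem hcov hfin hT hglue hC ha.1.1 ha.1.2 hyC hyF
        rcases hcovuv ⟨hσC, hσF⟩ with hσu | hσv
        · exact Or.inr ⟨hyC, σ, ⟨hσF, hσC, hσu⟩, hyB⟩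
        · exact absurd (Set.mem_union_left _ hyB) (hyall σ hσF hσC hσv)
    · -- z ∈ O
      refine ⟨hzu, fun s hsF' hsC' hsv' => ?_⟩
      rw [Set.mem_union]
      push_neg
      refine ⟨fun hB => bset_disj_Fi hB hzF, fun he => ?_⟩
      have : (s : X) ∈ C ∩ F i ∩ (u ∩ v) := ⟨⟨hsC', hsF'⟩, he ▸ hzu, hsv'⟩
      rw [hdisj] at this; exact this
  · -- z in a u-branch
    obtain ⟨O, hOopen, hBO, hOB⟩ := branch_nbhd hfin (hglue _ s.2) (i := i) (s := s)
    refine Set.mem_sUnion.2 ⟨O, ⟨hOopen, ?_⟩, hBO hzB⟩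
    rintro y ⟨hyC, hyO⟩
    rcases hOB hyO with hyB | hys
    · exact Or.inr ⟨hyC, s, ⟨hsF, hsC, hsu⟩, hyB⟩
    · rw [Set.mem_singleton_iff] at hys
      exact Or.inl ⟨⟨hyC, hys ▸ hsF⟩, hys ▸ hsu⟩

lemma piece_preconnected (hcov : ∀ x : X, ∃ i, x ∈ F i)
    (hfin : ∀ U : Set X, IsOpen U ↔ ∀ i, IsOpen ((fun y : F i => (y : X)) ⁻¹' U))
    (hT : (gluingGraph F).IsTree)
    (hglue : ∀ s ∈ gluingPoints F, IsClosed ({s} : Set X) ∨ IsOpen ({s} : Set X))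
    {C : Set X} (hC : IsPreconnected C) (i : I) :
    IsPreconnected (C ∩ F i) := by
  intro u v hu hv hcover hneU hneV
  by_contra hne
  rw [Set.not_nonempty_iff_eq_empty] at hne
  obtain ⟨a, haCF, hau⟩ := hneU
  obtain ⟨b, hbCF, hbv⟩ := hneV
  have hdisj' : C ∩ F i ∩ (v ∩ u) = ∅ := by rw [Set.inter_comm v u]; exact hne
  obtain ⟨O₁, hO₁, hKO₁, hO₁K⟩ := main_open hcov hfin hT hglue hC hu hcover hne
    (a := a) ⟨haCF, hau⟩
  obtain ⟨O₂, hO₂, hKO₂, hO₂K⟩ := main_open hcov hfin hT hglue hC hv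
    (fun z hz => (hcover hz).symm) hdisj' (a := b) ⟨hbCF, hbv⟩
  have hcover' : C ⊆ O₁ ∪ O₂ := by
    intro z hz
    by_cases hzF : z ∈ F i
    · rcases hcover ⟨hz, hzF⟩ with hzu | hzv
      · exact Or.inl (hKO₁ (Or.inl ⟨⟨hz, hzF⟩, hzu⟩))
      · exact Or.inr (hKO₂ (Or.inl ⟨⟨hz, hzF⟩, hzv⟩))
    · obtain ⟨σ, hσF, hσC, hzB⟩ := attach_mem hcov hfin hT hglue hC haCF.1 haCF.2 hz hzF
      rcases hcover ⟨hσC, hσF⟩ with hσu | hσv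
      · exact Or.inl (hKO₁ (Or.inr ⟨hz, σ, ⟨hσF, hσC, hσu⟩, hzB⟩))
      · exact Or.inr (hKO₂ (Or.inr ⟨hz, σ, ⟨hσF, hσC, hσv⟩, hzB⟩))
  obtain ⟨w, hwC, hw₁, hw₂⟩ := hC O₁ O₂ hO₁ hO₂ hcover'
    ⟨a, haCF.1, hKO₁ (Or.inl ⟨haCF, hau⟩)⟩ ⟨b, hbCF.1, hKO₂ (Or.inl ⟨hbCF, hbv⟩)⟩
  exact kset_disjoint hT hne (hO₁K ⟨hwC, hw₁⟩) (hO₂K ⟨hwC, hw₂⟩)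


lemma reachable_reflTransGen {V : Type*} {G' : SimpleGraph V} {R : V → V → Prop}
    (hR : ∀ a b, G'.Adj a b → R a b) {a b : V} (h : G'.Reachable a b) :
    Relation.ReflTransGen R a b := by
  obtain ⟨w⟩ := h
  induction w with
  | nil => exact Relation.ReflTransGen.refl
  | cons hadj p ih => exact Relation.ReflTransGen.head (hR _ _ hadj) ih

lemma walk_in_induce {V : Type*} {G' : SimpleGraph V} {S : Set V} {a b : V}
    (w : G'.Walk a b) (hsup : ∀ v ∈ w.support, v ∈ S) (ha : a ∈ S) (hb : b ∈ S) :
    (G'.induce S).Reachable ⟨a, ha⟩ ⟨b, hb⟩ := by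
  induction w with
  | nil => rfl
  | @cons x y z hadj p ih =>
    have hy : y ∈ S := hsup y (by simp [SimpleGraph.Walk.support_cons, p.start_mem_support])
    have h1 : (G'.induce S).Adj ⟨x, ha⟩ ⟨y, hy⟩ := hadj
    exact h1.reachable.trans (ih (fun v hv => hsup v (by simp [SimpleGraph.Walk.support_cons, hv])) hy hb)

lemma walk_next {V : Type*} {G' : SimpleGraph V} {a b : V} (w : G'.Walk a b) (hab : a ≠ b) :
    ∃ c, G'.Adj a c ∧ c ∈ w.support := by
  cases w with
  | nil => exact absurd rfl hab
  | @cons _ c _ hadj p =>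
    exact ⟨c, hadj, by simp [SimpleGraph.Walk.support_cons, p.start_mem_support]⟩

lemma path_support_in_S (hcov : ∀ x : X, ∃ i, x ∈ F i)
    (hfin : ∀ U : Set X, IsOpen U ↔ ∀ i, IsOpen ((fun y : F i => (y : X)) ⁻¹' U))
    (hT : (gluingGraph F).IsTree)
    (hglue : ∀ s ∈ gluingPoints F, IsClosed ({s} : Set X) ∨ IsOpen ({s} : Set X))
    {C : Set X} (hC : IsPreconnected C) {i j : I}
    (hi : (C ∩ F i).Nonempty) (hj : (C ∩ F j).Nonempty)
    {p : (gluingGraph F).Walk (inl i) (inl j)} (hp : p.IsPath) :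
    (∀ s : ↥(gluingPoints F), inr s ∈ p.support → (s : X) ∈ C) ∧
    (∀ k : I, inl k ∈ p.support → (C ∩ F k).Nonempty) := by
  classical
  obtain ⟨p₀, -, huniq⟩ := hT.existsUnique_path (inl i) (inl j)
  obtain ⟨x, hxC, hxi⟩ := hi
  obtain ⟨y, hyC, hyj⟩ := hj
  have hinr : ∀ s : ↥(gluingPoints F), inr s ∈ p.support → (s : X) ∈ C := by
    intro s hs
    rcases eq_or_ne x (s : X) with rfl | hxs
    · exact hxC
    rcases eq_or_ne y (s : X) with rfl | hys
    · exact hyC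
    have hrel : ¬ Rel s (inl i) (inl j) := by
      rintro ⟨w, hw⟩
      have h1 := huniq p hp
      have h2 := huniq w.bypass w.bypass_isPath
      rw [h1, ← h2] at hs
      exact hw (w.support_bypass_subset hs)
    exact separation hcov hfin (hglue _ s.2) hC hxC hxi hyC hyj hxs hys hrel
  refine ⟨hinr, ?_⟩
  intro k hk
  rcases eq_or_ne k j with rfl | hkj
  · exact ⟨y, hyC, hyj⟩
  obtain ⟨c, hadj, hc⟩ := walk_next (p.dropUntil (inl k) hk) (by simp [hkj])
  obtain ⟨s, rfl, hsF⟩ := adj_inl hadj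
  exact ⟨s, hinr s (p.support_dropUntil_subset hk hc), hsF⟩

end TS18

open TS18 Sum


/-- in a tree sum whose gluing points are all closed or isolated, a subset
`C` is connected iff every nonempty `C ∩ X_i` is connected and the induced subgraph `G_C`
of the gluing graph is connected. -/
theorem stmt_18 {X I : Type*} [TopologicalSpace X] (F : I → Set X)
    (h : IsTreeSumOf F)
    (hglue : ∀ s ∈ gluingPoints F, IsClosed ({s} : Set X) ∨ IsOpen ({s} : Set X))
    (C : Set X) :
    IsConnected C ↔
      (∀ i, (C ∩ F i).Nonempty → IsConnected (C ∩ F i)) ∧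
      ((gluingGraph F).induce
        {v : I ⊕ ↥(gluingPoints F) |
          Sum.elim (fun i => (C ∩ F i).Nonempty) (fun s => (s : X) ∈ C) v}).Connected := by
  classical
  obtain ⟨hcov, hfin, hT⟩ := h
  set S : Set (I ⊕ ↥(gluingPoints F)) :=
    {v | Sum.elim (fun i => (C ∩ F i).Nonempty) (fun s => (s : X) ∈ C) v} with hS
  have hSinl : ∀ i : I, inl i ∈ S ↔ (C ∩ F i).Nonempty := fun i => Iff.rfl
  have hSinr : ∀ s : ↥(gluingPoints F), inr s ∈ S ↔ (s : X) ∈ C := fun s => Iff.rfl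
  constructor
  · rintro ⟨hne, hC⟩
    refine ⟨fun i hi => ⟨hi, piece_preconnected hcov hfin hT hglue hC i⟩, ?_⟩
    -- connectivity of the induced graph
    have hreach_inl : ∀ (i j : I) (hi : (C ∩ F i).Nonempty) (hj : (C ∩ F j).Nonempty),
        ((gluingGraph F).induce S).Reachable ⟨inl i, hi⟩ ⟨inl j, hj⟩ := by
      intro i j hi hj
      obtain ⟨p, hp, -⟩ := hT.existsUnique_path (inl i) (inl j)
      obtain ⟨h1, h2⟩ := path_support_in_S hcov hfin hT hglue hC hi hj hp
      refine walk_in_induce p ?_ hi hj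
      rintro (k | s) hv
      · exact h2 k hv
      · exact h1 s hv
    rw [SimpleGraph.connected_iff]
    constructor
    · rintro ⟨va, hva⟩ ⟨vb, hvb⟩
      have step : ∀ (v : I ⊕ ↥(gluingPoints F)) (hv : v ∈ S),
          ∃ (k : I) (hk : (C ∩ F k).Nonempty),
            ((gluingGraph F).induce S).Reachable ⟨v, hv⟩ ⟨inl k, hk⟩ := by
        rintro (k | s) hv
        · exact ⟨k, hv, SimpleGraph.Reachable.refl _⟩
        · obtain ⟨k, hk⟩ := hcov (s : X)
          have hsC : (s : X) ∈ C := hv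
          have hkne : (C ∩ F k).Nonempty := ⟨s, hsC, hk⟩
          have hadj : ((gluingGraph F).induce S).Adj ⟨inr s, hv⟩ ⟨inl k, hkne⟩ :=
            (adj_inl_inr.2 hk).symm
          exact ⟨k, hkne, hadj.reachable⟩
      obtain ⟨ka, hka, hra⟩ := step va hva
      obtain ⟨kb, hkb, hrb⟩ := step vb hvb
      exact hra.trans ((hreach_inl ka kb hka hkb).trans hrb.symm)
    · obtain ⟨x, hx⟩ := hne
      obtain ⟨i, hi⟩ := hcov x
      exact ⟨⟨inl i, ⟨x, hx, hi⟩⟩⟩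
  · rintro ⟨h1, h2⟩
    rw [SimpleGraph.connected_iff] at h2
    obtain ⟨h2p, h2n⟩ := h2
    set g : ↥S → Set X := fun v => Sum.elim (fun i => C ∩ F i) (fun s => {(s : X)}) v.1 with hg
    have hgsub : ∀ v : ↥S, g v ⊆ C := by
      rintro ⟨(k | s), hv⟩
      · exact Set.inter_subset_left
      · exact Set.singleton_subset_iff.2 hv
    have hgpre : ∀ v : ↥S, IsPreconnected (g v) := by
      rintro ⟨(k | s), hv⟩
      · exact (h1 k hv).isPreconnected
      · exact isPreconnected_singleton
    have hcup : C = ⋃ v : ↥S, g v := by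
      apply Set.Subset.antisymm
      · intro x hx
        obtain ⟨i, hi⟩ := hcov x
        exact Set.mem_iUnion.2 ⟨⟨inl i, ⟨x, hx, hi⟩⟩, hx, hi⟩
      · exact Set.iUnion_subset hgsub
    have hK : ∀ v w : ↥S, Relation.ReflTransGen (fun a b : ↥S => (g a ∩ g b).Nonempty) v w := by
      intro v w
      refine reachable_reflTransGen ?_ (h2p v w)
      rintro ⟨va, hva⟩ ⟨vb, hvb⟩ hadj
      have hadj' : (gluingGraph F).Adj va vb := hadj
      rcases va with k | s
      · obtain ⟨s, rfl, hsF⟩ := adj_inl hadj'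
        have hsC : (s : X) ∈ C := hvb
        exact ⟨(s : X), ⟨hsC, hsF⟩, rfl⟩
      · obtain ⟨k, rfl, hsF⟩ := adj_inr hadj'
        have hsC : (s : X) ∈ C := hva
        exact ⟨(s : X), rfl, hsC, hsF⟩
    constructor
    · obtain ⟨v⟩ := h2n
      rcases v with ⟨(k | s), hv⟩
      · obtain ⟨x, hx, -⟩ := (hSinl k).1 hv
        exact ⟨x, hx⟩
      · exact ⟨(s : X), (hSinr s).1 hv⟩
    · rw [hcup]
      exact IsPreconnected.iUnion_of_reflTransGen hgpre hK
end

section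
/- A finitely generated T_{1/2} space is connected if and only if its specialization graph is connected (as an undirected graph), and it is maximal connected if and only if its specialization graph is a tree. Consequently, finitely generated maximal connected spaces correspond exactly to tree graphs with a fixed bipartition into isolated and closed points. -/
/-- The (undirected) specialization graph of a space: an edge between distinct points
`x` and `y` whenever one lies in the closure of the other, i.e. whenever they are
strictly comparable in the specialization order. -/
def specializationGraph (Y : Type*) [TopologicalSpace Y] : SimpleGraph Y :=
  SimpleGraph.fromRel (fun x y => x ∈ closure ({y} : Set Y))

/-!
In an Alexandrov space the open sets are exactly the sets closed under generalization, so the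
clopen sets are the unions of connected components of the specialization graph; this gives the
first equivalence.

For maximality, refine the topology `t` to `t ⊓ generateFrom {U}` by making one more set open.
If `b ⤳ a` is an edge lying on a cycle, take `U = nhdsKer {a} \ {b}`: since a `T_{1/2}` space
has only two levels, this destroys the specialization `b ⤳ a` and no other, so the refined
topology is strictly finer and still connected. Conversely, a strictly finer topology `s` has an
open set `U` that is not closed under `t`-generalization, i.e. `a ∈ U`, `b ∉ U`, `b ⤳ a`. If the
edge `ab` is a bridge, the side of `a` in the graph without `ab` is clopen in
`t ⊓ generateFrom {U}`, which is coarser than `s`, so `s` is disconnected.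
-/

open Set TopologicalSpace Topology SimpleGraph

section

variable {X : Type*}

theorem SimpleGraph.Reachable.mem_of_forall_adj_mem {V : Type*} {G : SimpleGraph V} {C : Set V}
    (hC : ∀ u v, G.Adj u v → u ∈ C → v ∈ C) {x y : V} (h : G.Reachable x y) (hx : x ∈ C) :
    y ∈ C := by
  obtain ⟨p⟩ := h
  induction p with
  | nil => exact hx
  | cons huv _ ih => exact ih (hC _ _ huv hx)

theorem SimpleGraph.Connected.deleteEdges_of_not_isBridge {V : Type*} {G : SimpleGraph V}
    (hG : G.Connected) {a b : V} (h : ¬ G.IsBridge s(a, b)) :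
    (G.deleteEdges {s(a, b)}).Connected := by
  rw [isBridge_iff, not_not] at h
  refine (connected_iff_exists_forall_reachable _).2 ⟨a, fun y => ?_⟩
  refine (hG.preconnected a y).mem_of_forall_adj_mem
    (C := {v | (G.deleteEdges {s(a, b)}).Reachable a v}) (fun u v huv hu => ?_) (Reachable.refl a)
  by_cases he : s(u, v) = s(a, b)
  · rcases Sym2.eq_iff.1 he with ⟨rfl, rfl⟩ | ⟨rfl, rfl⟩
    · exact h
    · exact Reachable.refl _
  · exact Reachable.trans hu (deleteEdges_adj.2 ⟨huv, he⟩).reachable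

theorem specializes_inf_generateFrom {t : TopologicalSpace X} {S : Set (Set X)}
    {x y : X} (hxy : @Specializes X t x y) (hS : ∀ V ∈ S, y ∈ V → x ∈ V) :
    @Specializes X (t ⊓ generateFrom S) x y := by
  rw [@specializes_iff_nhds, nhds_inf, nhds_inf, nhds_generateFrom, nhds_generateFrom]
  exact inf_le_inf hxy (le_iInf₂ fun V hV => iInf₂_le V ⟨hS V hV.2 hV.1, hV.2⟩)

theorem inf_generateFrom_singleton_lt {t : TopologicalSpace X} {U : Set X}
    (hU : ¬ IsOpen[t] U) : t ⊓ generateFrom {U} < t :=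
  lt_of_le_of_ne inf_le_left fun h => hU <|
    h ▸ (inf_le_right : t ⊓ generateFrom {U} ≤ _) U (isOpen_generateFrom_of_mem rfl)

section

variable [t : TopologicalSpace X] {x y z : X}

theorem THalf.isOpen_singleton_of_specializes (h : THalf X) (hxy : x ⤳ y) (hne : x ≠ y) :
    IsOpen ({x} : Set X) :=
  (h x).resolve_right fun hx => hne (hxy.mem_closed hx rfl).symm

theorem THalf.t0Space (h : THalf X) : T0Space X := by
  refine t0Space_iff_inseparable X |>.2 fun x y hxy => by_contra fun hne => hne ?_
  exact (hxy.specializes'.mem_open (h.isOpen_singleton_of_specializes hxy.specializes hne) rfl).symm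

theorem THalf.eq_of_specializes_of_specializes (h : THalf X) (hzx : z ⤳ x) (hxy : x ⤳ y)
    (hne : z ≠ x) : x = y :=
  by_contra fun hxy' => hne (hzx.mem_open (h.isOpen_singleton_of_specializes hxy hxy') rfl)

theorem specializationGraph_adj : (specializationGraph X).Adj x y ↔ x ≠ y ∧ (y ⤳ x ∨ x ⤳ y) := by
  simp [specializationGraph, specializes_iff_mem_closure]

theorem reachable_deleteEdges_of_specializes {S : Set (Sym2 X)} (hxy : x ⤳ y) (hS : s(x, y) ∉ S) :
    ((specializationGraph X).deleteEdges S).Reachable x y := by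
  rcases eq_or_ne x y with rfl | hne
  · rfl
  · exact (deleteEdges_adj.2 ⟨specializationGraph_adj.2 ⟨hne, Or.inr hxy⟩, hS⟩).reachable

theorem connectedSpace_of_connected_of_adj_specializes {G : SimpleGraph X} (hG : G.Connected)
    (hadj : ∀ x y, G.Adj x y → x ⤳ y ∨ y ⤳ x) : ConnectedSpace X := by
  refine connectedSpace_iff_clopen.2 ⟨hG.nonempty, fun C hC => or_iff_not_imp_left.2 fun hne => ?_⟩
  obtain ⟨x, hx⟩ := nonempty_iff_ne_empty.2 hne
  refine eq_univ_of_forall fun y => (hG.preconnected x y).mem_of_forall_adj_mem ?_ hx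
  intro u v huv hu
  rcases hadj u v huv with h | h
  · exact h.mem_closed hC.1 hu
  · exact h.mem_open hC.2 hu

theorem connectedSpace_inf_generateFrom_nhdsKer_diff (hX : THalf X)
    (hG : (specializationGraph X).Connected) {a b : X}
    (hnb : ¬ (specializationGraph X).IsBridge s(b, a)) :
    @ConnectedSpace X (t ⊓ generateFrom {nhdsKer {a} \ {b}}) := by
  have key : ∀ x z, z ⤳ x → z ≠ x → s(z, x) ≠ s(b, a) →
      @Specializes X (t ⊓ generateFrom {nhdsKer {a} \ {b}}) z x := by
    intro x z hzx hne he
    -- `x` has the strict generalization `z`, so it lies on the lower level; inside `nhdsKer {a}`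
    -- that forces `x = a`.
    refine specializes_inf_generateFrom hzx fun V hV hxV => ?_
    rw [mem_singleton_iff.1 hV] at hxV ⊢
    obtain rfl := hX.eq_of_specializes_of_specializes hzx (mem_nhdsKer_singleton.1 hxV.1) hne
    exact ⟨mem_nhdsKer_singleton.2 hzx, fun hzb => he (hzb ▸ rfl)⟩
  refine @connectedSpace_of_connected_of_adj_specializes X
    (t ⊓ generateFrom {nhdsKer {a} \ {b}}) _ (hG.deleteEdges_of_not_isBridge hnb) fun x z hadj => ?_
  obtain ⟨hadj, he⟩ := deleteEdges_adj.1 hadj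
  obtain ⟨hne, hzx | hxz⟩ := specializationGraph_adj.1 hadj
  · exact Or.inr (key x z hzx hne.symm (by rwa [Sym2.eq_swap]))
  · exact Or.inl (key z x hxz hne he)

variable [AlexandrovDiscrete X]

theorem isClopen_of_forall_specializes {C : Set X} (hC : ∀ x y, x ⤳ y → (x ∈ C ↔ y ∈ C)) :
    IsClopen C :=
  ⟨isOpen_compl_iff.1 <| isOpen_iff_forall_specializes.2 fun x y hxy hy hx =>
    hy ((hC x y hxy).1 hx), isOpen_iff_forall_specializes.2 fun x y hxy hy => (hC x y hxy).2 hy⟩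

theorem connectedSpace_iff_connected_specializationGraph :
    ConnectedSpace X ↔ (specializationGraph X).Connected := by
  refine ⟨fun hX => ?_, fun hG => connectedSpace_of_connected_of_adj_specializes hG
    fun _ _ hxy => (specializationGraph_adj.1 hxy).2.symm⟩
  obtain ⟨x₀⟩ := hX.toNonempty
  have hC : IsClopen {y | (specializationGraph X).Reachable x₀ y} :=
    isClopen_of_forall_specializes fun _ _ hxy =>
      have hr := (reachable_deleteEdges_of_specializes hxy (notMem_empty _)).mono (deleteEdges_le _)
      ⟨fun h => h.trans hr, fun h => h.trans hr.symm⟩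
  have hC_univ := hC.eq_univ ⟨x₀, Reachable.refl x₀⟩
  exact (connected_iff_exists_forall_reachable _).2 ⟨x₀, eq_univ_iff_forall.1 hC_univ⟩

theorem MaximalConnected.isBridge (hX : THalf X) (hmax : MaximalConnected t) {a b : X}
    (hba : b ⤳ a) (hne : b ≠ a) : (specializationGraph X).IsBridge s(b, a) := by
  have hU : ¬ IsOpen (nhdsKer {a} \ {b}) := fun hU =>
    (hU.nhdsKer_subset.2 (singleton_subset_iff.2 ⟨subset_nhdsKer rfl, hne.symm⟩)
      (mem_nhdsKer_singleton.2 hba)).2 rfl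
  have hG := connectedSpace_iff_connected_specializationGraph.1 hmax.1
  exact not_not.1 fun hnb => hmax.2 _ (inf_generateFrom_singleton_lt hU)
    (connectedSpace_inf_generateFrom_nhdsKer_diff hX hG hnb)

theorem isOpen_inf_generateFrom_of_forall_reachable_mem [T0Space X] {U : Set X} {a b : X}
    (hba : b ⤳ a) (ha : a ∈ U) (hb : b ∉ U) {C : Set X}
    (hC : ∀ x ∈ C, ∀ z, ((specializationGraph X).deleteEdges {s(b, a)}).Reachable x z → z ∈ C) :
    IsOpen[t ⊓ generateFrom {U}] C := by
  have hU : IsOpen[t ⊓ generateFrom {U}] U :=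
    (inf_le_right : t ⊓ generateFrom {U} ≤ _) U (isOpen_generateFrom_of_mem rfl)
  have hK (x : X) : IsOpen[t ⊓ generateFrom {U}] (nhdsKer {x}) :=
    (inf_le_left : t ⊓ generateFrom {U} ≤ _) _ isOpen_nhdsKer
  refine (@isOpen_iff_forall_mem_open X (t ⊓ generateFrom {U}) C).2 fun x hx => ?_
  have key : ∀ z, z ⤳ x → s(z, x) ≠ s(b, a) → z ∈ C := fun z hzx he =>
    hC x hx z (reachable_deleteEdges_of_specializes hzx he).symm
  by_cases hxa : x = a
  · subst hxa
    refine ⟨nhdsKer {x} ∩ U, fun z hz => key z (mem_nhdsKer_singleton.1 hz.1) ?_,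
      @IsOpen.inter X (t ⊓ generateFrom {U}) _ _ (hK x) hU, subset_nhdsKer rfl, ha⟩
    exact fun he => hb (Sym2.congr_left.1 he ▸ hz.2)
  · refine ⟨nhdsKer {x}, fun z hz => key z (mem_nhdsKer_singleton.1 hz) ?_, hK x,
      subset_nhdsKer rfl⟩
    rintro he
    -- the edge could only be `a ⤳ b`, impossible next to `b ⤳ a` in a T₀ space
    rcases Sym2.eq_iff.1 he with ⟨-, rfl⟩ | ⟨rfl, rfl⟩
    · exact hxa rfl
    · exact hb ((hba.antisymm (mem_nhdsKer_singleton.1 hz)).eq ▸ ha)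

theorem exists_specializes_of_not_isOpen {U : Set X} (hU : ¬ IsOpen U) :
    ∃ b a, b ⤳ a ∧ a ∈ U ∧ b ∉ U := by
  simpa [isOpen_iff_forall_specializes] using hU

theorem not_connectedSpace_inf_generateFrom (hX : THalf X) (hG : (specializationGraph X).IsAcyclic)
    {U : Set X} (hU : ¬ IsOpen U) : ¬ @ConnectedSpace X (t ⊓ generateFrom {U}) := by
  intro hconn
  have := hX.t0Space
  obtain ⟨b, a, hba, ha, hb⟩ := exists_specializes_of_not_isOpen hU
  have hne : b ≠ a := fun h => hb (h ▸ ha)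
  have hbr := isAcyclic_iff_forall_adj_isBridge.1 hG (specializationGraph_adj.2 ⟨hne, Or.inr hba⟩)
  set A := {x | ((specializationGraph X).deleteEdges {s(b, a)}).Reachable b x}
  have hA_open : IsOpen[t ⊓ generateFrom {U}] A :=
    isOpen_inf_generateFrom_of_forall_reachable_mem hba ha hb fun _ hx _ hxz => hx.trans hxz
  have hA_closed : IsOpen[t ⊓ generateFrom {U}] Aᶜ :=
    isOpen_inf_generateFrom_of_forall_reachable_mem hba ha hb fun _ hx _ hxz hz =>
      hx (hz.trans hxz.symm)
  have hA_univ := @IsClopen.eq_univ X (t ⊓ generateFrom {U}) _ A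
    ⟨@isOpen_compl_iff X A (t ⊓ generateFrom {U}) |>.1 hA_closed, hA_open⟩ ⟨b, Reachable.refl b⟩
  exact isBridge_iff.1 hbr (eq_univ_iff_forall.1 hA_univ a)

theorem maximalConnected_iff_isTree (hX : THalf X) :
    MaximalConnected t ↔ (specializationGraph X).IsTree := by
  refine ⟨fun hmax => ⟨connectedSpace_iff_connected_specializationGraph.1 hmax.1,
    isAcyclic_iff_forall_adj_isBridge.2 fun x y hxy => ?_⟩, fun hT =>
    ⟨connectedSpace_iff_connected_specializationGraph.2 hT.connected, fun s hs hs_conn => ?_⟩⟩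
  · obtain ⟨hne, hyx | hxy⟩ := specializationGraph_adj.1 hxy
    · exact Sym2.eq_swap ▸ hmax.isBridge hX hyx hne.symm
    · exact hmax.isBridge hX hxy hne
  · obtain ⟨U, hUs, hUt⟩ : ∃ U, IsOpen[s] U ∧ ¬ IsOpen[t] U := by
      by_contra! h
      exact hs.not_ge h
    refine not_connectedSpace_inf_generateFrom (t := t) hX hT.isAcyclic hUt ?_
    have hle : s ≤ t ⊓ generateFrom {U} :=
      le_inf hs.le (le_generateFrom (singleton_subset_iff.2 hUs))
    exact @Function.Surjective.connectedSpace X X s hs_conn (t ⊓ generateFrom {U}) id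
      Function.surjective_id (continuous_id_of_le hle)

end

end

/-- a finitely generated (Alexandrov) `T_{1/2}` space is connected iff its
specialization graph is connected, and maximal connected iff its specialization graph is
a tree.  (Hence finitely generated maximal connected spaces correspond exactly to tree
graphs with a fixed bipartition into isolated and closed points.) -/
theorem stmt_19 {X : Type*} [t : TopologicalSpace X] [AlexandrovDiscrete X]
    (h : THalf X) :
    (ConnectedSpace X ↔ (specializationGraph X).Connected) ∧
    (MaximalConnected t ↔ (specializationGraph X).IsTree) :=
  ⟨connectedSpace_iff_connected_specializationGraph, maximalConnected_iff_isTree h⟩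
end
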